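/- arXiv:1410.8223 — 9 statements merged into one kernel-verified Lean document; each statement's English description precedes it below -/
import Mathlib

section
/- For every integer n ≥ 1, the sequences satisfy the strict inequalities x_n > y_n > z_n > w_n > 0. -/
open Filter Topology Real

theorem hanoi_sequences_pos_strict
    (x y z w : ℕ → ℝ)
    (hx0 : x 0 = 1) (hy0 : y 0 = 0) (hz0 : z 0 = 1) (hw0 : w 0 = 0)
    (hx : ∀ n : ℕ, x (n + 1) = 8 * (x n)^3 + 24 * (x n)^2 * y n + 6 * (x n)^2 * z n + 30 * x n * (y n)^2 + 18 * x n * y n * z n + 3 * x n * (z n)^2 + 14 * (y n)^3 + 15 * (y n)^2 * z n + 6 * y n * (z n)^2 + (z n)^3)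
    (hy : ∀ n : ℕ, y (n + 1) = 8 * (x n)^2 * y n + 8 * (x n)^2 * z n + 2 * (x n)^2 * w n + 16 * x n * (y n)^2 + 24 * x n * y n * z n + 6 * x n * y n * w n + 6 * x n * (z n)^2 + 2 * x n * z n * w n + 10 * (y n)^3 + 20 * (y n)^2 * z n + 5 * (y n)^2 * w n + 11 * y n * (z n)^2 + 4 * y n * z n * w n + 2 * (z n)^3 + (z n)^2 * w n)
    (hz : ∀ n : ℕ, z (n + 1) = 8 * x n * (y n)^2 + 16 * x n * y n * z n + 4 * x n * y n * w n + 10 * x n * (z n)^2 + 6 * x n * z n * w n + x n * (w n)^2 + 8 * (y n)^3 + 22 * (y n)^2 * z n + 6 * (y n)^2 * w n + 20 * y n * (z n)^2 + 12 * y n * z n * w n + 2 * y n * (w n)^2 + 5 * (z n)^3 + 4 * (z n)^2 * w n + z n * (w n)^2)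
    (hw : ∀ n : ℕ, w (n + 1) = 8 * (y n)^3 + 24 * (y n)^2 * z n + 6 * (y n)^2 * w n + 30 * y n * (z n)^2 + 18 * y n * z n * w n + 3 * y n * (w n)^2 + 14 * (z n)^3 + 15 * (z n)^2 * w n + 6 * z n * (w n)^2 + (w n)^3) :
    ∀ n : ℕ, 1 ≤ n → x n > y n ∧ y n > z n ∧ z n > w n ∧ w n > 0 := by
  intro n hn
  induction n with
  | zero => omega
  | succ k ih =>
    rcases Nat.eq_zero_or_pos k with hk | hk
    · subst hk
      rw [hx 0, hy 0, hz 0, hw 0, hx0, hy0, hz0, hw0]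
      norm_num
    · obtain ⟨h1, h2, h3, h4⟩ := ih hk
      obtain ⟨a, b, c, d, ha, hb, hc, hd, ex, ey, ez, ew⟩ :
          ∃ a b c d : ℝ, 0 < a ∧ 0 < b ∧ 0 < c ∧ 0 < d ∧
            x k = a + b + c + d ∧ y k = b + c + d ∧ z k = c + d ∧ w k = d :=
        ⟨x k - y k, y k - z k, z k - w k, w k, by linarith, by linarith, by linarith, h4,
          by ring, by ring, by ring, by ring⟩
      refine ⟨?_, ?_, ?_, ?_⟩
      · rw [gt_iff_lt, ← sub_pos, hx k, hy k, ex, ey, ez, ew]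
        have key : (8 * (a + b + c + d)^3 + 24 * (a + b + c + d)^2 * (b + c + d) + 6 * (a + b + c + d)^2 * (c + d) + 30 * (a + b + c + d) * (b + c + d)^2 + 18 * (a + b + c + d) * (b + c + d) * (c + d) + 3 * (a + b + c + d) * (c + d)^2 + 14 * (b + c + d)^3 + 15 * (b + c + d)^2 * (c + d) + 6 * (b + c + d) * (c + d)^2 + (c + d)^3) - (8 * (a + b + c + d)^2 * (b + c + d) + 8 * (a + b + c + d)^2 * (c + d) + 2 * (a + b + c + d)^2 * d + 16 * (a + b + c + d) * (b + c + d)^2 + 24 * (a + b + c + d) * (b + c + d) * (c + d) + 6 * (a + b + c + d) * (b + c + d) * d + 6 * (a + b + c + d) * (c + d)^2 + 2 * (a + b + c + d) * (c + d) * d + 10 * (b + c + d)^3 + 20 * (b + c + d)^2 * (c + d) + 5 * (b + c + d)^2 * d + 11 * (b + c + d) * (c + d)^2 + 4 * (b + c + d) * (c + d) * d + 2 * (c + d)^3 + (c + d)^2 * d) = 20*c*d^2 + 40*c^2*d + 20*c^3 + 60*b*d^2 + 152*b*c*d + 92*b*c^2 + 100*b^2*d + 113*b^2*c + 42*b^3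 + 45*a*d^2 + 102*a*c*d + 57*a*c^2 + 120*a*b*d + 130*a*b*c + 70*a*b^2 + 36*a^2*d + 38*a^2*c + 40*a^2*b + 8*a^3 := by ring
        rw [key]
        positivity
      · rw [gt_iff_lt, ← sub_pos, hy k, hz k, ex, ey, ez, ew]
        have key : (8 * (a + b + c + d)^2 * (b + c + d) + 8 * (a + b + c + d)^2 * (c + d) + 2 * (a + b + c + d)^2 * d + 16 * (a + b + c + d) * (b + c + d)^2 + 24 * (a + b + c + d) * (b + c + d) * (c + d) + 6 * (a + b + c + d) * (b + c + d) * d + 6 * (a + b + c + d) * (c + d)^2 + 2 * (a + b + c + d) * (c + d) * d + 10 * (b + c + d)^3 + 20 * (b + c + d)^2 * (c + d) + 5 * (b + c + d)^2 * d + 11 * (b + c + d) * (c + d)^2 + 4 * (b + c + d) * (c + d) * d + 2 * (c + d)^3 + (c + d)^2 * d) - (8 * (a + b + c + d) * (b + c + d)^2 + 16 * (a + b + c + d) * (b + c + d) * (c + d) + 4 * (a + b + c + d) * (b + c + d) * d + 10 * (a + b + c + d) * (c + d)^2 + 6 * (a + b + c + d) * (c + d) * d + (a + b + c + d) * d^2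 + 8 * (b + c + d)^3 + 22 * (b + c + d)^2 * (c + d) + 6 * (b + c + d)^2 * d + 20 * (b + c + d) * (c + d)^2 + 12 * (b + c + d) * (c + d) * d + 2 * (b + c + d) * d^2 + 5 * (c + d)^3 + 4 * (c + d)^2 * d + (c + d) * d^2) = 20*c*d^2 + 36*c^2*d + 16*c^3 + 60*b*d^2 + 132*b*c*d + 69*b*c^2 + 71*b^2*d + 68*b^2*c + 18*b^3 + 45*a*d^2 + 90*a*c*d + 44*a*c^2 + 78*a*b*d + 72*a*b*c + 24*a*b^2 + 18*a^2*d + 16*a^2*c + 8*a^2*b := by ring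
        rw [key]
        positivity
      · rw [gt_iff_lt, ← sub_pos, hz k, hw k, ex, ey, ez, ew]
        have key : (8 * (a + b + c + d) * (b + c + d)^2 + 16 * (a + b + c + d) * (b + c + d) * (c + d) + 4 * (a + b + c + d) * (b + c + d) * d + 10 * (a + b + c + d) * (c + d)^2 + 6 * (a + b + c + d) * (c + d) * d + (a + b + c + d) * d^2 + 8 * (b + c + d)^3 + 22 * (b + c + d)^2 * (c + d) + 6 * (b + c + d)^2 * d + 20 * (b + c + d) * (c + d)^2 + 12 * (b + c + d) * (c + d) * d + 2 * (b + c + d) * d^2 + 5 * (c + d)^3 + 4 * (c + d)^2 * d + (c + d) * d^2) - (8 * (b + c + d)^3 + 24 * (b + c + d)^2 * (c + d) + 6 * (b + c + d)^2 * d + 30 * (b + c + d) * (c + d)^2 + 18 * (b + c + d) * (c + d) * d + 3 * (b + c + d) * d^2 + 14 * (c + d)^3 + 15 * (c + d)^2 * d + 6 * (c + d) * d^2 + d^3) = 20*c*d^2 + 32*c^2*d + 13*c^3 + 60*b*d^2 + 112*b*c*d + 52*b*c^2 + 42*b^2*d + 38*b^2*c + 8*b^3 + 45*a*d^2 + 78*a*c*d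 + 34*a*c^2 + 36*a*b*d + 32*a*b*c + 8*a*b^2 := by ring
        rw [key]
        positivity
      · rw [gt_iff_lt, hw k, ey, ez, ew]
        have key : 8 * (b + c + d)^3 + 24 * (b + c + d)^2 * (c + d) + 6 * (b + c + d)^2 * d + 30 * (b + c + d) * (c + d)^2 + 18 * (b + c + d) * (c + d) * d + 3 * (b + c + d) * d^2 + 14 * (c + d)^3 + 15 * (c + d)^2 * d + 6 * (c + d) * d^2 + d^3 = 125*d^3 + 315*c*d^2 + 267*c^2*d + 76*c^3 + 135*b*d^2 + 234*b*c*d + 102*b*c^2 + 54*b^2*d + 48*b^2*c + 8*b^3 := by ring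
        rw [key]
        positivity
end

section
/- For every integer n ≥ 2, the ratios satisfy 1/2 < y_n/x_n < z_n/y_n < w_n/z_n < 1; that is, 1/2 < α_n < β_n < γ_n < 1. -/
open Filter Topology Real

set_option maxHeartbeats 2000000

private lemma hanoi_step (x y z w : ℝ) (hx : 0 < x) (hy : 0 < y) (hz : 0 < z) (hw : 0 < w)
    (i1 : 91 * x ≤ 100 * y) (i2 : y^2 < x * z) (i3 : z^2 < y * w) (i4 : 100 * w ≤ 93 * z) :
    0 < 8 * x^3 + 24 * x^2 * y + 6 * x^2 * z + 30 * x * y^2 + 18 * x * y * z + 3 * x * z^2 + 14 * y^3 + 15 * y^2 * z + 6 * y * z^2 + z^3 ∧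
    0 < 8 * x^2 * y + 8 * x^2 * z + 2 * x^2 * w + 16 * x * y^2 + 24 * x * y * z + 6 * x * y * w + 6 * x * z^2 + 2 * x * z * w + 10 * y^3 + 20 * y^2 * z + 5 * y^2 * w + 11 * y * z^2 + 4 * y * z * w + 2 * z^3 + z^2 * w ∧
    0 < 8 * x * y^2 + 16 * x * y * z + 4 * x * y * w + 10 * x * z^2 + 6 * x * z * w + x * w^2 + 8 * y^3 + 22 * y^2 * z + 6 * y^2 * w + 20 * y * z^2 + 12 * y * z * w + 2 * y * w^2 + 5 * z^3 + 4 * z^2 * w + z * w^2 ∧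
    0 < 8 * y^3 + 24 * y^2 * z + 6 * y^2 * w + 30 * y * z^2 + 18 * y * z * w + 3 * y * w^2 + 14 * z^3 + 15 * z^2 * w + 6 * z * w^2 + w^3 ∧
    91 * (8 * x^3 + 24 * x^2 * y + 6 * x^2 * z + 30 * x * y^2 + 18 * x * y * z + 3 * x * z^2 + 14 * y^3 + 15 * y^2 * z + 6 * y * z^2 + z^3) ≤
      100 * (8 * x^2 * y + 8 * x^2 * z + 2 * x^2 * w + 16 * x * y^2 + 24 * x * y * z + 6 * x * y * w + 6 * x * z^2 + 2 * x * z * w + 10 * y^3 + 20 * y^2 * z + 5 * y^2 * w + 11 * y * z^2 + 4 * y * z * w + 2 * z^3 + z^2 * w) ∧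
    (8 * x^2 * y + 8 * x^2 * z + 2 * x^2 * w + 16 * x * y^2 + 24 * x * y * z + 6 * x * y * w + 6 * x * z^2 + 2 * x * z * w + 10 * y^3 + 20 * y^2 * z + 5 * y^2 * w + 11 * y * z^2 + 4 * y * z * w + 2 * z^3 + z^2 * w)^2 <
      (8 * x^3 + 24 * x^2 * y + 6 * x^2 * z + 30 * x * y^2 + 18 * x * y * z + 3 * x * z^2 + 14 * y^3 + 15 * y^2 * z + 6 * y * z^2 + z^3) *
      (8 * x * y^2 + 16 * x * y * z + 4 * x * y * w + 10 * x * z^2 + 6 * x * z * w + x * w^2 + 8 * y^3 + 22 * y^2 * z + 6 * y^2 * w + 20 * y * z^2 + 12 * y * z * w + 2 * y * w^2 + 5 * z^3 + 4 * z^2 * w + z * w^2) ∧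
    (8 * x * y^2 + 16 * x * y * z + 4 * x * y * w + 10 * x * z^2 + 6 * x * z * w + x * w^2 + 8 * y^3 + 22 * y^2 * z + 6 * y^2 * w + 20 * y * z^2 + 12 * y * z * w + 2 * y * w^2 + 5 * z^3 + 4 * z^2 * w + z * w^2)^2 <
      (8 * x^2 * y + 8 * x^2 * z + 2 * x^2 * w + 16 * x * y^2 + 24 * x * y * z + 6 * x * y * w + 6 * x * z^2 + 2 * x * z * w + 10 * y^3 + 20 * y^2 * z + 5 * y^2 * w + 11 * y * z^2 + 4 * y * z * w + 2 * z^3 + z^2 * w) *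
      (8 * y^3 + 24 * y^2 * z + 6 * y^2 * w + 30 * y * z^2 + 18 * y * z * w + 3 * y * w^2 + 14 * z^3 + 15 * z^2 * w + 6 * z * w^2 + w^3) ∧
    100 * (8 * y^3 + 24 * y^2 * z + 6 * y^2 * w + 30 * y * z^2 + 18 * y * z * w + 3 * y * w^2 + 14 * z^3 + 15 * z^2 * w + 6 * z * w^2 + w^3) ≤
      93 * (8 * x * y^2 + 16 * x * y * z + 4 * x * y * w + 10 * x * z^2 + 6 * x * z * w + x * w^2 + 8 * y^3 + 22 * y^2 * z + 6 * y^2 * w + 20 * y * z^2 + 12 * y * z * w + 2 * y * w^2 + 5 * z^3 + 4 * z^2 * w + z * w^2) := by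
  have l4 : 100 * z ≤ 93 * y := by
    nlinarith [i3, mul_nonneg hy.le (by linarith : (0:ℝ) ≤ 93 * z - 100 * w)]
  have l2 : 100 * y ≤ 93 * x := by
    nlinarith [i2, mul_nonneg hx.le (by linarith : (0:ℝ) ≤ 93 * y - 100 * z)]
  have l3 : 91 * y ≤ 100 * z := by
    nlinarith [i2, mul_nonneg hy.le (by linarith : (0:ℝ) ≤ 100 * y - 91 * x)]
  have l5 : 91 * z ≤ 100 * w := by
    nlinarith [i3, mul_nonneg hz.le (by linarith : (0:ℝ) ≤ 100 * z - 91 * y)]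
  have hD1 : 0 < x * z - y^2 := by linarith
  have hD2 : 0 < y * w - z^2 := by linarith
  have hD3 : 0 < x * w - y * z := by nlinarith [mul_pos hz hD1, mul_pos hx hD2]
  have hC1 : 0 < w^2 + 8*z*w - 36*z^2 + 58*y*w + 28*y*z + 12*y^2 + 28*x*w + 52*x*z + 32*x*y + 16*x^2 := by
    nlinarith [mul_nonneg hz.le (by linarith : (0:ℝ) ≤ 93*y - 100*z),
      mul_nonneg hy.le (by linarith : (0:ℝ) ≤ 100*w - 91*z),
      mul_pos hx hx, mul_pos hw hw, mul_pos hz hw, mul_pos hy hy, mul_pos hx hw,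
      mul_pos hx hz, mul_pos hx hy]
  have hC2 : 0 < 2*z*w - z^2 + 15*y*w + 30*y*z + 74*y^2 + 14*x*w + 72*x*y + 48*x^2 := by
    nlinarith [mul_nonneg hz.le (by linarith : (0:ℝ) ≤ 93*y - 100*z),
      mul_pos hx hx, mul_pos hz hw, mul_pos hy hw, mul_pos hy hy, mul_pos hx hw,
      mul_pos hx hy]
  have hC3 : 0 < 6*x*w + 16*x^2 := by nlinarith [mul_pos hx hw, mul_pos hx hx]
  have hC4 : 0 < z^2 + 6*y*z + 17*y^2 + 28*x*y + 28*x^2 := by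
    nlinarith [mul_pos hz hz, mul_pos hy hz, mul_pos hy hy, mul_pos hx hy, mul_pos hx hx]
  have hC5 : 0 < 16*x^2 := by positivity
  have hC6 : 0 < 4*x^2 := by positivity
  have hK1 : 0 < 28*w^2 + 56*z*w + 8*z^2 + 60*y*w + 48*y*z + 16*y^2 := by
    nlinarith [mul_pos hw hw, mul_pos hz hw, mul_pos hz hz, mul_pos hy hw,
      mul_pos hy hz, mul_pos hy hy]
  have hK2 : 0 < 12*w^2 + 36*z*w + 16*z^2 + 58*y*w + 60*y*z + 56*y^2 + 28*x*w + 16*x*y := by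
    nlinarith [mul_pos hw hw, mul_pos hz hw, mul_pos hz hz, mul_pos hy hw,
      mul_pos hy hz, mul_pos hy hy, mul_pos hx hw, mul_pos hx hy]
  have hK3 : 0 < 8*w^2 := by positivity
  have hK4 : 0 < w^2 + 4*z*w + 3*z^2 + 13*y*w + 14*y*z + 22*y^2 + 14*x*w + 16*x*y + 4*x^2 := by
    nlinarith [mul_pos hw hw, mul_pos hz hw, mul_pos hz hz, mul_pos hy hw,
      mul_pos hy hz, mul_pos hy hy, mul_pos hx hw, mul_pos hx hy, mul_pos hx hx]
  have hK5 : 0 < 2*w^2 + 6*x*w := by nlinarith [mul_pos hw hw, mul_pos hx hw]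
  have hK6 : 0 < w^2 := by positivity
  have s1 : (0:ℝ) ≤ 100*y - 91*x := by linarith
  have s2 : (0:ℝ) ≤ 93*x - 100*y := by linarith
  have s3 : (0:ℝ) ≤ 100*z - 91*y := by linarith
  have s4 : (0:ℝ) ≤ 93*y - 100*z := by linarith
  have s5 : (0:ℝ) ≤ 100*w - 91*z := by linarith
  have s6 : (0:ℝ) ≤ 93*z - 100*w := by linarith
  refine ⟨by linarith [mul_pos (mul_pos hx hx) hx, mul_pos (mul_pos hx hx) hy,
      mul_pos (mul_pos hx hx) hz, mul_pos (mul_pos hx hy) hy, mul_pos (mul_pos hx hy) hz,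
      mul_pos (mul_pos hx hz) hz, mul_pos (mul_pos hy hy) hy, mul_pos (mul_pos hy hy) hz,
      mul_pos (mul_pos hy hz) hz, mul_pos (mul_pos hz hz) hz],
    by linarith [mul_pos (mul_pos hx hx) hy, mul_pos (mul_pos hx hx) hz,
      mul_pos (mul_pos hx hx) hw, mul_pos (mul_pos hx hy) hy, mul_pos (mul_pos hx hy) hz,
      mul_pos (mul_pos hx hy) hw, mul_pos (mul_pos hx hz) hz, mul_pos (mul_pos hx hz) hw,
      mul_pos (mul_pos hy hy) hy, mul_pos (mul_pos hy hy) hz, mul_pos (mul_pos hy hy) hw,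
      mul_pos (mul_pos hy hz) hz, mul_pos (mul_pos hy hz) hw, mul_pos (mul_pos hz hz) hz,
      mul_pos (mul_pos hz hz) hw],
    by linarith [mul_pos (mul_pos hx hy) hy, mul_pos (mul_pos hx hy) hz,
      mul_pos (mul_pos hx hy) hw, mul_pos (mul_pos hx hz) hz, mul_pos (mul_pos hx hz) hw,
      mul_pos (mul_pos hx hw) hw, mul_pos (mul_pos hy hy) hy, mul_pos (mul_pos hy hy) hz,
      mul_pos (mul_pos hy hy) hw, mul_pos (mul_pos hy hz) hz, mul_pos (mul_pos hy hz) hw,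
      mul_pos (mul_pos hy hw) hw, mul_pos (mul_pos hz hz) hz, mul_pos (mul_pos hz hz) hw,
      mul_pos (mul_pos hz hw) hw],
    by linarith [mul_pos (mul_pos hy hy) hy, mul_pos (mul_pos hy hy) hz,
      mul_pos (mul_pos hy hy) hw, mul_pos (mul_pos hy hz) hz, mul_pos (mul_pos hy hz) hw,
      mul_pos (mul_pos hy hw) hw, mul_pos (mul_pos hz hz) hz, mul_pos (mul_pos hz hz) hw,
      mul_pos (mul_pos hz hw) hw, mul_pos (mul_pos hw hw) hw],
    ?_, ?_, ?_, ?_⟩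
  · linarith [mul_nonneg s1 (mul_pos hx hx).le, mul_nonneg s1 (mul_pos hx hy).le,
      mul_nonneg s1 (mul_pos hx hz).le, mul_nonneg s1 (mul_pos hx hw).le,
      mul_nonneg s1 (mul_pos hy hy).le, mul_nonneg s1 (mul_pos hy hz).le,
      mul_nonneg s1 (mul_pos hy hw).le, mul_nonneg s1 (mul_pos hz hz).le,
      mul_nonneg s1 (mul_pos hz hw).le, mul_nonneg s1 (mul_pos hw hw).le,
      mul_nonneg s3 (mul_pos hx hx).le, mul_nonneg s3 (mul_pos hx hy).le,
      mul_nonneg s3 (mul_pos hx hz).le, mul_nonneg s3 (mul_pos hx hw).le,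
      mul_nonneg s3 (mul_pos hy hy).le, mul_nonneg s3 (mul_pos hy hz).le,
      mul_nonneg s3 (mul_pos hy hw).le, mul_nonneg s3 (mul_pos hz hz).le,
      mul_nonneg s3 (mul_pos hz hw).le, mul_nonneg s3 (mul_pos hw hw).le,
      mul_nonneg s5 (mul_pos hx hx).le, mul_nonneg s5 (mul_pos hx hy).le,
      mul_nonneg s5 (mul_pos hx hz).le, mul_nonneg s5 (mul_pos hx hw).le,
      mul_nonneg s5 (mul_pos hy hy).le, mul_nonneg s5 (mul_pos hy hz).le,
      mul_nonneg s5 (mul_pos hy hw).le, mul_nonneg s5 (mul_pos hz hz).le,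
      mul_nonneg s5 (mul_pos hz hw).le, mul_nonneg s5 (mul_pos hw hw).le]
  · linarith [mul_pos hC1 (mul_pos hD1 hD1), mul_pos hC2 (mul_pos hD1 hD2),
      mul_pos hC3 (mul_pos hD1 hD3), mul_pos hC4 (mul_pos hD2 hD2),
      mul_pos hC5 (mul_pos hD2 hD3), mul_pos hC6 (mul_pos hD3 hD3)]
  · linarith [mul_pos hK1 (mul_pos hD1 hD1), mul_pos hK2 (mul_pos hD1 hD2),
      mul_pos hK3 (mul_pos hD1 hD3), mul_pos hK4 (mul_pos hD2 hD2),
      mul_pos hK5 (mul_pos hD2 hD3), mul_pos hK6 (mul_pos hD3 hD3)]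
  · linarith [mul_nonneg s2 (mul_pos hx hx).le, mul_nonneg s2 (mul_pos hx hy).le,
      mul_nonneg s2 (mul_pos hx hz).le, mul_nonneg s2 (mul_pos hx hw).le,
      mul_nonneg s2 (mul_pos hy hy).le, mul_nonneg s2 (mul_pos hy hz).le,
      mul_nonneg s2 (mul_pos hy hw).le, mul_nonneg s2 (mul_pos hz hz).le,
      mul_nonneg s2 (mul_pos hz hw).le, mul_nonneg s2 (mul_pos hw hw).le,
      mul_nonneg s4 (mul_pos hx hx).le, mul_nonneg s4 (mul_pos hx hy).le,
      mul_nonneg s4 (mul_pos hx hz).le, mul_nonneg s4 (mul_pos hx hw).le,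
      mul_nonneg s4 (mul_pos hy hy).le, mul_nonneg s4 (mul_pos hy hz).le,
      mul_nonneg s4 (mul_pos hy hw).le, mul_nonneg s4 (mul_pos hz hz).le,
      mul_nonneg s4 (mul_pos hz hw).le, mul_nonneg s4 (mul_pos hw hw).le,
      mul_nonneg s6 (mul_pos hx hx).le, mul_nonneg s6 (mul_pos hx hy).le,
      mul_nonneg s6 (mul_pos hx hz).le, mul_nonneg s6 (mul_pos hx hw).le,
      mul_nonneg s6 (mul_pos hy hy).le, mul_nonneg s6 (mul_pos hy hz).le,
      mul_nonneg s6 (mul_pos hy hw).le, mul_nonneg s6 (mul_pos hz hz).le,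
      mul_nonneg s6 (mul_pos hz hw).le, mul_nonneg s6 (mul_pos hw hw).le]

theorem hanoi_ratio_bounds
    (x y z w : ℕ → ℝ)
    (hx0 : x 0 = 1) (hy0 : y 0 = 0) (hz0 : z 0 = 1) (hw0 : w 0 = 0)
    (hx : ∀ n : ℕ, x (n + 1) = 8 * (x n)^3 + 24 * (x n)^2 * y n + 6 * (x n)^2 * z n + 30 * x n * (y n)^2 + 18 * x n * y n * z n + 3 * x n * (z n)^2 + 14 * (y n)^3 + 15 * (y n)^2 * z n + 6 * y n * (z n)^2 + (z n)^3)
    (hy : ∀ n : ℕ, y (n + 1) = 8 * (x n)^2 * y n + 8 * (x n)^2 * z n + 2 * (x n)^2 * w n + 16 * x n * (y n)^2 + 24 * x n * y n * z n + 6 * x n * y n * w n + 6 * x n * (z n)^2 + 2 * x n * z n * w n + 10 * (y n)^3 + 20 * (y n)^2 * z n + 5 * (y n)^2 * w n + 11 * y n * (z n)^2 + 4 * y n * z n * w n + 2 * (z n)^3 + (z n)^2 * w n)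
    (hz : ∀ n : ℕ, z (n + 1) = 8 * x n * (y n)^2 + 16 * x n * y n * z n + 4 * x n * y n * w n + 10 * x n * (z n)^2 + 6 * x n * z n * w n + x n * (w n)^2 + 8 * (y n)^3 + 22 * (y n)^2 * z n + 6 * (y n)^2 * w n + 20 * y n * (z n)^2 + 12 * y n * z n * w n + 2 * y n * (w n)^2 + 5 * (z n)^3 + 4 * (z n)^2 * w n + z n * (w n)^2)
    (hw : ∀ n : ℕ, w (n + 1) = 8 * (y n)^3 + 24 * (y n)^2 * z n + 6 * (y n)^2 * w n + 30 * y n * (z n)^2 + 18 * y n * z n * w n + 3 * y n * (w n)^2 + 14 * (z n)^3 + 15 * (z n)^2 * w n + 6 * z n * (w n)^2 + (w n)^3) :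
    ∀ n : ℕ, 2 ≤ n → 1 / 2 < y n / x n ∧ y n / x n < z n / y n ∧ z n / y n < w n / z n ∧ w n / z n < 1 := by
  have e1x : x 1 = 18 := by
    have h := hx 0;  norm_num [hx0, hy0, hz0, hw0] at h; exact h
  have e1y : y 1 = 16 := by
    have h := hy 0;  norm_num [hx0, hy0, hz0, hw0] at h; exact h
  have e1z : z 1 = 15 := by
    have h := hz 0;  norm_num [hx0, hy0, hz0, hw0] at h; exact h
  have e1w : w 1 = 14 := by
    have h := hw 0;  norm_num [hx0, hy0, hz0, hw0] at h; exact h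
  have e2x : x 2 = 568301 := by
    have h := hx 1; norm_num [e1x, e1y, e1z, e1w] at h; exact h
  have e2y : y 2 = 521504 := by
    have h := hy 1; norm_num [e1x, e1y, e1z, e1w] at h; exact h
  have e2z : z 2 = 478579 := by
    have h := hz 1; norm_num [e1x, e1y, e1z, e1w] at h; exact h
  have e2w : w 2 = 439204 := by
    have h := hw 1; norm_num [e1x, e1y, e1z, e1w] at h; exact h
  have inv : ∀ n : ℕ, 2 ≤ n → 0 < x n ∧ 0 < y n ∧ 0 < z n ∧ 0 < w n ∧
      91 * x n ≤ 100 * y n ∧ (y n)^2 < x n * z n ∧ (z n)^2 < y n * w n ∧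
      100 * w n ≤ 93 * z n := by
    intro n hn
    induction n, hn using Nat.le_induction with
    | base =>
      rw [e2x, e2y, e2z, e2w]
      norm_num
    | succ m hm ih =>
      obtain ⟨p1, p2, p3, p4, q1, q2, q3, q4⟩ := ih
      rw [hx m, hy m, hz m, hw m]
      exact hanoi_step (x m) (y m) (z m) (w m) p1 p2 p3 p4 q1 q2 q3 q4
  intro n hn
  obtain ⟨p1, p2, p3, p4, q1, q2, q3, q4⟩ := inv n hn
  refine ⟨?_, ?_, ?_, ?_⟩
  · rw [lt_div_iff₀ p1]; linarith
  · rw [div_lt_div_iff₀ p1 p2]; nlinarith [q2]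
  · rw [div_lt_div_iff₀ p2 p3]; nlinarith [q3]
  · rw [div_lt_one p3]; linarith
end

section
/- The sequence (α_n) = (y_n/x_n) is strictly increasing for n ≥ 2: for every integer n ≥ 2, y_n/x_n < y_{n+1}/x_{n+1}. -/
open Filter Topology Real

theorem hanoi_alpha_strict_mono
    (x y z w : ℕ → ℝ)
    (hx0 : x 0 = 1) (hy0 : y 0 = 0) (hz0 : z 0 = 1) (hw0 : w 0 = 0)
    (hx : ∀ n : ℕ, x (n + 1) = 8 * (x n)^3 + 24 * (x n)^2 * y n + 6 * (x n)^2 * z n + 30 * x n * (y n)^2 + 18 * x n * y n * z n + 3 * x n * (z n)^2 + 14 * (y n)^3 + 15 * (y n)^2 * z n + 6 * y n * (z n)^2 + (z n)^3)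
    (hy : ∀ n : ℕ, y (n + 1) = 8 * (x n)^2 * y n + 8 * (x n)^2 * z n + 2 * (x n)^2 * w n + 16 * x n * (y n)^2 + 24 * x n * y n * z n + 6 * x n * y n * w n + 6 * x n * (z n)^2 + 2 * x n * z n * w n + 10 * (y n)^3 + 20 * (y n)^2 * z n + 5 * (y n)^2 * w n + 11 * y n * (z n)^2 + 4 * y n * z n * w n + 2 * (z n)^3 + (z n)^2 * w n)
    (hz : ∀ n : ℕ, z (n + 1) = 8 * x n * (y n)^2 + 16 * x n * y n * z n + 4 * x n * y n * w n + 10 * x n * (z n)^2 + 6 * x n * z n * w n + x n * (w n)^2 + 8 * (y n)^3 + 22 * (y n)^2 * z n + 6 * (y n)^2 * w n + 20 * y n * (z n)^2 + 12 * y n * z n * w n + 2 * y n * (w n)^2 + 5 * (z n)^3 + 4 * (z n)^2 * w n + z n * (w n)^2)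
    (hw : ∀ n : ℕ, w (n + 1) = 8 * (y n)^3 + 24 * (y n)^2 * z n + 6 * (y n)^2 * w n + 30 * y n * (z n)^2 + 18 * y n * z n * w n + 3 * y n * (w n)^2 + 14 * (z n)^3 + 15 * (z n)^2 * w n + 6 * z n * (w n)^2 + (w n)^3) :
    ∀ n : ℕ, 2 ≤ n → y n / x n < y (n + 1) / x (n + 1) := by
  have inv : ∀ n : ℕ, 2 ≤ n → 0 < x n ∧ 0 < y n ∧ 0 < z n ∧ 0 < w n ∧
      0 < x n * z n - y n ^ 2 ∧ 0 ≤ y n * w n - z n ^ 2 ∧ 0 ≤ x n * w n - y n * z n := by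
    intro n hn
    induction n, hn using Nat.le_induction with
    | base =>
      have h1x : x 1 = 18 := by rw [hx 0, hx0, hy0, hz0]; norm_num
      have h1y : y 1 = 16 := by rw [hy 0, hx0, hy0, hz0, hw0]; norm_num
      have h1z : z 1 = 15 := by rw [hz 0, hx0, hy0, hz0, hw0]; norm_num
      have h1w : w 1 = 14 := by rw [hw 0, hy0, hz0, hw0]; norm_num
      have h2x : x 2 = 568301 := by rw [hx 1, h1x, h1y, h1z]; norm_num
      have h2y : y 2 = 521504 := by rw [hy 1, h1x, h1y, h1z, h1w]; norm_num
      have h2z : z 2 = 478579 := by rw [hz 1, h1x, h1y, h1z, h1w]; norm_num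
      have h2w : w 2 = 439204 := by rw [hw 1, h1y, h1z, h1w]; norm_num
      rw [h2x, h2y, h2z, h2w]; norm_num
    | succ n hn ih =>
      obtain ⟨hxp, hyp, hzp, hwp, hG1, hG2, hG3⟩ := ih
      refine ⟨by rw [hx n]; positivity, by rw [hy n]; positivity,
        by rw [hz n]; positivity, by rw [hw n]; positivity, ?_, ?_, ?_⟩
      · have key : x (n + 1) * z (n + 1) - y (n + 1) ^ 2 =
            (16 * x n ^ 2 + 32 * x n * y n + 52 * x n * z n + 28 * x n * w n + 12 * y n ^ 2 + 28 * y n * z n + 22 * y n * w n + 8 * z n * w n + w n ^ 2) * (x n * z n - y n ^ 2) * (x n * z n - y n ^ 2) +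
            (48 * x n ^ 2 + 72 * x n * y n + 36 * x n * z n + 14 * x n * w n + 38 * y n ^ 2 + 30 * y n * z n + 14 * y n * w n + 2 * z n * w n) * (x n * z n - y n ^ 2) * (y n * w n - z n ^ 2) +
            (16 * x n ^ 2 + 6 * x n * w n) * (x n * z n - y n ^ 2) * (x n * w n - y n * z n) +
            (28 * x n ^ 2 + 28 * x n * y n + x n * z n + 16 * y n ^ 2 + 6 * y n * z n + z n ^ 2) * (y n * w n - z n ^ 2) * (y n * w n - z n ^ 2) +
            (16 * x n ^ 2) * (y n * w n - z n ^ 2) * (x n * w n - y n * z n) +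
            (4 * x n ^ 2) * (x n * w n - y n * z n) * (x n * w n - y n * z n) := by
          rw [hx n, hy n, hz n]; ring
        have t0 : 0 < (16 * x n ^ 2 + 32 * x n * y n + 52 * x n * z n + 28 * x n * w n + 12 * y n ^ 2 + 28 * y n * z n + 22 * y n * w n + 8 * z n * w n + w n ^ 2) * (x n * z n - y n ^ 2) * (x n * z n - y n ^ 2) :=
          mul_pos (mul_pos (by positivity) hG1) hG1
        have t1 : 0 ≤ (48 * x n ^ 2 + 72 * x n * y n + 36 * x n * z n + 14 * x n * w n + 38 * y n ^ 2 + 30 * y n * z n + 14 * y n * w n + 2 * z n * w n) * (x n * z n - y n ^ 2) * (y n * w n - z n ^ 2) :=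
          mul_nonneg (mul_nonneg (by positivity) hG1.le) hG2
        have t2 : 0 ≤ (16 * x n ^ 2 + 6 * x n * w n) * (x n * z n - y n ^ 2) * (x n * w n - y n * z n) :=
          mul_nonneg (mul_nonneg (by positivity) hG1.le) hG3
        have t3 : 0 ≤ (28 * x n ^ 2 + 28 * x n * y n + x n * z n + 16 * y n ^ 2 + 6 * y n * z n + z n ^ 2) * (y n * w n - z n ^ 2) * (y n * w n - z n ^ 2) :=
          mul_nonneg (mul_nonneg (by positivity) hG2) hG2
        have t4 : 0 ≤ (16 * x n ^ 2) * (y n * w n - z n ^ 2) * (x n * w n - y n * z n) :=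
          mul_nonneg (mul_nonneg (by positivity) hG2) hG3
        have t5 : 0 ≤ (4 * x n ^ 2) * (x n * w n - y n * z n) * (x n * w n - y n * z n) :=
          mul_nonneg (mul_nonneg (by positivity) hG3) hG3
        rw [key]
        linarith [t0, t1, t2, t3, t4, t5]
      · have key : y (n + 1) * w (n + 1) - z (n + 1) ^ 2 =
            (16 * y n ^ 2 + 48 * y n * z n + 60 * y n * w n + 8 * z n ^ 2 + 56 * z n * w n + 28 * w n ^ 2) * (x n * z n - y n ^ 2) * (x n * z n - y n ^ 2) +
            (16 * x n * y n + 28 * x n * w n + 56 * y n ^ 2 + 60 * y n * z n + 58 * y n * w n + 16 * z n ^ 2 + 36 * z n * w n + 12 * w n ^ 2) * (x n * z n - y n ^ 2) * (y n * w n - z n ^ 2) +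
            (8 * w n ^ 2) * (x n * z n - y n ^ 2) * (x n * w n - y n * z n) +
            (4 * x n ^ 2 + 16 * x n * y n + 14 * x n * w n + 22 * y n ^ 2 + 14 * y n * z n + 13 * y n * w n + 3 * z n ^ 2 + 4 * z n * w n + w n ^ 2) * (y n * w n - z n ^ 2) * (y n * w n - z n ^ 2) +
            (6 * x n * w n + 2 * w n ^ 2) * (y n * w n - z n ^ 2) * (x n * w n - y n * z n) +
            (w n ^ 2) * (x n * w n - y n * z n) * (x n * w n - y n * z n) := by
          rw [hy n, hz n, hw n]; ring
        have t0 : 0 ≤ (16 * y n ^ 2 + 48 * y n * z n + 60 * y n * w n + 8 * z n ^ 2 + 56 * z n * w n + 28 * w n ^ 2) * (x n * z n - y n ^ 2) * (x n * z n - y n ^ 2) :=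
          mul_nonneg (mul_nonneg (by positivity) hG1.le) hG1.le
        have t1 : 0 ≤ (16 * x n * y n + 28 * x n * w n + 56 * y n ^ 2 + 60 * y n * z n + 58 * y n * w n + 16 * z n ^ 2 + 36 * z n * w n + 12 * w n ^ 2) * (x n * z n - y n ^ 2) * (y n * w n - z n ^ 2) :=
          mul_nonneg (mul_nonneg (by positivity) hG1.le) hG2
        have t2 : 0 ≤ (8 * w n ^ 2) * (x n * z n - y n ^ 2) * (x n * w n - y n * z n) :=
          mul_nonneg (mul_nonneg (by positivity) hG1.le) hG3
        have t3 : 0 ≤ (4 * x n ^ 2 + 16 * x n * y n + 14 * x n * w n + 22 * y n ^ 2 + 14 * y n * z n + 13 * y n * w n + 3 * z n ^ 2 + 4 * z n * w n + w n ^ 2) * (y n * w n - z n ^ 2) * (y n * w n - z n ^ 2) :=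
          mul_nonneg (mul_nonneg (by positivity) hG2) hG2
        have t4 : 0 ≤ (6 * x n * w n + 2 * w n ^ 2) * (y n * w n - z n ^ 2) * (x n * w n - y n * z n) :=
          mul_nonneg (mul_nonneg (by positivity) hG2) hG3
        have t5 : 0 ≤ (w n ^ 2) * (x n * w n - y n * z n) * (x n * w n - y n * z n) :=
          mul_nonneg (mul_nonneg (by positivity) hG3) hG3
        rw [key]
        linarith [t0, t1, t2, t3, t4, t5]
      · have key : x (n + 1) * w (n + 1) - y (n + 1) * z (n + 1) =
            (32 * x n * y n + 64 * x n * z n + 60 * x n * w n + 32 * y n ^ 2 + 76 * y n * z n + 84 * y n * w n + 50 * z n * w n + 16 * w n ^ 2) * (x n * z n - y n ^ 2) * (x n * z n - y n ^ 2) +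
            (32 * x n ^ 2 + 104 * x n * y n + 48 * x n * z n + 58 * x n * w n + 100 * y n ^ 2 + 90 * y n * z n + 66 * y n * w n + 8 * z n ^ 2 + 26 * z n * w n + 4 * w n ^ 2) * (x n * z n - y n ^ 2) * (y n * w n - z n ^ 2) +
            (28 * x n * w n + 2 * w n ^ 2) * (x n * z n - y n ^ 2) * (x n * w n - y n * z n) +
            (32 * x n ^ 2 + 50 * x n * y n + 15 * x n * w n + 42 * y n ^ 2 + 19 * y n * z n + 8 * y n * w n + 4 * z n ^ 2 + 2 * z n * w n) * (y n * w n - z n ^ 2) * (y n * w n - z n ^ 2) +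
            (8 * x n ^ 2 + 14 * x n * w n) * (y n * w n - z n ^ 2) * (x n * w n - y n * z n) +
            (6 * x n * w n) * (x n * w n - y n * z n) * (x n * w n - y n * z n) := by
          rw [hx n, hy n, hz n, hw n]; ring
        have t0 : 0 ≤ (32 * x n * y n + 64 * x n * z n + 60 * x n * w n + 32 * y n ^ 2 + 76 * y n * z n + 84 * y n * w n + 50 * z n * w n + 16 * w n ^ 2) * (x n * z n - y n ^ 2) * (x n * z n - y n ^ 2) :=
          mul_nonneg (mul_nonneg (by positivity) hG1.le) hG1.le
        have t1 : 0 ≤ (32 * x n ^ 2 + 104 * x n * y n + 48 * x n * z n + 58 * x n * w n + 100 * y n ^ 2 + 90 * y n * z n + 66 * y n * w n + 8 * z n ^ 2 + 26 * z n * w n + 4 * w n ^ 2) * (x n * z n - y n ^ 2) * (y n * w n - z n ^ 2) :=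
          mul_nonneg (mul_nonneg (by positivity) hG1.le) hG2
        have t2 : 0 ≤ (28 * x n * w n + 2 * w n ^ 2) * (x n * z n - y n ^ 2) * (x n * w n - y n * z n) :=
          mul_nonneg (mul_nonneg (by positivity) hG1.le) hG3
        have t3 : 0 ≤ (32 * x n ^ 2 + 50 * x n * y n + 15 * x n * w n + 42 * y n ^ 2 + 19 * y n * z n + 8 * y n * w n + 4 * z n ^ 2 + 2 * z n * w n) * (y n * w n - z n ^ 2) * (y n * w n - z n ^ 2) :=
          mul_nonneg (mul_nonneg (by positivity) hG2) hG2
        have t4 : 0 ≤ (8 * x n ^ 2 + 14 * x n * w n) * (y n * w n - z n ^ 2) * (x n * w n - y n * z n) :=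
          mul_nonneg (mul_nonneg (by positivity) hG2) hG3
        have t5 : 0 ≤ (6 * x n * w n) * (x n * w n - y n * z n) * (x n * w n - y n * z n) :=
          mul_nonneg (mul_nonneg (by positivity) hG3) hG3
        rw [key]
        linarith [t0, t1, t2, t3, t4, t5]
  intro n hn
  obtain ⟨hxp, hyp, hzp, hwp, hG1, hG2, hG3⟩ := inv n hn
  obtain ⟨hxp1, -, -, -, -, -, -⟩ := inv (n + 1) (le_trans hn (Nat.le_succ n))
  rw [div_lt_div_iff₀ hxp hxp1]
  have keyD : y (n + 1) * x n - x (n + 1) * y n =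
      (8 * x n ^ 2 + 20 * x n * y n + 6 * x n * z n + 14 * y n ^ 2 + 15 * y n * z n + 2 * z n ^ 2) * (x n * z n - y n ^ 2) +
      (5 * x n * y n) * (y n * w n - z n ^ 2) +
      (2 * x n ^ 2 + 6 * x n * y n + 2 * x n * z n + 4 * y n * z n + z n ^ 2) * (x n * w n - y n * z n) := by
    rw [hx n, hy n]; ring
  have tD1 : 0 < (8 * x n ^ 2 + 20 * x n * y n + 6 * x n * z n + 14 * y n ^ 2 + 15 * y n * z n + 2 * z n ^ 2) * (x n * z n - y n ^ 2) :=
    mul_pos (by positivity) hG1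
  have tD2 : 0 ≤ (5 * x n * y n) * (y n * w n - z n ^ 2) :=
    mul_nonneg (by positivity) hG2
  have tD3 : 0 ≤ (2 * x n ^ 2 + 6 * x n * y n + 2 * x n * z n + 4 * y n * z n + z n ^ 2) * (x n * w n - y n * z n) :=
    mul_nonneg (by positivity) hG3
  nlinarith [keyD, tD1, tD2, tD3]
end

section
/- There exists a real number L such that the three ratio sequences all converge to L: lim_{n→∞} y_n/x_n = lim_{n→∞} z_n/y_n = lim_{n→∞} w_n/z_n = L. -/
set_option maxHeartbeats 1000000

open Filter Topology Real

private lemma hanoi_step_s6 (a b c d δ A B C D : ℝ)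
    (hA : A = 8 * a^3 + 24 * a^2 * b + 6 * a^2 * c + 30 * a * b^2 + 18 * a * b * c + 3 * a * c^2 + 14 * b^3 + 15 * b^2 * c + 6 * b * c^2 + c^3)
    (hB : B = 8 * a^2 * b + 8 * a^2 * c + 2 * a^2 * d + 16 * a * b^2 + 24 * a * b * c + 6 * a * b * d + 6 * a * c^2 + 2 * a * c * d + 10 * b^3 + 20 * b^2 * c + 5 * b^2 * d + 11 * b * c^2 + 4 * b * c * d + 2 * c^3 + c^2 * d)
    (hC : C = 8 * a * b^2 + 16 * a * b * c + 4 * a * b * d + 10 * a * c^2 + 6 * a * c * d + a * d^2 + 8 * b^3 + 22 * b^2 * c + 6 * b^2 * d + 20 * b * c^2 + 12 * b * c * d + 2 * b * d^2 + 5 * c^3 + 4 * c^2 * d + c * d^2)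
    (hD : D = 8 * b^3 + 24 * b^2 * c + 6 * b^2 * d + 30 * b * c^2 + 18 * b * c * d + 3 * b * d^2 + 14 * c^3 + 15 * c^2 * d + 6 * c * d^2 + d^3)
    (ha : 0 < a) (hd0' : 0 < δ) (hdle : δ ≤ 1/1000000000)
    (hb1 : (91/100 + 1000000*δ)*a ≤ b) (hb2 : b ≤ (92/100 - 1000000*δ)*a)
    (hc1 : (91/100 + 1000000*δ)*b ≤ c) (hc2 : c ≤ (92/100 - 1000000*δ)*b)
    (hd1 : (91/100 + 1000000*δ)*c ≤ d) (hd2 : d ≤ (92/100 - 1000000*δ)*c)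
    (e1 : |b^2 - a*c| ≤ δ*a^2) (e2 : |b*c - a*d| ≤ δ*a^2) (e3 : |c^2 - b*d| ≤ δ*a^2) :
    (0 < A ∧
     ((91/100 + 1000000*(δ/2))*A ≤ B ∧ B ≤ (92/100 - 1000000*(δ/2))*A) ∧
     ((91/100 + 1000000*(δ/2))*B ≤ C ∧ C ≤ (92/100 - 1000000*(δ/2))*B) ∧
     ((91/100 + 1000000*(δ/2))*C ≤ D ∧ D ≤ (92/100 - 1000000*(δ/2))*C) ∧
     (|B^2 - A*C| ≤ δ/2*A^2 ∧ |B*C - A*D| ≤ δ/2*A^2 ∧ |C^2 - B*D| ≤ δ/2*A^2)) ∧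
    (|B/A - b/a| ≤ 12*δ ∧ |c/b - b/a| ≤ 2*δ ∧ |d/c - c/b| ≤ 2*δ) := by
  have hMd : (0:ℝ) < 1000000*δ := by linarith only [hd0']
  have hMda : 0 < 1000000*δ*a := mul_pos hMd ha
  have hblo : 91/100*a ≤ b := by linarith only [hb1, hMda]
  have hbhi : b ≤ a := by linarith only [hb2, hMda, ha]
  have hb0 : (0:ℝ) < b := by linarith only [hblo, ha]
  have hMdb : 0 < 1000000*δ*b := mul_pos hMd hb0
  have hclo : 91/100*b ≤ c := by linarith only [hc1, hMdb]
  have hchi : c ≤ b := by linarith only [hc2, hMdb, hb0]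
  have hc0 : (0:ℝ) < c := by linarith only [hclo, hb0]
  have hMdc : 0 < 1000000*δ*c := mul_pos hMd hc0
  have hdlo : 91/100*c ≤ d := by linarith only [hd1, hMdc]
  have hdhi : d ≤ c := by linarith only [hd2, hMdc, hc0]
  have hd0 : (0:ℝ) < d := by linarith only [hdlo, hc0]
  have hca : c ≤ a := le_trans hchi hbhi
  have hda : d ≤ a := le_trans hdhi hca
  have hclo2 : 82/100*a ≤ c := by linarith only [hclo, hblo, ha]
  have hdlo2 : 74/100*a ≤ d := by linarith only [hdlo, hclo2, ha]
  have haa0 : (0:ℝ) ≤ a*a := mul_nonneg ha.le ha.le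
  have hsq1 : δ*a^2 = δ*(a*a) := by ring
  have he1 : |b^2 - a*c| ≤ δ*(a*a) := by rw [← hsq1]; exact e1
  have he2 : |b*c - a*d| ≤ δ*(a*a) := by rw [← hsq1]; exact e2
  have he3 : |c^2 - b*d| ≤ δ*(a*a) := by rw [← hsq1]; exact e3
  have hdaa0 : (0:ℝ) ≤ δ*(a*a) := mul_nonneg hd0'.le haa0
  have hmh_aa : a*a ≤ a*a := le_refl (a*a)
  have hml_aa : (0:ℝ) ≤ a*a := mul_nonneg ha.le ha.le
  have hmh_ab : a*b ≤ a*a := mul_le_mul_of_nonneg_left hbhi ha.le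
  have hml_ab : (0:ℝ) ≤ a*b := mul_nonneg ha.le hb0.le
  have hmh_ac : a*c ≤ a*a := mul_le_mul_of_nonneg_left hca ha.le
  have hml_ac : (0:ℝ) ≤ a*c := mul_nonneg ha.le hc0.le
  have hmh_ad : a*d ≤ a*a := mul_le_mul_of_nonneg_left hda ha.le
  have hml_ad : (0:ℝ) ≤ a*d := mul_nonneg ha.le hd0.le
  have hmh_bb : b*b ≤ a*a := mul_le_mul hbhi hbhi hb0.le ha.le
  have hml_bb : (0:ℝ) ≤ b*b := mul_nonneg hb0.le hb0.le
  have hmh_bc : b*c ≤ a*a := mul_le_mul hbhi hca hc0.le ha.le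
  have hml_bc : (0:ℝ) ≤ b*c := mul_nonneg hb0.le hc0.le
  have hmh_bd : b*d ≤ a*a := mul_le_mul hbhi hda hd0.le ha.le
  have hml_bd : (0:ℝ) ≤ b*d := mul_nonneg hb0.le hd0.le
  have hmh_cc : c*c ≤ a*a := mul_le_mul hca hca hc0.le ha.le
  have hml_cc : (0:ℝ) ≤ c*c := mul_nonneg hc0.le hc0.le
  have hmh_cd : c*d ≤ a*a := mul_le_mul hca hda hd0.le ha.le
  have hml_cd : (0:ℝ) ≤ c*d := mul_nonneg hc0.le hd0.le
  have hmh_dd : d*d ≤ a*a := mul_le_mul hda hda hd0.le ha.le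
  have hml_dd : (0:ℝ) ≤ d*d := mul_nonneg hd0.le hd0.le
  have h3_aaa : (0:ℝ) ≤ a*a*a := mul_nonneg (mul_nonneg ha.le ha.le) ha.le
  have h3_aab : (0:ℝ) ≤ a*a*b := mul_nonneg (mul_nonneg ha.le ha.le) hb0.le
  have h3_aac : (0:ℝ) ≤ a*a*c := mul_nonneg (mul_nonneg ha.le ha.le) hc0.le
  have h3_aad : (0:ℝ) ≤ a*a*d := mul_nonneg (mul_nonneg ha.le ha.le) hd0.le
  have h3_abb : (0:ℝ) ≤ a*b*b := mul_nonneg (mul_nonneg ha.le hb0.le) hb0.le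
  have h3_abc : (0:ℝ) ≤ a*b*c := mul_nonneg (mul_nonneg ha.le hb0.le) hc0.le
  have h3_abd : (0:ℝ) ≤ a*b*d := mul_nonneg (mul_nonneg ha.le hb0.le) hd0.le
  have h3_acc : (0:ℝ) ≤ a*c*c := mul_nonneg (mul_nonneg ha.le hc0.le) hc0.le
  have h3_acd : (0:ℝ) ≤ a*c*d := mul_nonneg (mul_nonneg ha.le hc0.le) hd0.le
  have h3_add : (0:ℝ) ≤ a*d*d := mul_nonneg (mul_nonneg ha.le hd0.le) hd0.le
  have h3_bbb : (0:ℝ) ≤ b*b*b := mul_nonneg (mul_nonneg hb0.le hb0.le) hb0.le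
  have h3_bbc : (0:ℝ) ≤ b*b*c := mul_nonneg (mul_nonneg hb0.le hb0.le) hc0.le
  have h3_bbd : (0:ℝ) ≤ b*b*d := mul_nonneg (mul_nonneg hb0.le hb0.le) hd0.le
  have h3_bcc : (0:ℝ) ≤ b*c*c := mul_nonneg (mul_nonneg hb0.le hc0.le) hc0.le
  have h3_bcd : (0:ℝ) ≤ b*c*d := mul_nonneg (mul_nonneg hb0.le hc0.le) hd0.le
  have h3_bdd : (0:ℝ) ≤ b*d*d := mul_nonneg (mul_nonneg hb0.le hd0.le) hd0.le
  have h3_ccc : (0:ℝ) ≤ c*c*c := mul_nonneg (mul_nonneg hc0.le hc0.le) hc0.le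
  have h3_ccd : (0:ℝ) ≤ c*c*d := mul_nonneg (mul_nonneg hc0.le hc0.le) hd0.le
  have h3_cdd : (0:ℝ) ≤ c*d*d := mul_nonneg (mul_nonneg hc0.le hd0.le) hd0.le
  have h3_ddd : (0:ℝ) ≤ d*d*d := mul_nonneg (mul_nonneg hd0.le hd0.le) hd0.le
  have hA8 : 8*(a*(a*a)) ≤ A := by rw [hA]; linarith only [h3_aaa, h3_aab, h3_aac, h3_aad, h3_abb, h3_abc, h3_abd, h3_acc, h3_acd, h3_add, h3_bbb, h3_bbc, h3_bbd, h3_bcc, h3_bcd, h3_bdd, h3_ccc, h3_ccd, h3_cdd, h3_ddd]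
  have hA0 : 0 < A := lt_of_lt_of_le (by linarith only [mul_pos ha (mul_pos ha ha)]) hA8
  have hB8 : 8*((a*a)*c) ≤ B := by rw [hB]; linarith only [h3_aaa, h3_aab, h3_aac, h3_aad, h3_abb, h3_abc, h3_abd, h3_acc, h3_acd, h3_add, h3_bbb, h3_bbc, h3_bbd, h3_bcc, h3_bcd, h3_bdd, h3_ccc, h3_ccd, h3_cdd, h3_ddd]
  have hB6 : 6*(a*(a*a)) ≤ B := by
    linarith only [hB8, mul_le_mul_of_nonneg_left hclo2 haa0, h3_aaa]
  have hB0 : 0 < B := lt_of_lt_of_le (by linarith only [mul_pos ha (mul_pos ha ha)]) hB6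
  have hC10 : 10*(a*(c*c)) ≤ C := by rw [hC]; linarith only [h3_aaa, h3_aab, h3_aac, h3_aad, h3_abb, h3_abc, h3_abd, h3_acc, h3_acd, h3_add, h3_bbb, h3_bbc, h3_bbd, h3_bcc, h3_bcd, h3_bdd, h3_ccc, h3_ccd, h3_cdd, h3_ddd]
  have hC6 : 6*(a*(a*a)) ≤ C := by
    have hcc2 : (82/100*a)*(82/100*a) ≤ c*c := mul_le_mul hclo2 hclo2 (by linarith only [ha]) hc0.le
    linarith only [hC10, mul_le_mul_of_nonneg_left hcc2 ha.le, h3_aaa]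
  have hC0 : 0 < C := lt_of_lt_of_le (by linarith only [mul_pos ha (mul_pos ha ha)]) hC6
  have idE1 : B*a - A*b = ((-8)*(a*a) + (-20)*(a*b) + (-6)*(a*c) + (5)*(a*d) + (-14)*(b*b) + (-15)*(b*c) + (-2)*(c*c))*(b^2 - a*c) + ((-2)*(a*a) + (-6)*(a*b) + (-7)*(a*c) + (-4)*(b*c) + (-1)*(c*c))*(b*c - a*d) := by rw [hA, hB]; ring
  have hq_E1_0 : |((-8)*(a*a) + (-20)*(a*b) + (-6)*(a*c) + (5)*(a*d) + (-14)*(b*b) + (-15)*(b*c) + (-2)*(c*c))| ≤ 70*(a*a) := abs_le.mpr ⟨by linarith only [hmh_aa, hml_aa, hmh_ab, hml_ab, hmh_ac, hml_ac, hmh_ad, hml_ad, hmh_bb, hml_bb, hmh_bc, hml_bc, hmh_bd, hml_bd, hmh_cc, hml_cc, hmh_cd, hml_cd, hmh_dd, hml_dd], by linarith only [hmh_aa, hml_aa, hmh_ab, hml_ab, hmh_ac, hml_ac, hmh_ad, hml_ad, hmh_bb, hml_bb, hmh_bc, hml_bc, hmh_bd, hml_bd, hmh_cc, hml_cc, hmh_cd,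 hml_cd, hmh_dd, hml_dd]⟩
  have ht_E1_0 : |((-8)*(a*a) + (-20)*(a*b) + (-6)*(a*c) + (5)*(a*d) + (-14)*(b*b) + (-15)*(b*c) + (-2)*(c*c))*(b^2 - a*c)| ≤ (70*(a*a))*(δ*(a*a)) := by
    rw [abs_mul]; exact mul_le_mul hq_E1_0 he1 (abs_nonneg _) (by linarith only [haa0])
  have hq_E1_1 : |((-2)*(a*a) + (-6)*(a*b) + (-7)*(a*c) + (-4)*(b*c) + (-1)*(c*c))| ≤ 20*(a*a) := abs_le.mpr ⟨by linarith only [hmh_aa, hml_aa, hmh_ab, hml_ab, hmh_ac, hml_ac, hmh_ad, hml_ad, hmh_bb, hml_bb, hmh_bc, hml_bc, hmh_bd, hml_bd, hmh_cc, hml_cc, hmh_cd, hml_cd, hmh_dd, hml_dd], by linarith only [hmh_aa, hml_aa, hmh_ab, hml_ab, hmh_ac, hml_ac, hmh_ad, hml_ad, hmh_bb, hml_bb, hmh_bc, hml_bc, hmh_bd, hml_bd, hmh_cc, hml_cc, hmh_cd, hml_cd, hmh_dd, hml_dd]⟩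
  have ht_E1_1 : |((-2)*(a*a) + (-6)*(a*b) + (-7)*(a*c) + (-4)*(b*c) + (-1)*(c*c))*(b*c - a*d)| ≤ (20*(a*a))*(δ*(a*a)) := by
    rw [abs_mul]; exact mul_le_mul hq_E1_1 he2 (abs_nonneg _) (by linarith only [haa0])
  have hSE1 : |B*a - A*b| ≤ 90*(δ*((a*a)*(a*a))) := by
    rw [idE1, abs_le]
    exact ⟨by linarith only [(abs_le.mp ht_E1_0).1, (abs_le.mp ht_E1_1).1], by linarith only [(abs_le.mp ht_E1_0).2, (abs_le.mp ht_E1_1).2]⟩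
  have idE2 : C*b - B*c = ((8)*(a*b) + (8)*(a*c) + (4)*(a*d) + (8)*(b*b) + (12)*(b*c) + (6)*(b*d) + (6)*(c*c) + (8)*(c*d) + (2)*(d*d))*(b^2 - a*c) + ((-2)*(a*c) + (-6)*(b*c) + (-1)*(b*d) + (-6)*(c*c) + (-2)*(c*d))*(b*c - a*d) + ((-2)*(c*c) + (-1)*(c*d))*(c^2 - b*d) := by rw [hB, hC]; ring
  have hq_E2_0 : |((8)*(a*b) + (8)*(a*c) + (4)*(a*d) + (8)*(b*b) + (12)*(b*c) + (6)*(b*d) + (6)*(c*c) + (8)*(c*d) + (2)*(d*d))| ≤ 62*(a*a) := abs_le.mpr ⟨by linarith only [hmh_aa, hml_aa, hmh_ab, hml_ab, hmh_ac, hml_ac, hmh_ad, hml_ad, hmh_bb, hml_bb, hmh_bc, hml_bc, hmh_bd, hml_bd, hmh_cc, hml_cc, hmh_cd, hml_cd, hmh_dd, hml_dd], by linarith only [hmh_aa, hml_aa, hmh_ab, hml_ab, hmh_ac, hml_ac, hmh_ad, hml_ad, hmh_bb, hml_bb, hmh_bc, hml_bc, hmh_bd, hml_bd, hmh_cc, hml_cc,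 hmh_cd, hml_cd, hmh_dd, hml_dd]⟩
  have ht_E2_0 : |((8)*(a*b) + (8)*(a*c) + (4)*(a*d) + (8)*(b*b) + (12)*(b*c) + (6)*(b*d) + (6)*(c*c) + (8)*(c*d) + (2)*(d*d))*(b^2 - a*c)| ≤ (62*(a*a))*(δ*(a*a)) := by
    rw [abs_mul]; exact mul_le_mul hq_E2_0 he1 (abs_nonneg _) (by linarith only [haa0])
  have hq_E2_1 : |((-2)*(a*c) + (-6)*(b*c) + (-1)*(b*d) + (-6)*(c*c) + (-2)*(c*d))| ≤ 17*(a*a) := abs_le.mpr ⟨by linarith only [hmh_aa, hml_aa, hmh_ab, hml_ab, hmh_ac, hml_ac, hmh_ad, hml_ad, hmh_bb, hml_bb, hmh_bc, hml_bc, hmh_bd, hml_bd, hmh_cc, hml_cc, hmh_cd, hml_cd, hmh_dd, hml_dd], by linarith only [hmh_aa, hml_aa, hmh_ab, hml_ab, hmh_ac, hml_ac, hmh_ad, hml_ad, hmh_bb, hml_bb, hmh_bc, hml_bc, hmh_bd, hml_bd, hmh_cc, hml_cc, hmh_cd, hml_cd, hmh_dd, hml_dd]⟩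
  have ht_E2_1 : |((-2)*(a*c) + (-6)*(b*c) + (-1)*(b*d) + (-6)*(c*c) + (-2)*(c*d))*(b*c - a*d)| ≤ (17*(a*a))*(δ*(a*a)) := by
    rw [abs_mul]; exact mul_le_mul hq_E2_1 he2 (abs_nonneg _) (by linarith only [haa0])
  have hq_E2_2 : |((-2)*(c*c) + (-1)*(c*d))| ≤ 3*(a*a) := abs_le.mpr ⟨by linarith only [hmh_aa, hml_aa, hmh_ab, hml_ab, hmh_ac, hml_ac, hmh_ad, hml_ad, hmh_bb, hml_bb, hmh_bc, hml_bc, hmh_bd, hml_bd, hmh_cc, hml_cc, hmh_cd, hml_cd, hmh_dd, hml_dd], by linarith only [hmh_aa, hml_aa, hmh_ab, hml_ab, hmh_ac, hml_ac, hmh_ad, hml_ad, hmh_bb, hml_bb, hmh_bc, hml_bc, hmh_bd, hml_bd, hmh_cc, hml_cc, hmh_cd, hml_cd, hmh_dd, hml_dd]⟩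
  have ht_E2_2 : |((-2)*(c*c) + (-1)*(c*d))*(c^2 - b*d)| ≤ (3*(a*a))*(δ*(a*a)) := by
    rw [abs_mul]; exact mul_le_mul hq_E2_2 he3 (abs_nonneg _) (by linarith only [haa0])
  have hSE2 : |C*b - B*c| ≤ 82*(δ*((a*a)*(a*a))) := by
    rw [idE2, abs_le]
    exact ⟨by linarith only [(abs_le.mp ht_E2_0).1, (abs_le.mp ht_E2_1).1, (abs_le.mp ht_E2_2).1], by linarith only [(abs_le.mp ht_E2_0).2, (abs_le.mp ht_E2_1).2, (abs_le.mp ht_E2_2).2]⟩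
  have idE3 : D*c - C*d = ((-8)*(a*d) + (8)*(b*c) + (-8)*(b*d) + (-20)*(c*d) + (-6)*(d*d))*(b^2 - a*c) + ((8)*(a*c) + (24)*(b*c) + (4)*(b*d) + (30)*(c*c) + (12)*(c*d) + (1)*(d*d))*(b*c - a*d) + ((14)*(c*c) + (10)*(c*d) + (2)*(d*d))*(c^2 - b*d) := by rw [hC, hD]; ring
  have hq_E3_0 : |((-8)*(a*d) + (8)*(b*c) + (-8)*(b*d) + (-20)*(c*d) + (-6)*(d*d))| ≤ 50*(a*a) := abs_le.mpr ⟨by linarith only [hmh_aa, hml_aa, hmh_ab, hml_ab, hmh_ac, hml_ac, hmh_ad, hml_ad, hmh_bb, hml_bb, hmh_bc, hml_bc, hmh_bd, hml_bd, hmh_cc, hml_cc, hmh_cd, hml_cd, hmh_dd, hml_dd], by linarith only [hmh_aa, hml_aa, hmh_ab, hml_ab, hmh_ac, hml_ac, hmh_ad, hml_ad, hmh_bb, hml_bb, hmh_bc, hml_bc, hmh_bd, hml_bd, hmh_cc, hml_cc, hmh_cd, hml_cd, hmh_dd, hml_dd]⟩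
  have ht_E3_0 : |((-8)*(a*d) + (8)*(b*c) + (-8)*(b*d) + (-20)*(c*d) + (-6)*(d*d))*(b^2 - a*c)| ≤ (50*(a*a))*(δ*(a*a)) := by
    rw [abs_mul]; exact mul_le_mul hq_E3_0 he1 (abs_nonneg _) (by linarith only [haa0])
  have hq_E3_1 : |((8)*(a*c) + (24)*(b*c) + (4)*(b*d) + (30)*(c*c) + (12)*(c*d) + (1)*(d*d))| ≤ 79*(a*a) := abs_le.mpr ⟨by linarith only [hmh_aa, hml_aa, hmh_ab, hml_ab, hmh_ac, hml_ac, hmh_ad, hml_ad, hmh_bb, hml_bb, hmh_bc, hml_bc, hmh_bd, hml_bd, hmh_cc, hml_cc, hmh_cd, hml_cd, hmh_dd, hml_dd], by linarith only [hmh_aa, hml_aa, hmh_ab, hml_ab, hmh_ac, hml_ac, hmh_ad, hml_ad, hmh_bb, hml_bb, hmh_bc, hml_bc, hmh_bd, hml_bd, hmh_cc, hml_cc, hmh_cd, hml_cd, hmh_dd, hml_dd]⟩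
  have ht_E3_1 : |((8)*(a*c) + (24)*(b*c) + (4)*(b*d) + (30)*(c*c) + (12)*(c*d) + (1)*(d*d))*(b*c - a*d)| ≤ (79*(a*a))*(δ*(a*a)) := by
    rw [abs_mul]; exact mul_le_mul hq_E3_1 he2 (abs_nonneg _) (by linarith only [haa0])
  have hq_E3_2 : |((14)*(c*c) + (10)*(c*d) + (2)*(d*d))| ≤ 26*(a*a) := abs_le.mpr ⟨by linarith only [hmh_aa, hml_aa, hmh_ab, hml_ab, hmh_ac, hml_ac, hmh_ad, hml_ad, hmh_bb, hml_bb, hmh_bc, hml_bc, hmh_bd, hml_bd, hmh_cc, hml_cc, hmh_cd, hml_cd, hmh_dd, hml_dd], by linarith only [hmh_aa, hml_aa, hmh_ab, hml_ab, hmh_ac, hml_ac, hmh_ad, hml_ad, hmh_bb, hml_bb, hmh_bc, hml_bc, hmh_bd, hml_bd, hmh_cc, hml_cc, hmh_cd, hml_cd, hmh_dd, hml_dd]⟩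
  have ht_E3_2 : |((14)*(c*c) + (10)*(c*d) + (2)*(d*d))*(c^2 - b*d)| ≤ (26*(a*a))*(δ*(a*a)) := by
    rw [abs_mul]; exact mul_le_mul hq_E3_2 he3 (abs_nonneg _) (by linarith only [haa0])
  have hSE3 : |D*c - C*d| ≤ 155*(δ*((a*a)*(a*a))) := by
    rw [idE3, abs_le]
    exact ⟨by linarith only [(abs_le.mp ht_E3_0).1, (abs_le.mp ht_E3_1).1, (abs_le.mp ht_E3_2).1], by linarith only [(abs_le.mp ht_E3_0).2, (abs_le.mp ht_E3_1).2, (abs_le.mp ht_E3_2).2]⟩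
  have hAa4 : 90*(δ*((a*a)*(a*a))) ≤ 12*(δ*(A*a)) := by
    linarith only [mul_le_mul_of_nonneg_left hA8 (mul_nonneg hd0'.le ha.le), mul_nonneg hd0'.le (mul_nonneg haa0 haa0)]
  have hdAa : 0 ≤ δ*(A*a) := mul_nonneg hd0'.le (mul_nonneg hA0.le ha.le)
  have hE1' := abs_le.mp hSE1
  have hBlo : (91/100 + 1000000*(δ/2))*A ≤ B := by
    refine le_of_mul_le_mul_right ?_ ha
    linarith only [hE1'.1, mul_le_mul_of_nonneg_left hb1 hA0.le, hAa4, hdAa]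
  have hBhi : B ≤ (92/100 - 1000000*(δ/2))*A := by
    refine le_of_mul_le_mul_right ?_ ha
    linarith only [hE1'.2, mul_le_mul_of_nonneg_left hb2 hA0.le, hAa4, hdAa]
  have hBb : 5*((a*a)*(a*a)) ≤ B*b := by
    linarith only [mul_le_mul hB6 hblo (by linarith only [ha]) hB0.le, mul_nonneg haa0 haa0]
  have hBb4 : 82*(δ*((a*a)*(a*a))) ≤ 17*(δ*(B*b)) := by
    linarith only [mul_le_mul_of_nonneg_left hBb hd0'.le, mul_nonneg hd0'.le (mul_nonneg haa0 haa0)]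
  have hdBb : 0 ≤ δ*(B*b) := mul_nonneg hd0'.le (mul_nonneg hB0.le hb0.le)
  have hE2' := abs_le.mp hSE2
  have hClo : (91/100 + 1000000*(δ/2))*B ≤ C := by
    refine le_of_mul_le_mul_right ?_ hb0
    linarith only [hE2'.1, mul_le_mul_of_nonneg_left hc1 hB0.le, hBb4, hdBb]
  have hChi : C ≤ (92/100 - 1000000*(δ/2))*B := by
    refine le_of_mul_le_mul_right ?_ hb0
    linarith only [hE2'.2, mul_le_mul_of_nonneg_left hc2 hB0.le, hBb4, hdBb]
  have hCc : 4*((a*a)*(a*a)) ≤ C*c := by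
    linarith only [mul_le_mul hC6 hclo2 (by linarith only [ha]) hC0.le, mul_nonneg haa0 haa0]
  have hCc4 : 155*(δ*((a*a)*(a*a))) ≤ 39*(δ*(C*c)) := by
    linarith only [mul_le_mul_of_nonneg_left hCc hd0'.le, mul_nonneg hd0'.le (mul_nonneg haa0 haa0)]
  have hdCc : 0 ≤ δ*(C*c) := mul_nonneg hd0'.le (mul_nonneg hC0.le hc0.le)
  have hE3' := abs_le.mp hSE3
  have hDlo : (91/100 + 1000000*(δ/2))*C ≤ D := by
    refine le_of_mul_le_mul_right ?_ hc0
    linarith only [hE3'.1, mul_le_mul_of_nonneg_left hd1 hC0.le, hCc4, hdCc]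
  have hDhi : D ≤ (92/100 - 1000000*(δ/2))*C := by
    refine le_of_mul_le_mul_right ?_ hc0
    linarith only [hE3'.2, mul_le_mul_of_nonneg_left hd2 hC0.le, hCc4, hdCc]
  have hp_00 : |(b^2 - a*c)*(b^2 - a*c)| ≤ (δ*(a*a))*(δ*(a*a)) := by
    rw [abs_mul]; exact mul_le_mul he1 he1 (abs_nonneg _) hdaa0
  have hp_01 : |(b^2 - a*c)*(b*c - a*d)| ≤ (δ*(a*a))*(δ*(a*a)) := by
    rw [abs_mul]; exact mul_le_mul he1 he2 (abs_nonneg _) hdaa0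
  have hp_02 : |(b^2 - a*c)*(c^2 - b*d)| ≤ (δ*(a*a))*(δ*(a*a)) := by
    rw [abs_mul]; exact mul_le_mul he1 he3 (abs_nonneg _) hdaa0
  have hp_11 : |(b*c - a*d)*(b*c - a*d)| ≤ (δ*(a*a))*(δ*(a*a)) := by
    rw [abs_mul]; exact mul_le_mul he2 he2 (abs_nonneg _) hdaa0
  have hp_12 : |(b*c - a*d)*(c^2 - b*d)| ≤ (δ*(a*a))*(δ*(a*a)) := by
    rw [abs_mul]; exact mul_le_mul he2 he3 (abs_nonneg _) hdaa0
  have hp_22 : |(c^2 - b*d)*(c^2 - b*d)| ≤ (δ*(a*a))*(δ*(a*a)) := by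
    rw [abs_mul]; exact mul_le_mul he3 he3 (abs_nonneg _) hdaa0
  have idD1 : B^2 - A*C = ((-16)*(a*a) + (-32)*(a*b) + (-4)*(a*c) + (44)*(a*d) + (-12)*(b*b) + (-28)*(b*c) + (16)*(b*d) + (8)*(c*c) + (8)*(c*d) + (-3)*(d*d))*((b^2 - a*c)*(b^2 - a*c)) + ((-16)*(a*a) + (-48)*(a*b) + (-56)*(a*c) + (22)*(a*d) + (-46)*(b*c) + (14)*(b*d) + (-2)*(c*c) + (19)*(c*d))*((b^2 - a*c)*(b*c - a*d)) + ((1)*(c*c) + (4)*(c*d))*((b^2 - a*c)*(c^2 - b*d)) + ((-4)*(a*a) + (-16)*(a*b) + (-28)*(a*c) + (-28)*(b*c) + (-17)*(c*c))*((b*c - a*d)*(b*c - a*d)) + ((-6)*(c*c))*((b*c - a*d)*(c^2 - b*d)) + ((-1)*(c*c))*((c^2 - b*d)*(c^2 - b*d)) := by rw [hA, hB, hC]; ring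
  have hq_D1_0 : |((-16)*(a*a) + (-32)*(a*b) + (-4)*(a*c) + (44)*(a*d) + (-12)*(b*b) + (-28)*(b*c) + (16)*(b*d) + (8)*(c*c) + (8)*(c*d) + (-3)*(d*d))| ≤ 171*(a*a) := abs_le.mpr ⟨by linarith only [hmh_aa, hml_aa, hmh_ab, hml_ab, hmh_ac, hml_ac, hmh_ad, hml_ad, hmh_bb, hml_bb, hmh_bc, hml_bc, hmh_bd, hml_bd, hmh_cc, hml_cc, hmh_cd, hml_cd, hmh_dd, hml_dd], by linarith only [hmh_aa, hml_aa, hmh_ab, hml_ab, hmh_ac, hml_ac, hmh_ad, hml_ad, hmh_bb, hml_bb, hmh_bc, hml_bc, hmh_bd, hml_bd, hmh_cc, hml_cc, hmh_cd, hml_cd, hmh_dd, hml_dd]⟩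
  have ht_D1_0 : |((-16)*(a*a) + (-32)*(a*b) + (-4)*(a*c) + (44)*(a*d) + (-12)*(b*b) + (-28)*(b*c) + (16)*(b*d) + (8)*(c*c) + (8)*(c*d) + (-3)*(d*d))*((b^2 - a*c)*(b^2 - a*c))| ≤ (171*(a*a))*((δ*(a*a))*(δ*(a*a))) := by
    rw [abs_mul]
    exact mul_le_mul hq_D1_0 hp_00 (abs_nonneg _) (by linarith only [haa0])
  have hq_D1_1 : |((-16)*(a*a) + (-48)*(a*b) + (-56)*(a*c) + (22)*(a*d) + (-46)*(b*c) + (14)*(b*d) + (-2)*(c*c) + (19)*(c*d))| ≤ 223*(a*a) := abs_le.mpr ⟨by linarith only [hmh_aa, hml_aa, hmh_ab, hml_ab, hmh_ac, hml_ac, hmh_ad, hml_ad, hmh_bb, hml_bb, hmh_bc, hml_bc, hmh_bd, hml_bd, hmh_cc, hml_cc, hmh_cd, hml_cd, hmh_dd, hml_dd], by linarith only [hmh_aa, hml_aa, hmh_ab, hml_ab, hmh_ac, hml_ac, hmh_ad, hml_ad, hmh_bb, hml_bb, hmh_bc, hml_bc, hmh_bd, hml_bd, hmh_cc, hml_cc,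 hmh_cd, hml_cd, hmh_dd, hml_dd]⟩
  have ht_D1_1 : |((-16)*(a*a) + (-48)*(a*b) + (-56)*(a*c) + (22)*(a*d) + (-46)*(b*c) + (14)*(b*d) + (-2)*(c*c) + (19)*(c*d))*((b^2 - a*c)*(b*c - a*d))| ≤ (223*(a*a))*((δ*(a*a))*(δ*(a*a))) := by
    rw [abs_mul]
    exact mul_le_mul hq_D1_1 hp_01 (abs_nonneg _) (by linarith only [haa0])
  have hq_D1_2 : |((1)*(c*c) + (4)*(c*d))| ≤ 5*(a*a) := abs_le.mpr ⟨by linarith only [hmh_aa, hml_aa, hmh_ab, hml_ab, hmh_ac, hml_ac, hmh_ad, hml_ad, hmh_bb, hml_bb, hmh_bc, hml_bc, hmh_bd, hml_bd, hmh_cc, hml_cc, hmh_cd, hml_cd, hmh_dd, hml_dd], by linarith only [hmh_aa, hml_aa, hmh_ab, hml_ab, hmh_ac, hml_ac, hmh_ad, hml_ad, hmh_bb, hml_bb, hmh_bc, hml_bc, hmh_bd, hml_bd, hmh_cc, hml_cc, hmh_cd, hml_cd, hmh_dd, hml_dd]⟩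
  have ht_D1_2 : |((1)*(c*c) + (4)*(c*d))*((b^2 - a*c)*(c^2 - b*d))| ≤ (5*(a*a))*((δ*(a*a))*(δ*(a*a))) := by
    rw [abs_mul]
    exact mul_le_mul hq_D1_2 hp_02 (abs_nonneg _) (by linarith only [haa0])
  have hq_D1_3 : |((-4)*(a*a) + (-16)*(a*b) + (-28)*(a*c) + (-28)*(b*c) + (-17)*(c*c))| ≤ 93*(a*a) := abs_le.mpr ⟨by linarith only [hmh_aa, hml_aa, hmh_ab, hml_ab, hmh_ac, hml_ac, hmh_ad, hml_ad, hmh_bb, hml_bb, hmh_bc, hml_bc, hmh_bd, hml_bd, hmh_cc, hml_cc, hmh_cd, hml_cd, hmh_dd, hml_dd], by linarith only [hmh_aa, hml_aa, hmh_ab, hml_ab, hmh_ac, hml_ac, hmh_ad, hml_ad, hmh_bb, hml_bb, hmh_bc, hml_bc, hmh_bd, hml_bd, hmh_cc, hml_cc, hmh_cd, hml_cd, hmh_dd, hml_dd]⟩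
  have ht_D1_3 : |((-4)*(a*a) + (-16)*(a*b) + (-28)*(a*c) + (-28)*(b*c) + (-17)*(c*c))*((b*c - a*d)*(b*c - a*d))| ≤ (93*(a*a))*((δ*(a*a))*(δ*(a*a))) := by
    rw [abs_mul]
    exact mul_le_mul hq_D1_3 hp_11 (abs_nonneg _) (by linarith only [haa0])
  have hq_D1_4 : |((-6)*(c*c))| ≤ 6*(a*a) := abs_le.mpr ⟨by linarith only [hmh_aa, hml_aa, hmh_ab, hml_ab, hmh_ac, hml_ac, hmh_ad, hml_ad, hmh_bb, hml_bb, hmh_bc, hml_bc, hmh_bd, hml_bd, hmh_cc, hml_cc, hmh_cd, hml_cd, hmh_dd, hml_dd], by linarith only [hmh_aa, hml_aa, hmh_ab, hml_ab, hmh_ac, hml_ac, hmh_ad, hml_ad, hmh_bb, hml_bb, hmh_bc, hml_bc, hmh_bd, hml_bd, hmh_cc, hml_cc, hmh_cd, hml_cd, hmh_dd, hml_dd]⟩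
  have ht_D1_4 : |((-6)*(c*c))*((b*c - a*d)*(c^2 - b*d))| ≤ (6*(a*a))*((δ*(a*a))*(δ*(a*a))) := by
    rw [abs_mul]
    exact mul_le_mul hq_D1_4 hp_12 (abs_nonneg _) (by linarith only [haa0])
  have hq_D1_5 : |((-1)*(c*c))| ≤ 1*(a*a) := abs_le.mpr ⟨by linarith only [hmh_aa, hml_aa, hmh_ab, hml_ab, hmh_ac, hml_ac, hmh_ad, hml_ad, hmh_bb, hml_bb, hmh_bc, hml_bc, hmh_bd, hml_bd, hmh_cc, hml_cc, hmh_cd, hml_cd, hmh_dd, hml_dd], by linarith only [hmh_aa, hml_aa, hmh_ab, hml_ab, hmh_ac, hml_ac, hmh_ad, hml_ad, hmh_bb, hml_bb, hmh_bc, hml_bc, hmh_bd, hml_bd, hmh_cc, hml_cc, hmh_cd, hml_cd, hmh_dd, hml_dd]⟩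
  have ht_D1_5 : |((-1)*(c*c))*((c^2 - b*d)*(c^2 - b*d))| ≤ (1*(a*a))*((δ*(a*a))*(δ*(a*a))) := by
    rw [abs_mul]
    exact mul_le_mul hq_D1_5 hp_22 (abs_nonneg _) (by linarith only [haa0])
  have hSD1 : |B^2 - A*C| ≤ 499*((a*a)*((δ*(a*a))*(δ*(a*a)))) := by
    rw [idD1, abs_le]
    exact ⟨by linarith only [(abs_le.mp ht_D1_0).1, (abs_le.mp ht_D1_1).1, (abs_le.mp ht_D1_2).1, (abs_le.mp ht_D1_3).1, (abs_le.mp ht_D1_4).1, (abs_le.mp ht_D1_5).1], by linarith only [(abs_le.mp ht_D1_0).2, (abs_le.mp ht_D1_1).2, (abs_le.mp ht_D1_2).2, (abs_le.mp ht_D1_3).2, (abs_le.mp ht_D1_4).2, (abs_le.mp ht_D1_5).2]⟩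
  have idD2 : B*C - A*D = ((-32)*(a*b) + (-32)*(a*c) + (44)*(a*d) + (-32)*(b*b) + (-76)*(b*c) + (16)*(b*d) + (16)*(c*c) + (48)*(c*d) + (8)*(d*d))*((b^2 - a*c)*(b^2 - a*c)) + ((-32)*(a*b) + (-96)*(a*c) + (4)*(a*d) + (-116)*(b*c) + (-8)*(b*d) + (-40)*(c*c) + (32)*(c*d) + (13)*(d*d))*((b^2 - a*c)*(b*c - a*d)) + ((-8)*(c*c) + (8)*(c*d) + (4)*(d*d))*((b^2 - a*c)*(c^2 - b*d)) + ((-8)*(a*b) + (-32)*(a*c) + (-6)*(a*d) + (-50)*(b*c) + (-14)*(b*d) + (-42)*(c*c) + (-15)*(c*d))*((b*c - a*d)*(b*c - a*d)) + ((-19)*(c*c) + (-8)*(c*d))*((b*c - a*d)*(c^2 - b*d)) + ((-4)*(c*c) + (-2)*(c*d))*((c^2 - b*d)*(c^2 - b*d)) := by rw [hA, hB, hC, hD]; ring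
  have hq_D2_0 : |((-32)*(a*b) + (-32)*(a*c) + (44)*(a*d) + (-32)*(b*b) + (-76)*(b*c) + (16)*(b*d) + (16)*(c*c) + (48)*(c*d) + (8)*(d*d))| ≤ 304*(a*a) := abs_le.mpr ⟨by linarith only [hmh_aa, hml_aa, hmh_ab, hml_ab, hmh_ac, hml_ac, hmh_ad, hml_ad, hmh_bb, hml_bb, hmh_bc, hml_bc, hmh_bd, hml_bd, hmh_cc, hml_cc, hmh_cd, hml_cd, hmh_dd, hml_dd], by linarith only [hmh_aa, hml_aa, hmh_ab, hml_ab, hmh_ac, hml_ac, hmh_ad, hml_ad, hmh_bb, hml_bb, hmh_bc, hml_bc, hmh_bd, hml_bd, hmh_cc, hml_cc, hmh_cd, hml_cd, hmh_dd, hml_dd]⟩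
  have ht_D2_0 : |((-32)*(a*b) + (-32)*(a*c) + (44)*(a*d) + (-32)*(b*b) + (-76)*(b*c) + (16)*(b*d) + (16)*(c*c) + (48)*(c*d) + (8)*(d*d))*((b^2 - a*c)*(b^2 - a*c))| ≤ (304*(a*a))*((δ*(a*a))*(δ*(a*a))) := by
    rw [abs_mul]
    exact mul_le_mul hq_D2_0 hp_00 (abs_nonneg _) (by linarith only [haa0])
  have hq_D2_1 : |((-32)*(a*b) + (-96)*(a*c) + (4)*(a*d) + (-116)*(b*c) + (-8)*(b*d) + (-40)*(c*c) + (32)*(c*d) + (13)*(d*d))| ≤ 341*(a*a) := abs_le.mpr ⟨by linarith only [hmh_aa, hml_aa, hmh_ab, hml_ab, hmh_ac, hml_ac, hmh_ad, hml_ad, hmh_bb, hml_bb, hmh_bc, hml_bc, hmh_bd, hml_bd, hmh_cc, hml_cc, hmh_cd, hml_cd, hmh_dd, hml_dd], by linarith only [hmh_aa, hml_aa, hmh_ab, hml_ab, hmh_ac, hml_ac, hmh_ad, hml_ad, hmh_bb, hml_bb, hmh_bc, hml_bc, hmh_bd, hml_bd, hmh_cc, hml_cc, hmh_cd, hml_cd,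 hmh_dd, hml_dd]⟩
  have ht_D2_1 : |((-32)*(a*b) + (-96)*(a*c) + (4)*(a*d) + (-116)*(b*c) + (-8)*(b*d) + (-40)*(c*c) + (32)*(c*d) + (13)*(d*d))*((b^2 - a*c)*(b*c - a*d))| ≤ (341*(a*a))*((δ*(a*a))*(δ*(a*a))) := by
    rw [abs_mul]
    exact mul_le_mul hq_D2_1 hp_01 (abs_nonneg _) (by linarith only [haa0])
  have hq_D2_2 : |((-8)*(c*c) + (8)*(c*d) + (4)*(d*d))| ≤ 20*(a*a) := abs_le.mpr ⟨by linarith only [hmh_aa, hml_aa, hmh_ab, hml_ab, hmh_ac, hml_ac, hmh_ad, hml_ad, hmh_bb, hml_bb, hmh_bc, hml_bc, hmh_bd, hml_bd, hmh_cc, hml_cc, hmh_cd, hml_cd, hmh_dd, hml_dd], by linarith only [hmh_aa, hml_aa, hmh_ab, hml_ab, hmh_ac, hml_ac, hmh_ad, hml_ad, hmh_bb, hml_bb, hmh_bc, hml_bc, hmh_bd, hml_bd, hmh_cc, hml_cc, hmh_cd, hml_cd, hmh_dd, hml_dd]⟩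
  have ht_D2_2 : |((-8)*(c*c) + (8)*(c*d) + (4)*(d*d))*((b^2 - a*c)*(c^2 - b*d))| ≤ (20*(a*a))*((δ*(a*a))*(δ*(a*a))) := by
    rw [abs_mul]
    exact mul_le_mul hq_D2_2 hp_02 (abs_nonneg _) (by linarith only [haa0])
  have hq_D2_3 : |((-8)*(a*b) + (-32)*(a*c) + (-6)*(a*d) + (-50)*(b*c) + (-14)*(b*d) + (-42)*(c*c) + (-15)*(c*d))| ≤ 167*(a*a) := abs_le.mpr ⟨by linarith only [hmh_aa, hml_aa, hmh_ab, hml_ab, hmh_ac, hml_ac, hmh_ad, hml_ad, hmh_bb, hml_bb, hmh_bc, hml_bc, hmh_bd, hml_bd, hmh_cc, hml_cc, hmh_cd, hml_cd, hmh_dd, hml_dd], by linarith only [hmh_aa, hml_aa, hmh_ab, hml_ab, hmh_ac, hml_ac, hmh_ad, hml_ad, hmh_bb, hml_bb, hmh_bc, hml_bc, hmh_bd, hml_bd, hmh_cc, hml_cc, hmh_cd, hml_cd, hmh_dd, hml_dd]⟩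
  have ht_D2_3 : |((-8)*(a*b) + (-32)*(a*c) + (-6)*(a*d) + (-50)*(b*c) + (-14)*(b*d) + (-42)*(c*c) + (-15)*(c*d))*((b*c - a*d)*(b*c - a*d))| ≤ (167*(a*a))*((δ*(a*a))*(δ*(a*a))) := by
    rw [abs_mul]
    exact mul_le_mul hq_D2_3 hp_11 (abs_nonneg _) (by linarith only [haa0])
  have hq_D2_4 : |((-19)*(c*c) + (-8)*(c*d))| ≤ 27*(a*a) := abs_le.mpr ⟨by linarith only [hmh_aa, hml_aa, hmh_ab, hml_ab, hmh_ac, hml_ac, hmh_ad, hml_ad, hmh_bb, hml_bb, hmh_bc, hml_bc, hmh_bd, hml_bd, hmh_cc, hml_cc, hmh_cd, hml_cd, hmh_dd, hml_dd], by linarith only [hmh_aa, hml_aa, hmh_ab, hml_ab, hmh_ac, hml_ac, hmh_ad, hml_ad, hmh_bb, hml_bb, hmh_bc, hml_bc, hmh_bd, hml_bd, hmh_cc, hml_cc, hmh_cd, hml_cd, hmh_dd, hml_dd]⟩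
  have ht_D2_4 : |((-19)*(c*c) + (-8)*(c*d))*((b*c - a*d)*(c^2 - b*d))| ≤ (27*(a*a))*((δ*(a*a))*(δ*(a*a))) := by
    rw [abs_mul]
    exact mul_le_mul hq_D2_4 hp_12 (abs_nonneg _) (by linarith only [haa0])
  have hq_D2_5 : |((-4)*(c*c) + (-2)*(c*d))| ≤ 6*(a*a) := abs_le.mpr ⟨by linarith only [hmh_aa, hml_aa, hmh_ab, hml_ab, hmh_ac, hml_ac, hmh_ad, hml_ad, hmh_bb, hml_bb, hmh_bc, hml_bc, hmh_bd, hml_bd, hmh_cc, hml_cc, hmh_cd, hml_cd, hmh_dd, hml_dd], by linarith only [hmh_aa, hml_aa, hmh_ab, hml_ab, hmh_ac, hml_ac, hmh_ad, hml_ad, hmh_bb, hml_bb, hmh_bc, hml_bc, hmh_bd, hml_bd, hmh_cc, hml_cc, hmh_cd, hml_cd, hmh_dd, hml_dd]⟩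
  have ht_D2_5 : |((-4)*(c*c) + (-2)*(c*d))*((c^2 - b*d)*(c^2 - b*d))| ≤ (6*(a*a))*((δ*(a*a))*(δ*(a*a))) := by
    rw [abs_mul]
    exact mul_le_mul hq_D2_5 hp_22 (abs_nonneg _) (by linarith only [haa0])
  have hSD2 : |B*C - A*D| ≤ 865*((a*a)*((δ*(a*a))*(δ*(a*a)))) := by
    rw [idD2, abs_le]
    exact ⟨by linarith only [(abs_le.mp ht_D2_0).1, (abs_le.mp ht_D2_1).1, (abs_le.mp ht_D2_2).1, (abs_le.mp ht_D2_3).1, (abs_le.mp ht_D2_4).1, (abs_le.mp ht_D2_5).1], by linarith only [(abs_le.mp ht_D2_0).2, (abs_le.mp ht_D2_1).2, (abs_le.mp ht_D2_2).2, (abs_le.mp ht_D2_3).2, (abs_le.mp ht_D2_4).2, (abs_le.mp ht_D2_5).2]⟩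
  have idD3 : C^2 - B*D = ((16)*(a*d) + (-16)*(b*b) + (-48)*(b*c) + (-4)*(b*d) + (-12)*(c*c) + (16)*(c*d) + (8)*(d*d))*((b^2 - a*c)*(b^2 - a*c)) + ((-16)*(a*c) + (4)*(a*d) + (-52)*(b*c) + (-12)*(b*d) + (-44)*(c*c) + (-8)*(c*d) + (6)*(d*d))*((b^2 - a*c)*(b*c - a*d)) + ((-16)*(c*c) + (-8)*(c*d) + (1)*(d*d))*((b^2 - a*c)*(c^2 - b*d)) + ((-4)*(a*c) + (-16)*(b*c) + (-6)*(b*d) + (-22)*(c*c) + (-14)*(c*d) + (-1)*(d*d))*((b*c - a*d)*(b*c - a*d)) + ((-14)*(c*c) + (-13)*(c*d) + (-2)*(d*d))*((b*c - a*d)*(c^2 - b*d)) + ((-3)*(c*c) + (-4)*(c*d) + (-1)*(d*d))*((c^2 - b*d)*(c^2 - b*d)) := by rw [hB, hC, hD]; ring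
  have hq_D3_0 : |((16)*(a*d) + (-16)*(b*b) + (-48)*(b*c) + (-4)*(b*d) + (-12)*(c*c) + (16)*(c*d) + (8)*(d*d))| ≤ 120*(a*a) := abs_le.mpr ⟨by linarith only [hmh_aa, hml_aa, hmh_ab, hml_ab, hmh_ac, hml_ac, hmh_ad, hml_ad, hmh_bb, hml_bb, hmh_bc, hml_bc, hmh_bd, hml_bd, hmh_cc, hml_cc, hmh_cd, hml_cd, hmh_dd, hml_dd], by linarith only [hmh_aa, hml_aa, hmh_ab, hml_ab, hmh_ac, hml_ac, hmh_ad, hml_ad, hmh_bb, hml_bb, hmh_bc, hml_bc, hmh_bd, hml_bd, hmh_cc, hml_cc, hmh_cd, hml_cd, hmh_dd, hml_dd]⟩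
  have ht_D3_0 : |((16)*(a*d) + (-16)*(b*b) + (-48)*(b*c) + (-4)*(b*d) + (-12)*(c*c) + (16)*(c*d) + (8)*(d*d))*((b^2 - a*c)*(b^2 - a*c))| ≤ (120*(a*a))*((δ*(a*a))*(δ*(a*a))) := by
    rw [abs_mul]
    exact mul_le_mul hq_D3_0 hp_00 (abs_nonneg _) (by linarith only [haa0])
  have hq_D3_1 : |((-16)*(a*c) + (4)*(a*d) + (-52)*(b*c) + (-12)*(b*d) + (-44)*(c*c) + (-8)*(c*d) + (6)*(d*d))| ≤ 142*(a*a) := abs_le.mpr ⟨by linarith only [hmh_aa, hml_aa, hmh_ab, hml_ab, hmh_ac, hml_ac, hmh_ad, hml_ad, hmh_bb, hml_bb, hmh_bc, hml_bc, hmh_bd, hml_bd, hmh_cc, hml_cc, hmh_cd, hml_cd, hmh_dd, hml_dd], by linarith only [hmh_aa, hml_aa, hmh_ab, hml_ab, hmh_ac, hml_ac, hmh_ad, hml_ad, hmh_bb, hml_bb, hmh_bc, hml_bc, hmh_bd, hml_bd, hmh_cc, hml_cc, hmh_cd, hml_cd, hmh_dd, hml_dd]⟩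
  have ht_D3_1 : |((-16)*(a*c) + (4)*(a*d) + (-52)*(b*c) + (-12)*(b*d) + (-44)*(c*c) + (-8)*(c*d) + (6)*(d*d))*((b^2 - a*c)*(b*c - a*d))| ≤ (142*(a*a))*((δ*(a*a))*(δ*(a*a))) := by
    rw [abs_mul]
    exact mul_le_mul hq_D3_1 hp_01 (abs_nonneg _) (by linarith only [haa0])
  have hq_D3_2 : |((-16)*(c*c) + (-8)*(c*d) + (1)*(d*d))| ≤ 25*(a*a) := abs_le.mpr ⟨by linarith only [hmh_aa, hml_aa, hmh_ab, hml_ab, hmh_ac, hml_ac, hmh_ad, hml_ad, hmh_bb, hml_bb, hmh_bc, hml_bc, hmh_bd, hml_bd, hmh_cc, hml_cc, hmh_cd, hml_cd, hmh_dd, hml_dd], by linarith only [hmh_aa, hml_aa, hmh_ab, hml_ab, hmh_ac, hml_ac, hmh_ad, hml_ad, hmh_bb, hml_bb, hmh_bc, hml_bc, hmh_bd, hml_bd, hmh_cc, hml_cc, hmh_cd, hml_cd, hmh_dd, hml_dd]⟩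
  have ht_D3_2 : |((-16)*(c*c) + (-8)*(c*d) + (1)*(d*d))*((b^2 - a*c)*(c^2 - b*d))| ≤ (25*(a*a))*((δ*(a*a))*(δ*(a*a))) := by
    rw [abs_mul]
    exact mul_le_mul hq_D3_2 hp_02 (abs_nonneg _) (by linarith only [haa0])
  have hq_D3_3 : |((-4)*(a*c) + (-16)*(b*c) + (-6)*(b*d) + (-22)*(c*c) + (-14)*(c*d) + (-1)*(d*d))| ≤ 63*(a*a) := abs_le.mpr ⟨by linarith only [hmh_aa, hml_aa, hmh_ab, hml_ab, hmh_ac, hml_ac, hmh_ad, hml_ad, hmh_bb, hml_bb, hmh_bc, hml_bc, hmh_bd, hml_bd, hmh_cc, hml_cc, hmh_cd, hml_cd, hmh_dd, hml_dd], by linarith only [hmh_aa, hml_aa, hmh_ab, hml_ab, hmh_ac, hml_ac, hmh_ad, hml_ad, hmh_bb, hml_bb, hmh_bc, hml_bc, hmh_bd, hml_bd, hmh_cc, hml_cc, hmh_cd, hml_cd, hmh_dd, hml_dd]⟩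
  have ht_D3_3 : |((-4)*(a*c) + (-16)*(b*c) + (-6)*(b*d) + (-22)*(c*c) + (-14)*(c*d) + (-1)*(d*d))*((b*c - a*d)*(b*c - a*d))| ≤ (63*(a*a))*((δ*(a*a))*(δ*(a*a))) := by
    rw [abs_mul]
    exact mul_le_mul hq_D3_3 hp_11 (abs_nonneg _) (by linarith only [haa0])
  have hq_D3_4 : |((-14)*(c*c) + (-13)*(c*d) + (-2)*(d*d))| ≤ 29*(a*a) := abs_le.mpr ⟨by linarith only [hmh_aa, hml_aa, hmh_ab, hml_ab, hmh_ac, hml_ac, hmh_ad, hml_ad, hmh_bb, hml_bb, hmh_bc, hml_bc, hmh_bd, hml_bd, hmh_cc, hml_cc, hmh_cd, hml_cd, hmh_dd, hml_dd], by linarith only [hmh_aa, hml_aa, hmh_ab, hml_ab, hmh_ac, hml_ac, hmh_ad, hml_ad, hmh_bb, hml_bb, hmh_bc, hml_bc, hmh_bd, hml_bd, hmh_cc, hml_cc, hmh_cd, hml_cd, hmh_dd, hml_dd]⟩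
  have ht_D3_4 : |((-14)*(c*c) + (-13)*(c*d) + (-2)*(d*d))*((b*c - a*d)*(c^2 - b*d))| ≤ (29*(a*a))*((δ*(a*a))*(δ*(a*a))) := by
    rw [abs_mul]
    exact mul_le_mul hq_D3_4 hp_12 (abs_nonneg _) (by linarith only [haa0])
  have hq_D3_5 : |((-3)*(c*c) + (-4)*(c*d) + (-1)*(d*d))| ≤ 8*(a*a) := abs_le.mpr ⟨by linarith only [hmh_aa, hml_aa, hmh_ab, hml_ab, hmh_ac, hml_ac, hmh_ad, hml_ad, hmh_bb, hml_bb, hmh_bc, hml_bc, hmh_bd, hml_bd, hmh_cc, hml_cc, hmh_cd, hml_cd, hmh_dd, hml_dd], by linarith only [hmh_aa, hml_aa, hmh_ab, hml_ab, hmh_ac, hml_ac, hmh_ad, hml_ad, hmh_bb, hml_bb, hmh_bc, hml_bc, hmh_bd, hml_bd, hmh_cc, hml_cc, hmh_cd, hml_cd, hmh_dd, hml_dd]⟩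
  have ht_D3_5 : |((-3)*(c*c) + (-4)*(c*d) + (-1)*(d*d))*((c^2 - b*d)*(c^2 - b*d))| ≤ (8*(a*a))*((δ*(a*a))*(δ*(a*a))) := by
    rw [abs_mul]
    exact mul_le_mul hq_D3_5 hp_22 (abs_nonneg _) (by linarith only [haa0])
  have hSD3 : |C^2 - B*D| ≤ 387*((a*a)*((δ*(a*a))*(δ*(a*a)))) := by
    rw [idD3, abs_le]
    exact ⟨by linarith only [(abs_le.mp ht_D3_0).1, (abs_le.mp ht_D3_1).1, (abs_le.mp ht_D3_2).1, (abs_le.mp ht_D3_3).1, (abs_le.mp ht_D3_4).1, (abs_le.mp ht_D3_5).1], by linarith only [(abs_le.mp ht_D3_0).2, (abs_le.mp ht_D3_1).2, (abs_le.mp ht_D3_2).2, (abs_le.mp ht_D3_3).2, (abs_le.mp ht_D3_4).2, (abs_le.mp ht_D3_5).2]⟩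
  have k6 : (0:ℝ) ≤ (a*a)*((a*a)*(a*a)) := mul_nonneg haa0 (mul_nonneg haa0 haa0)
  have hdd : δ*δ ≤ (1/1000000000)*δ := by linarith only [mul_le_mul_of_nonneg_left hdle hd0'.le]
  have t1 : (δ*δ)*((a*a)*((a*a)*(a*a))) ≤ ((1/1000000000)*δ)*((a*a)*((a*a)*(a*a))) :=
    mul_le_mul_of_nonneg_right hdd k6
  have hA2 : 64*((a*(a*a))*(a*(a*a))) ≤ A*A := by linarith only [mul_le_mul hA8 hA8 (by linarith only [mul_pos ha (mul_pos ha ha)]) hA0.le]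
  have t2 : δ*(64*((a*(a*a))*(a*(a*a)))) ≤ δ*(A*A) := mul_le_mul_of_nonneg_left hA2 hd0'.le
  have hd1out : |B^2 - A*C| ≤ δ/2*A^2 := by linarith only [hSD1, t1, t2, mul_nonneg hd0'.le (mul_nonneg hA0.le hA0.le)]
  have hd2out : |B*C - A*D| ≤ δ/2*A^2 := by linarith only [hSD2, t1, t2, mul_nonneg hd0'.le (mul_nonneg hA0.le hA0.le)]
  have hd3out : |C^2 - B*D| ≤ δ/2*A^2 := by linarith only [hSD3, t1, t2, mul_nonneg hd0'.le (mul_nonneg hA0.le hA0.le)]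
  have hdrift : |B/A - b/a| ≤ 12*δ := by
    rw [div_sub_div B b (ne_of_gt hA0) (ne_of_gt ha), abs_div,
        abs_of_pos (mul_pos hA0 ha), div_le_iff₀ (mul_pos hA0 ha)]
    linarith only [hSE1, hAa4, hdAa]
  have hdiff1 : |c/b - b/a| ≤ 2*δ := by
    rw [div_sub_div c b (ne_of_gt hb0) (ne_of_gt ha), abs_div,
        abs_of_pos (mul_pos hb0 ha), div_le_iff₀ (mul_pos hb0 ha)]
    have hneg : c*a - b*b = -(b^2 - a*c) := by ring
    rw [hneg, abs_neg]
    linarith only [he1, mul_le_mul_of_nonneg_left (mul_le_mul_of_nonneg_right hblo ha.le) hd0'.le, hdaa0]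
  have hdiff2 : |d/c - c/b| ≤ 2*δ := by
    rw [div_sub_div d c (ne_of_gt hc0) (ne_of_gt hb0), abs_div,
        abs_of_pos (mul_pos hc0 hb0), div_le_iff₀ (mul_pos hc0 hb0)]
    have hneg : d*b - c*c = -(c^2 - b*d) := by ring
    rw [hneg, abs_neg]
    linarith only [he3, mul_le_mul_of_nonneg_left (mul_le_mul hclo2 hblo (by linarith only [ha]) hc0.le) hd0'.le, hdaa0]
  exact ⟨⟨hA0, ⟨hBlo, hBhi⟩, ⟨hClo, hChi⟩, ⟨hDlo, hDhi⟩, hd1out, hd2out, hd3out⟩, hdrift, hdiff1, hdiff2⟩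

theorem hanoi_ratios_common_limit
    (x y z w : ℕ → ℝ)
    (hx0 : x 0 = 1) (hy0 : y 0 = 0) (hz0 : z 0 = 1) (hw0 : w 0 = 0)
    (hx : ∀ n : ℕ, x (n + 1) = 8 * (x n)^3 + 24 * (x n)^2 * y n + 6 * (x n)^2 * z n + 30 * x n * (y n)^2 + 18 * x n * y n * z n + 3 * x n * (z n)^2 + 14 * (y n)^3 + 15 * (y n)^2 * z n + 6 * y n * (z n)^2 + (z n)^3)
    (hy : ∀ n : ℕ, y (n + 1) = 8 * (x n)^2 * y n + 8 * (x n)^2 * z n + 2 * (x n)^2 * w n + 16 * x n * (y n)^2 + 24 * x n * y n * z n + 6 * x n * y n * w n + 6 * x n * (z n)^2 + 2 * x n * z n * w n + 10 * (y n)^3 + 20 * (y n)^2 * z n + 5 * (y n)^2 * w n + 11 * y n * (z n)^2 + 4 * y n * z n * w n + 2 * (z n)^3 + (z n)^2 * w n)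
    (hz : ∀ n : ℕ, z (n + 1) = 8 * x n * (y n)^2 + 16 * x n * y n * z n + 4 * x n * y n * w n + 10 * x n * (z n)^2 + 6 * x n * z n * w n + x n * (w n)^2 + 8 * (y n)^3 + 22 * (y n)^2 * z n + 6 * (y n)^2 * w n + 20 * y n * (z n)^2 + 12 * y n * z n * w n + 2 * y n * (w n)^2 + 5 * (z n)^3 + 4 * (z n)^2 * w n + z n * (w n)^2)
    (hw : ∀ n : ℕ, w (n + 1) = 8 * (y n)^3 + 24 * (y n)^2 * z n + 6 * (y n)^2 * w n + 30 * y n * (z n)^2 + 18 * y n * z n * w n + 3 * y n * (w n)^2 + 14 * (z n)^3 + 15 * (z n)^2 * w n + 6 * z n * (w n)^2 + (w n)^3) :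
    ∃ L : ℝ, Tendsto (fun n => y n / x n) atTop (𝓝 L) ∧ Tendsto (fun n => z n / y n) atTop (𝓝 L) ∧ Tendsto (fun n => w n / z n) atTop (𝓝 L) := by
  have hx1 : x 1 = 18 := by rw [show (1:ℕ) = 0 + 1 from rfl, hx 0, hx0, hy0, hz0]; norm_num
  have hy1 : y 1 = 16 := by rw [show (1:ℕ) = 0 + 1 from rfl, hy 0, hx0, hy0, hz0, hw0]; norm_num
  have hz1 : z 1 = 15 := by rw [show (1:ℕ) = 0 + 1 from rfl, hz 0, hx0, hy0, hz0, hw0]; norm_num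
  have hw1 : w 1 = 14 := by rw [show (1:ℕ) = 0 + 1 from rfl, hw 0, hy0, hz0, hw0]; norm_num
  have hx2 : x 2 = 568301 := by rw [show (2:ℕ) = 1 + 1 from rfl, hx 1, hx1, hy1, hz1]; norm_num
  have hy2 : y 2 = 521504 := by rw [show (2:ℕ) = 1 + 1 from rfl, hy 1, hx1, hy1, hz1, hw1]; norm_num
  have hz2 : z 2 = 478579 := by rw [show (2:ℕ) = 1 + 1 from rfl, hz 1, hx1, hy1, hz1, hw1]; norm_num
  have hw2 : w 2 = 439204 := by rw [show (2:ℕ) = 1 + 1 from rfl, hw 1, hy1, hz1, hw1]; norm_num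
  have hx3 : x 3 = 18782596680434060148 := by
    rw [show (3:ℕ) = 2 + 1 from rfl, hx 2, hx2, hy2, hz2]; norm_num
  have hy3 : y 3 = 17236435531779805328 := by
    rw [show (3:ℕ) = 2 + 1 from rfl, hy 2, hx2, hy2, hz2, hw2]; norm_num
  have hz3 : z 3 = 15817552541478488865 := by
    rw [show (3:ℕ) = 2 + 1 from rfl, hz 2, hx2, hy2, hz2, hw2]; norm_num
  have hw3 : w 3 = 14515470321889909750 := by
    rw [show (3:ℕ) = 2 + 1 from rfl, hw 2, hy2, hz2, hw2]; norm_num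
  have inv : ∀ k : ℕ,
      0 < x (k+3) ∧
      ((91/100 + 1000000*((1/2:ℝ)^k/1000000000))*x (k+3) ≤ y (k+3) ∧
        y (k+3) ≤ (92/100 - 1000000*((1/2:ℝ)^k/1000000000))*x (k+3)) ∧
      ((91/100 + 1000000*((1/2:ℝ)^k/1000000000))*y (k+3) ≤ z (k+3) ∧
        z (k+3) ≤ (92/100 - 1000000*((1/2:ℝ)^k/1000000000))*y (k+3)) ∧
      ((91/100 + 1000000*((1/2:ℝ)^k/1000000000))*z (k+3) ≤ w (k+3) ∧
        w (k+3) ≤ (92/100 - 1000000*((1/2:ℝ)^k/1000000000))*z (k+3)) ∧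
      (|y (k+3)^2 - x (k+3)*z (k+3)| ≤ (1/2:ℝ)^k/1000000000*x (k+3)^2 ∧
        |y (k+3)*z (k+3) - x (k+3)*w (k+3)| ≤ (1/2:ℝ)^k/1000000000*x (k+3)^2 ∧
        |z (k+3)^2 - y (k+3)*w (k+3)| ≤ (1/2:ℝ)^k/1000000000*x (k+3)^2) := by
    intro k
    induction k with
    | zero =>
      simp only [Nat.zero_add, pow_zero]
      rw [hx3, hy3, hz3, hw3]
      norm_num [abs_le]
    | succ n ih =>
      obtain ⟨h0, ⟨hb1, hb2⟩, ⟨hc1, hc2⟩, ⟨hd1, hd2⟩, he1, he2, he3⟩ := ih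
      have hp0 : (0:ℝ) < (1/2:ℝ)^n/1000000000 := by positivity
      have hple : (1/2:ℝ)^n/1000000000 ≤ 1/1000000000 := by
        have h1 : (1/2:ℝ)^n ≤ 1 := pow_le_one₀ (by norm_num) (by norm_num)
        linarith
      have hs := (hanoi_step_s6 (x (n+3)) (y (n+3)) (z (n+3)) (w (n+3)) ((1/2:ℝ)^n/1000000000)
          (x (n+4)) (y (n+4)) (z (n+4)) (w (n+4)) (hx (n+3)) (hy (n+3)) (hz (n+3)) (hw (n+3))
          h0 hp0 hple hb1 hb2 hc1 hc2 hd1 hd2 he1 he2 he3).1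
      have hpow : (1/2:ℝ)^(n+1)/1000000000 = ((1/2:ℝ)^n/1000000000)/2 := by
        rw [pow_succ]; ring
      rw [hpow]
      exact hs
  have drift : ∀ k : ℕ,
      |y (k+4)/x (k+4) - y (k+3)/x (k+3)| ≤ 12*((1/2:ℝ)^k/1000000000) ∧
      |z (k+3)/y (k+3) - y (k+3)/x (k+3)| ≤ 2*((1/2:ℝ)^k/1000000000) ∧
      |w (k+3)/z (k+3) - z (k+3)/y (k+3)| ≤ 2*((1/2:ℝ)^k/1000000000) := by
    intro k
    obtain ⟨h0, ⟨hb1, hb2⟩, ⟨hc1, hc2⟩, ⟨hd1, hd2⟩, he1, he2, he3⟩ := inv k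
    have hp0 : (0:ℝ) < (1/2:ℝ)^k/1000000000 := by positivity
    have hple : (1/2:ℝ)^k/1000000000 ≤ 1/1000000000 := by
      have h1 : (1/2:ℝ)^k ≤ 1 := pow_le_one₀ (by norm_num) (by norm_num)
      linarith
    exact (hanoi_step_s6 (x (k+3)) (y (k+3)) (z (k+3)) (w (k+3)) ((1/2:ℝ)^k/1000000000)
        (x (k+4)) (y (k+4)) (z (k+4)) (w (k+4)) (hx (k+3)) (hy (k+3)) (hz (k+3)) (hw (k+3))
        h0 hp0 hple hb1 hb2 hc1 hc2 hd1 hd2 he1 he2 he3).2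
  have hcauchy : CauchySeq (fun k => y (k+3)/x (k+3)) := by
    apply cauchySeq_of_le_geometric (1/2) (12/1000000000) (by norm_num)
    intro n
    show dist (y (n+3)/x (n+3)) (y (n+4)/x (n+4)) ≤ 12/1000000000*(1/2:ℝ)^n
    rw [Real.dist_eq, abs_sub_comm]
    have h := (drift n).1
    linarith [h]
  obtain ⟨L, hL⟩ := cauchySeq_tendsto_of_complete hcauchy
  have hgeo : Tendsto (fun k : ℕ => 2*((1/2:ℝ)^k/1000000000)) atTop (𝓝 0) := by
    have h := (tendsto_pow_atTop_nhds_zero_of_lt_one (by norm_num : (0:ℝ) ≤ 1/2)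
      (by norm_num : (1/2:ℝ) < 1)).const_mul (2/1000000000 : ℝ)
    rw [mul_zero] at h
    exact h.congr (fun k => by ring)
  have hzy : Tendsto (fun k => z (k+3)/y (k+3) - y (k+3)/x (k+3)) atTop (𝓝 0) :=
    squeeze_zero_norm (fun k => by rw [Real.norm_eq_abs]; exact (drift k).2.1) hgeo
  have hL2 : Tendsto (fun k => z (k+3)/y (k+3)) atTop (𝓝 L) := by
    have h := hL.add hzy
    rw [add_zero] at h
    exact h.congr (fun k => by ring)
  have hwz : Tendsto (fun k => w (k+3)/z (k+3) - z (k+3)/y (k+3)) atTop (𝓝 0) :=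
    squeeze_zero_norm (fun k => by rw [Real.norm_eq_abs]; exact (drift k).2.2) hgeo
  have hL3 : Tendsto (fun k => w (k+3)/z (k+3)) atTop (𝓝 L) := by
    have h := hL2.add hwz
    rw [add_zero] at h
    exact h.congr (fun k => by ring)
  exact ⟨L, (tendsto_add_atTop_iff_nat (f := fun n => y n / x n) 3).mp hL,
    (tendsto_add_atTop_iff_nat (f := fun n => z n / y n) 3).mp hL2,
    (tendsto_add_atTop_iff_nat (f := fun n => w n / z n) 3).mp hL3⟩
end

section
/- For every integer n ≥ 3, the sequence x_n satisfies the sandwich bounds [x_{n−1}·(α_{n−1}^2 + 2α_{n−1} + 2)]^3 < x_n < [x_{n−1}·(β_{n−1}^2 + 2β_{n−1} + 2)]^3, where α_n = y_n/x_n and β_n = z_n/y_n. -/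
open Filter Topology Real

set_option maxHeartbeats 2000000 in
private lemma hanoi_step_s7 (p q r s : ℝ) (h0 : 0 < s) (h1 : s < r) (h2 : r < q) (h3 : q < p)
    (i1 : q^2 < p*r) (i2 : r^2 < q*s) (i3 : q*r < p*s) :
    (0 < 8*q^3 + 24*q^2*r + 6*q^2*s + 30*q*r^2 + 18*q*r*s + 3*q*s^2 + 14*r^3 + 15*r^2*s + 6*r*s^2 + s^3) ∧ ((8*q^3 + 24*q^2*r + 6*q^2*s + 30*q*r^2 + 18*q*r*s + 3*q*s^2 + 14*r^3 + 15*r^2*s + 6*r*s^2 + s^3) < 8*p*q^2 + 16*p*q*r + 4*p*q*s + 10*p*r^2 + 6*p*r*s + p*s^2 + 8*q^3 + 22*q^2*r + 6*q^2*s + 20*q*r^2 + 12*q*r*s + 2*q*s^2 + 5*r^3 + 4*r^2*s + r*s^2) ∧ ((8*p*q^2 + 16*p*q*r + 4*p*q*s + 10*p*r^2 + 6*p*r*s + p*s^2 + 8*q^3 + 22*q^2*r + 6*q^2*s + 20*q*r^2 + 12*q*r*s + 2*q*s^2 + 5*r^3 + 4*r^2*s + r*s^2) < 8*p^2*q + 8*p^2*r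 + 2*p^2*s + 16*p*q^2 + 24*p*q*r + 6*p*q*s + 6*p*r^2 + 2*p*r*s + 10*q^3 + 20*q^2*r + 5*q^2*s + 11*q*r^2 + 4*q*r*s + 2*r^3 + r^2*s) ∧ ((8*p^2*q + 8*p^2*r + 2*p^2*s + 16*p*q^2 + 24*p*q*r + 6*p*q*s + 6*p*r^2 + 2*p*r*s + 10*q^3 + 20*q^2*r + 5*q^2*s + 11*q*r^2 + 4*q*r*s + 2*r^3 + r^2*s) < 8*p^3 + 24*p^2*q + 6*p^2*r + 30*p*q^2 + 18*p*q*r + 3*p*r^2 + 14*q^3 + 15*q^2*r + 6*q*r^2 + r^3) ∧ ((8*p^2*q + 8*p^2*r + 2*p^2*s + 16*p*q^2 + 24*p*q*r + 6*p*q*s + 6*p*r^2 + 2*p*r*s + 10*q^3 + 20*q^2*r + 5*q^2*s + 11*q*r^2 + 4*q*r*s + 2*r^3 + r^2*s)^2 < (8*p^3 + 24*p^2*q + 6*p^2*r + 30*p*q^2 + 18*p*q*r + 3*p*r^2 + 14*q^3 + 15*q^2*r + 6*q*r^2 + r^3) * (8*p*q^2 + 16*p*q*r + 4*p*q*s + 10*p*r^2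 + 6*p*r*s + p*s^2 + 8*q^3 + 22*q^2*r + 6*q^2*s + 20*q*r^2 + 12*q*r*s + 2*q*s^2 + 5*r^3 + 4*r^2*s + r*s^2)) ∧ ((8*p*q^2 + 16*p*q*r + 4*p*q*s + 10*p*r^2 + 6*p*r*s + p*s^2 + 8*q^3 + 22*q^2*r + 6*q^2*s + 20*q*r^2 + 12*q*r*s + 2*q*s^2 + 5*r^3 + 4*r^2*s + r*s^2)^2 < (8*p^2*q + 8*p^2*r + 2*p^2*s + 16*p*q^2 + 24*p*q*r + 6*p*q*s + 6*p*r^2 + 2*p*r*s + 10*q^3 + 20*q^2*r + 5*q^2*s + 11*q*r^2 + 4*q*r*s + 2*r^3 + r^2*s) * (8*q^3 + 24*q^2*r + 6*q^2*s + 30*q*r^2 + 18*q*r*s + 3*q*s^2 + 14*r^3 + 15*r^2*s + 6*r*s^2 + s^3)) ∧ ((8*p^2*q + 8*p^2*r + 2*p^2*s + 16*p*q^2 + 24*p*q*r + 6*p*q*s + 6*p*r^2 + 2*p*r*s + 10*q^3 + 20*q^2*r + 5*q^2*s + 11*q*r^2 + 4*q*r*s + 2*r^3 + r^2*s) * (8*p*q^2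 + 16*p*q*r + 4*p*q*s + 10*p*r^2 + 6*p*r*s + p*s^2 + 8*q^3 + 22*q^2*r + 6*q^2*s + 20*q*r^2 + 12*q*r*s + 2*q*s^2 + 5*r^3 + 4*r^2*s + r*s^2) < (8*p^3 + 24*p^2*q + 6*p^2*r + 30*p*q^2 + 18*p*q*r + 3*p*r^2 + 14*q^3 + 15*q^2*r + 6*q*r^2 + r^3) * (8*q^3 + 24*q^2*r + 6*q^2*s + 30*q*r^2 + 18*q*r*s + 3*q*s^2 + 14*r^3 + 15*r^2*s + 6*r*s^2 + s^3)) := by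
  have ha : 0 < p - q := by linarith
  have hb : 0 < q - r := by linarith
  have hc : 0 < r - s := by linarith
  have hs1 : 0 < p*r - q^2 := by linarith
  have hs2 : 0 < q*s - r^2 := by linarith
  have hs3 : 0 < p*s - q*r := by linarith
  refine ⟨?_, ?_, ?_, ?_, ?_, ?_, ?_⟩
  · have hpos : (0:ℝ) < 8*(q - r)^3 + 48*(q - r)^2*(r - s) + 54*(q - r)^2*s + 102*(q - r)*(r - s)^2 + 234*(q - r)*(r - s)*s + 135*(q - r)*s^2 + 76*(r - s)^3 + 267*(r - s)^2*s + 315*(r - s)*s^2 + 125*s^3 := by positivity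
    have key : (8*q^3 + 24*q^2*r + 6*q^2*s + 30*q*r^2 + 18*q*r*s + 3*q*s^2 + 14*r^3 + 15*r^2*s + 6*r*s^2 + s^3) - (0) = 8*(q - r)^3 + 48*(q - r)^2*(r - s) + 54*(q - r)^2*s + 102*(q - r)*(r - s)^2 + 234*(q - r)*(r - s)*s + 135*(q - r)*s^2 + 76*(r - s)^3 + 267*(r - s)^2*s + 315*(r - s)*s^2 + 125*s^3 := by ring
    linarith
  · have hpos : (0:ℝ) < 8*(p - q)*(q - r)^2 + 32*(p - q)*(q - r)*(r - s) + 36*(p - q)*(q - r)*s + 34*(p - q)*(r - s)^2 + 78*(p - q)*(r - s)*s + 45*(p - q)*s^2 + 8*(q - r)^3 + 38*(q - r)^2*(r - s) + 42*(q - r)^2*s + 52*(q - r)*(r - s)^2 + 112*(q - r)*(r - s)*s + 60*(q - r)*s^2 + 13*(r - s)^3 + 32*(r - s)^2*s + 20*(r - s)*s^2 := by positivity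
    have key : (8*p*q^2 + 16*p*q*r + 4*p*q*s + 10*p*r^2 + 6*p*r*s + p*s^2 + 8*q^3 + 22*q^2*r + 6*q^2*s + 20*q*r^2 + 12*q*r*s + 2*q*s^2 + 5*r^3 + 4*r^2*s + r*s^2) - ((8*q^3 + 24*q^2*r + 6*q^2*s + 30*q*r^2 + 18*q*r*s + 3*q*s^2 + 14*r^3 + 15*r^2*s + 6*r*s^2 + s^3)) = 8*(p - q)*(q - r)^2 + 32*(p - q)*(q - r)*(r - s) + 36*(p - q)*(q - r)*s + 34*(p - q)*(r - s)^2 + 78*(p - q)*(r - s)*s + 45*(p - q)*s^2 + 8*(q - r)^3 + 38*(q - r)^2*(r - s) + 42*(q - r)^2*s + 52*(q - r)*(r - s)^2 + 112*(q - r)*(r - s)*s + 60*(q - r)*s^2 + 13*(r - s)^3 + 32*(r - s)^2*s + 20*(r - s)*s^2 := by ring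
    linarith
  · have hpos : (0:ℝ) < 8*(p - q)^2*(q - r) + 16*(p - q)^2*(r - s) + 18*(p - q)^2*s + 24*(p - q)*(q - r)^2 + 72*(p - q)*(q - r)*(r - s) + 78*(p - q)*(q - r)*s + 44*(p - q)*(r - s)^2 + 90*(p - q)*(r - s)*s + 45*(p - q)*s^2 + 18*(q - r)^3 + 68*(q - r)^2*(r - s) + 71*(q - r)^2*s + 69*(q - r)*(r - s)^2 + 132*(q - r)*(r - s)*s + 60*(q - r)*s^2 + 16*(r - s)^3 + 36*(r - s)^2*s + 20*(r - s)*s^2 := by positivity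
    have key : (8*p^2*q + 8*p^2*r + 2*p^2*s + 16*p*q^2 + 24*p*q*r + 6*p*q*s + 6*p*r^2 + 2*p*r*s + 10*q^3 + 20*q^2*r + 5*q^2*s + 11*q*r^2 + 4*q*r*s + 2*r^3 + r^2*s) - ((8*p*q^2 + 16*p*q*r + 4*p*q*s + 10*p*r^2 + 6*p*r*s + p*s^2 + 8*q^3 + 22*q^2*r + 6*q^2*s + 20*q*r^2 + 12*q*r*s + 2*q*s^2 + 5*r^3 + 4*r^2*s + r*s^2)) = 8*(p - q)^2*(q - r) + 16*(p - q)^2*(r - s) + 18*(p - q)^2*s + 24*(p - q)*(q - r)^2 + 72*(p - q)*(q - r)*(r - s) + 78*(p - q)*(q - r)*s + 44*(p - q)*(r - s)^2 + 90*(p - q)*(r - s)*s + 45*(p - q)*s^2 + 18*(q - r)^3 + 68*(q - r)^2*(r - s) + 71*(q - r)^2*s + 69*(q - r)*(r - s)^2 + 132*(q - r)*(r - s)*s + 60*(q - r)*s^2 + 16*(r - s)^3 + 36*(r - s)^2*s + 20*(r - s)*s^2 := by ring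
    linarith
  · have hpos : (0:ℝ) < 8*(p - q)^3 + 40*(p - q)^2*(q - r) + 38*(p - q)^2*(r - s) + 36*(p - q)^2*s + 70*(p - q)*(q - r)^2 + 130*(p - q)*(q - r)*(r - s) + 120*(p - q)*(q - r)*s + 57*(p - q)*(r - s)^2 + 102*(p - q)*(r - s)*s + 45*(p - q)*s^2 + 42*(q - r)^3 + 113*(q - r)^2*(r - s) + 100*(q - r)^2*s + 92*(q - r)*(r - s)^2 + 152*(q - r)*(r - s)*s + 60*(q - r)*s^2 + 20*(r - s)^3 + 40*(r - s)^2*s + 20*(r - s)*s^2 := by positivity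
    have key : (8*p^3 + 24*p^2*q + 6*p^2*r + 30*p*q^2 + 18*p*q*r + 3*p*r^2 + 14*q^3 + 15*q^2*r + 6*q*r^2 + r^3) - ((8*p^2*q + 8*p^2*r + 2*p^2*s + 16*p*q^2 + 24*p*q*r + 6*p*q*s + 6*p*r^2 + 2*p*r*s + 10*q^3 + 20*q^2*r + 5*q^2*s + 11*q*r^2 + 4*q*r*s + 2*r^3 + r^2*s)) = 8*(p - q)^3 + 40*(p - q)^2*(q - r) + 38*(p - q)^2*(r - s) + 36*(p - q)^2*s + 70*(p - q)*(q - r)^2 + 130*(p - q)*(q - r)*(r - s) + 120*(p - q)*(q - r)*s + 57*(p - q)*(r - s)^2 + 102*(p - q)*(r - s)*s + 45*(p - q)*s^2 + 42*(q - r)^3 + 113*(q - r)^2*(r - s) + 100*(q - r)^2*s + 92*(q - r)*(r - s)^2 + 152*(q - r)*(r - s)*s + 60*(q - r)*s^2 + 20*(r - s)^3 + 40*(r - s)^2*s + 20*(r - s)*s^2 := by ring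
    linarith
  · have hpos : (0:ℝ) < 225*(p*r - q^2)^2*s^2 + 224*(p*r - q^2)^2*(r - s)*s + 426*(p*r - q^2)^2*(q - r)*s + 216*(p*r - q^2)^2*(q - r)*(r - s) + 60*(p*r - q^2)^2*(q - r)^2 + 184*(p*r - q^2)^2*(p - q)*s + 148*(p*r - q^2)^2*(p - q)*(r - s) + 64*(p*r - q^2)^2*(p - q)*(q - r) + 16*(p*r - q^2)^2*(p - q)^2 + 300*(p*r - q^2)*(q*s - r^2)*s^2 + 415*(p*r - q^2)*(q*s - r^2)*(r - s)*s + 115*(p*r - q^2)*(q*s - r^2)*(r - s)^2 + 781*(p*r - q^2)*(q*s - r^2)*(q - r)*s + 598*(p*r - q^2)*(q*s - r^2)*(q - r)*(r - s) + 334*(p*r - q^2)*(q*s - r^2)*(q - r)^2 + 168*(p*r - q^2)*(q*s - r^2)*(p - q)*s + 148*(p*r - q^2)*(q*s - r^2)*(p - q)*(r - s) + 224*(p*r - q^2)*(q*s - r^2)*(p - q)*(q - r) + 80*(p*r - q^2)*(q*s - r^2)*(p - q)^2 + 6*(p*r - q^2)*(p*s - q*r)*(p - q)*s + 16*(p*r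 - q^2)*(p*s - q*r)*(p - q)^2 + 100*(q*s - r^2)^2*s^2 + 200*(q*s - r^2)^2*(r - s)*s + 100*(q*s - r^2)^2*(r - s)^2 + 340*(q*s - r^2)^2*(q - r)*s + 340*(q*s - r^2)^2*(q - r)*(r - s) + 241*(q*s - r^2)^2*(q - r)^2 + 148*(q*s - r^2)^2*(p - q)*(q - r) + 72*(q*s - r^2)^2*(p - q)^2 + 24*(q*s - r^2)*(p*s - q*r)*(p - q)^2 + 4*(p*s - q*r)^2*(p - q)^2 := by positivity
    have key : ((8*p^3 + 24*p^2*q + 6*p^2*r + 30*p*q^2 + 18*p*q*r + 3*p*r^2 + 14*q^3 + 15*q^2*r + 6*q*r^2 + r^3) * (8*p*q^2 + 16*p*q*r + 4*p*q*s + 10*p*r^2 + 6*p*r*s + p*s^2 + 8*q^3 + 22*q^2*r + 6*q^2*s + 20*q*r^2 + 12*q*r*s + 2*q*s^2 + 5*r^3 + 4*r^2*s + r*s^2)) - ((8*p^2*q + 8*p^2*r + 2*p^2*s + 16*p*q^2 + 24*p*q*r + 6*p*q*s + 6*p*r^2 + 2*p*r*s + 10*q^3 + 20*q^2*r + 5*q^2*s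 + 11*q*r^2 + 4*q*r*s + 2*r^3 + r^2*s)^2) = 225*(p*r - q^2)^2*s^2 + 224*(p*r - q^2)^2*(r - s)*s + 426*(p*r - q^2)^2*(q - r)*s + 216*(p*r - q^2)^2*(q - r)*(r - s) + 60*(p*r - q^2)^2*(q - r)^2 + 184*(p*r - q^2)^2*(p - q)*s + 148*(p*r - q^2)^2*(p - q)*(r - s) + 64*(p*r - q^2)^2*(p - q)*(q - r) + 16*(p*r - q^2)^2*(p - q)^2 + 300*(p*r - q^2)*(q*s - r^2)*s^2 + 415*(p*r - q^2)*(q*s - r^2)*(r - s)*s + 115*(p*r - q^2)*(q*s - r^2)*(r - s)^2 + 781*(p*r - q^2)*(q*s - r^2)*(q - r)*s + 598*(p*r - q^2)*(q*s - r^2)*(q - r)*(r - s) + 334*(p*r - q^2)*(q*s - r^2)*(q - r)^2 + 168*(p*r - q^2)*(q*s - r^2)*(p - q)*s + 148*(p*r - q^2)*(q*s - r^2)*(p - q)*(r - s) + 224*(p*r - q^2)*(q*s - r^2)*(p - q)*(q - r) + 80*(p*r - q^2)*(q*s - r^2)*(p - q)^2 + 6*(p*r - q^2)*(p*s - q*r)*(p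 - q)*s + 16*(p*r - q^2)*(p*s - q*r)*(p - q)^2 + 100*(q*s - r^2)^2*s^2 + 200*(q*s - r^2)^2*(r - s)*s + 100*(q*s - r^2)^2*(r - s)^2 + 340*(q*s - r^2)^2*(q - r)*s + 340*(q*s - r^2)^2*(q - r)*(r - s) + 241*(q*s - r^2)^2*(q - r)^2 + 148*(q*s - r^2)^2*(p - q)*(q - r) + 72*(q*s - r^2)^2*(p - q)^2 + 24*(q*s - r^2)*(p*s - q*r)*(p - q)^2 + 4*(p*s - q*r)^2*(p - q)^2 := by ring
    linarith
  · have hpos : (0:ℝ) < 216*(p*r - q^2)^2*s^2 + 244*(p*r - q^2)^2*(r - s)*s + 56*(p*r - q^2)^2*(r - s)^2 + 156*(p*r - q^2)^2*(q - r)*s + 80*(p*r - q^2)^2*(q - r)*(r - s) + 16*(p*r - q^2)^2*(q - r)^2 + 288*(p*r - q^2)*(q*s - r^2)*s^2 + 400*(p*r - q^2)*(q*s - r^2)*(r - s)*s + 124*(p*r - q^2)*(q*s - r^2)*(r - s)^2 + 330*(p*r - q^2)*(q*s - r^2)*(q - r)*s + 220*(p*r - q^2)*(q*s - r^2)*(q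 - r)*(r - s) + 88*(p*r - q^2)*(q*s - r^2)*(q - r)^2 + 28*(p*r - q^2)*(q*s - r^2)*(p - q)*s + 16*(p*r - q^2)*(q*s - r^2)*(p - q)*(q - r) + 8*(p*r - q^2)*(p*s - q*r)*s^2 + 97*(q*s - r^2)^2*s^2 + 155*(q*s - r^2)^2*(r - s)*s + 59*(q*s - r^2)^2*(r - s)^2 + 155*(q*s - r^2)^2*(q - r)*s + 122*(q*s - r^2)^2*(q - r)*(r - s) + 66*(q*s - r^2)^2*(q - r)^2 + 20*(q*s - r^2)^2*(p - q)*s + 24*(q*s - r^2)^2*(p - q)*(q - r) + 4*(q*s - r^2)^2*(p - q)^2 + 2*(q*s - r^2)*(p*s - q*r)*s^2 + 6*(q*s - r^2)*(p*s - q*r)*(p - q)*s + (p*s - q*r)^2*s^2 := by positivity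
    have key : ((8*p^2*q + 8*p^2*r + 2*p^2*s + 16*p*q^2 + 24*p*q*r + 6*p*q*s + 6*p*r^2 + 2*p*r*s + 10*q^3 + 20*q^2*r + 5*q^2*s + 11*q*r^2 + 4*q*r*s + 2*r^3 + r^2*s) * (8*q^3 + 24*q^2*r + 6*q^2*s + 30*q*r^2 + 18*q*r*s + 3*q*s^2 + 14*r^3 + 15*r^2*s + 6*r*s^2 + s^3)) - ((8*p*q^2 + 16*p*q*r + 4*p*q*s + 10*p*r^2 + 6*p*r*s + p*s^2 + 8*q^3 + 22*q^2*r + 6*q^2*s + 20*q*r^2 + 12*q*r*s + 2*q*s^2 + 5*r^3 + 4*r^2*s + r*s^2)^2) = 216*(p*r - q^2)^2*s^2 + 244*(p*r - q^2)^2*(r - s)*s + 56*(p*r - q^2)^2*(r - s)^2 + 156*(p*r - q^2)^2*(q - r)*s + 80*(p*r - q^2)^2*(q - r)*(r - s) + 16*(p*r - q^2)^2*(q - r)^2 + 288*(p*r - q^2)*(q*s - r^2)*s^2 + 400*(p*r - q^2)*(q*s - r^2)*(r - s)*s + 124*(p*r - q^2)*(q*s - r^2)*(r - s)^2 + 330*(p*r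 - q^2)*(q*s - r^2)*(q - r)*s + 220*(p*r - q^2)*(q*s - r^2)*(q - r)*(r - s) + 88*(p*r - q^2)*(q*s - r^2)*(q - r)^2 + 28*(p*r - q^2)*(q*s - r^2)*(p - q)*s + 16*(p*r - q^2)*(q*s - r^2)*(p - q)*(q - r) + 8*(p*r - q^2)*(p*s - q*r)*s^2 + 97*(q*s - r^2)^2*s^2 + 155*(q*s - r^2)^2*(r - s)*s + 59*(q*s - r^2)^2*(r - s)^2 + 155*(q*s - r^2)^2*(q - r)*s + 122*(q*s - r^2)^2*(q - r)*(r - s) + 66*(q*s - r^2)^2*(q - r)^2 + 20*(q*s - r^2)^2*(p - q)*s + 24*(q*s - r^2)^2*(p - q)*(q - r) + 4*(q*s - r^2)^2*(p - q)^2 + 2*(q*s - r^2)*(p*s - q*r)*s^2 + 6*(q*s - r^2)*(p*s - q*r)*(p - q)*s + (p*s - q*r)^2*s^2 := by ring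
    linarith
  · have hpos : (0:ℝ) < 448*(p*r - q^2)^2*s^2 + 426*(p*r - q^2)^2*(r - s)*s + 616*(p*r - q^2)^2*(q - r)*s + 268*(p*r - q^2)^2*(q - r)*(r - s) + 64*(p*r - q^2)^2*(q - r)^2 + 156*(p*r - q^2)^2*(p - q)*s + 96*(p*r - q^2)^2*(p - q)*(r - s) + 32*(p*r - q^2)^2*(p - q)*(q - r) + 598*(p*r - q^2)*(q*s - r^2)*s^2 + 846*(p*r - q^2)*(q*s - r^2)*(r - s)*s + 252*(p*r - q^2)*(q*s - r^2)*(r - s)^2 + 1118*(p*r - q^2)*(q*s - r^2)*(q - r)*s + 822*(p*r - q^2)*(q*s - r^2)*(q - r)*(r - s) + 440*(p*r - q^2)*(q*s - r^2)*(q - r)^2 + 114*(p*r - q^2)*(q*s - r^2)*(p - q)*s + 28*(p*r - q^2)*(q*s - r^2)*(p - q)*(r - s) + 168*(p*r - q^2)*(q*s - r^2)*(p - q)*(q - r) + 32*(p*r - q^2)*(q*s - r^2)*(p - q)^2 + 2*(p*r - q^2)*(p*s - q*r)*s^2 + 28*(p*r - q^2)*(p*s - q*r)*(p - q)*s + 200*(q*s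 - r^2)^2*s^2 + 355*(q*s - r^2)^2*(r - s)*s + 155*(q*s - r^2)^2*(r - s)^2 + 464*(q*s - r^2)^2*(q - r)*s + 421*(q*s - r^2)^2*(q - r)*(r - s) + 270*(q*s - r^2)^2*(q - r)^2 + 35*(q*s - r^2)^2*(p - q)*s + 138*(q*s - r^2)^2*(p - q)*(q - r) + 48*(q*s - r^2)^2*(p - q)^2 + 20*(q*s - r^2)*(p*s - q*r)*(p - q)*s + 8*(q*s - r^2)*(p*s - q*r)*(p - q)^2 + 6*(p*s - q*r)^2*(p - q)*s := by positivity
    have key : ((8*p^3 + 24*p^2*q + 6*p^2*r + 30*p*q^2 + 18*p*q*r + 3*p*r^2 + 14*q^3 + 15*q^2*r + 6*q*r^2 + r^3) * (8*q^3 + 24*q^2*r + 6*q^2*s + 30*q*r^2 + 18*q*r*s + 3*q*s^2 + 14*r^3 + 15*r^2*s + 6*r*s^2 + s^3)) - ((8*p^2*q + 8*p^2*r + 2*p^2*s + 16*p*q^2 + 24*p*q*r + 6*p*q*s + 6*p*r^2 + 2*p*r*s + 10*q^3 + 20*q^2*r + 5*q^2*s + 11*q*r^2 + 4*q*r*s +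 2*r^3 + r^2*s) * (8*p*q^2 + 16*p*q*r + 4*p*q*s + 10*p*r^2 + 6*p*r*s + p*s^2 + 8*q^3 + 22*q^2*r + 6*q^2*s + 20*q*r^2 + 12*q*r*s + 2*q*s^2 + 5*r^3 + 4*r^2*s + r*s^2)) = 448*(p*r - q^2)^2*s^2 + 426*(p*r - q^2)^2*(r - s)*s + 616*(p*r - q^2)^2*(q - r)*s + 268*(p*r - q^2)^2*(q - r)*(r - s) + 64*(p*r - q^2)^2*(q - r)^2 + 156*(p*r - q^2)^2*(p - q)*s + 96*(p*r - q^2)^2*(p - q)*(r - s) + 32*(p*r - q^2)^2*(p - q)*(q - r) + 598*(p*r - q^2)*(q*s - r^2)*s^2 + 846*(p*r - q^2)*(q*s - r^2)*(r - s)*s + 252*(p*r - q^2)*(q*s - r^2)*(r - s)^2 + 1118*(p*r - q^2)*(q*s - r^2)*(q - r)*s + 822*(p*r - q^2)*(q*s - r^2)*(q - r)*(r - s) + 440*(p*r - q^2)*(q*s - r^2)*(q - r)^2 + 114*(p*r - q^2)*(q*s - r^2)*(p - q)*s + 28*(p*r - q^2)*(q*s - r^2)*(p - q)*(r - s) + 168*(p*r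 - q^2)*(q*s - r^2)*(p - q)*(q - r) + 32*(p*r - q^2)*(q*s - r^2)*(p - q)^2 + 2*(p*r - q^2)*(p*s - q*r)*s^2 + 28*(p*r - q^2)*(p*s - q*r)*(p - q)*s + 200*(q*s - r^2)^2*s^2 + 355*(q*s - r^2)^2*(r - s)*s + 155*(q*s - r^2)^2*(r - s)^2 + 464*(q*s - r^2)^2*(q - r)*s + 421*(q*s - r^2)^2*(q - r)*(r - s) + 270*(q*s - r^2)^2*(q - r)^2 + 35*(q*s - r^2)^2*(p - q)*s + 138*(q*s - r^2)^2*(p - q)*(q - r) + 48*(q*s - r^2)^2*(p - q)^2 + 20*(q*s - r^2)*(p*s - q*r)*(p - q)*s + 8*(q*s - r^2)*(p*s - q*r)*(p - q)^2 + 6*(p*s - q*r)^2*(p - q)*s := by ring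
    linarith

theorem hanoi_x_sandwich
    (x y z w : ℕ → ℝ)
    (hx0 : x 0 = 1) (hy0 : y 0 = 0) (hz0 : z 0 = 1) (hw0 : w 0 = 0)
    (hx : ∀ n : ℕ, x (n + 1) = 8 * (x n)^3 + 24 * (x n)^2 * y n + 6 * (x n)^2 * z n + 30 * x n * (y n)^2 + 18 * x n * y n * z n + 3 * x n * (z n)^2 + 14 * (y n)^3 + 15 * (y n)^2 * z n + 6 * y n * (z n)^2 + (z n)^3)
    (hy : ∀ n : ℕ, y (n + 1) = 8 * (x n)^2 * y n + 8 * (x n)^2 * z n + 2 * (x n)^2 * w n + 16 * x n * (y n)^2 + 24 * x n * y n * z n + 6 * x n * y n * w n + 6 * x n * (z n)^2 + 2 * x n * z n * w n + 10 * (y n)^3 + 20 * (y n)^2 * z n + 5 * (y n)^2 * w n + 11 * y n * (z n)^2 + 4 * y n * z n * w n + 2 * (z n)^3 + (z n)^2 * w n)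
    (hz : ∀ n : ℕ, z (n + 1) = 8 * x n * (y n)^2 + 16 * x n * y n * z n + 4 * x n * y n * w n + 10 * x n * (z n)^2 + 6 * x n * z n * w n + x n * (w n)^2 + 8 * (y n)^3 + 22 * (y n)^2 * z n + 6 * (y n)^2 * w n + 20 * y n * (z n)^2 + 12 * y n * z n * w n + 2 * y n * (w n)^2 + 5 * (z n)^3 + 4 * (z n)^2 * w n + z n * (w n)^2)
    (hw : ∀ n : ℕ, w (n + 1) = 8 * (y n)^3 + 24 * (y n)^2 * z n + 6 * (y n)^2 * w n + 30 * y n * (z n)^2 + 18 * y n * z n * w n + 3 * y n * (w n)^2 + 14 * (z n)^3 + 15 * (z n)^2 * w n + 6 * z n * (w n)^2 + (w n)^3) :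
    ∀ n : ℕ, 3 ≤ n → (x (n - 1) * ((y (n - 1) / x (n - 1))^2 + 2 * (y (n - 1) / x (n - 1)) + 2))^3 < x n ∧ x n < (x (n - 1) * ((z (n - 1) / y (n - 1))^2 + 2 * (z (n - 1) / y (n - 1)) + 2))^3 := by
  have hx1 : x 1 = 18 := by rw [hx 0]; simp only [hx0, hy0, hz0, hw0]; norm_num
  have hy1 : y 1 = 16 := by rw [hy 0]; simp only [hx0, hy0, hz0, hw0]; norm_num
  have hz1 : z 1 = 15 := by rw [hz 0]; simp only [hx0, hy0, hz0, hw0]; norm_num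
  have hw1 : w 1 = 14 := by rw [hw 0]; simp only [hx0, hy0, hz0, hw0]; norm_num
  have hx2 : x 2 = 568301 := by rw [hx 1]; simp only [hx1, hy1, hz1, hw1]; norm_num
  have hy2 : y 2 = 521504 := by rw [hy 1]; simp only [hx1, hy1, hz1, hw1]; norm_num
  have hz2 : z 2 = 478579 := by rw [hz 1]; simp only [hx1, hy1, hz1, hw1]; norm_num
  have hw2 : w 2 = 439204 := by rw [hw 1]; simp only [hx1, hy1, hz1, hw1]; norm_num
  have inv : ∀ m : ℕ, 0 < w (m + 2) ∧ w (m + 2) < z (m + 2) ∧ z (m + 2) < y (m + 2) ∧ y (m + 2) < x (m + 2) ∧ (y (m + 2))^2 < x (m + 2) * z (m + 2) ∧ (z (m + 2))^2 < y (m + 2) * w (m + 2) ∧ y (m + 2) * z (m + 2) < x (m + 2) * w (m + 2) := by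
    intro m
    induction m with
    | zero => rw [hx2, hy2, hz2, hw2]; norm_num
    | succ k ih =>
      obtain ⟨c0, c1, c2, c3, c4, c5, c6⟩ := ih
      have h := hanoi_step_s7 (x (k + 2)) (y (k + 2)) (z (k + 2)) (w (k + 2)) c0 c1 c2 c3 c4 c5 c6
      obtain ⟨d0, d1, d2, d3, d4, d5, d6⟩ := h
      have e : k + 1 + 2 = (k + 2) + 1 := by omega
      rw [e, hx (k + 2), hy (k + 2), hz (k + 2), hw (k + 2)]
      exact ⟨by linarith, by linarith, by linarith, by linarith, by linarith [d4], by linarith [d5], by linarith [d6]⟩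
  intro n hn
  obtain ⟨m, rfl⟩ := Nat.exists_eq_add_of_le hn
  obtain ⟨c0, c1, c2, c3, c4, c5, c6⟩ := inv m
  have hP : 0 < x (m + 2) := by linarith
  have hQ : 0 < y (m + 2) := by linarith
  have hR : 0 < z (m + 2) := by linarith
  have hs1 : 0 < x (m + 2) * z (m + 2) - (y (m + 2))^2 := by linarith
  have e1 : 3 + m - 1 = m + 2 := by omega
  have e2 : 3 + m = (m + 2) + 1 := by omega
  rw [e1, e2, hx (m + 2)]
  constructor
  · have e : x (m + 2) * ((y (m + 2) / x (m + 2))^2 + 2 * (y (m + 2) / x (m + 2)) + 2) = (2 * (x (m + 2))^2 + 2 * (x (m + 2)) * (y (m + 2)) + (y (m + 2))^2) / (x (m + 2)) := by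
      field_simp; ring
    rw [e, div_pow, div_lt_iff₀ (by positivity : (0:ℝ) < (x (m + 2))^3)]
    have key : (8 * (x (m + 2))^3 + 24 * (x (m + 2))^2 * (y (m + 2)) + 6 * (x (m + 2))^2 * (z (m + 2)) + 30 * (x (m + 2)) * (y (m + 2))^2 + 18 * (x (m + 2)) * (y (m + 2)) * (z (m + 2)) + 3 * (x (m + 2)) * (z (m + 2))^2 + 14 * (y (m + 2))^3 + 15 * (y (m + 2))^2 * (z (m + 2)) + 6 * (y (m + 2)) * (z (m + 2))^2 + (z (m + 2))^3) * (x (m + 2))^3 - (2 * (x (m + 2))^2 + 2 * (x (m + 2)) * (y (m + 2)) + (y (m + 2))^2)^3 = (x (m + 2) * z (m + 2) - (y (m + 2))^2) * (6 * (x (m + 2))^4 + 18 * (x (m + 2))^3 * (y (m + 2)) + 3 * (x (m + 2))^3 * (z (m + 2)) + 18 * (x (m + 2))^2 * (y (m + 2))^2 + 6 * (x (m + 2))^2 * (y (m + 2)) * (z (m + 2)) + (x (m + 2))^2 * (z (m + 2))^2 + 6 * (x (m + 2)) * (y (m + 2))^3 + (x (m + 2)) * (y (m + 2))^2 * (z (m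 + 2)) + (y (m + 2))^4) := by ring
    have hpos : 0 < (x (m + 2) * z (m + 2) - (y (m + 2))^2) * (6 * (x (m + 2))^4 + 18 * (x (m + 2))^3 * (y (m + 2)) + 3 * (x (m + 2))^3 * (z (m + 2)) + 18 * (x (m + 2))^2 * (y (m + 2))^2 + 6 * (x (m + 2))^2 * (y (m + 2)) * (z (m + 2)) + (x (m + 2))^2 * (z (m + 2))^2 + 6 * (x (m + 2)) * (y (m + 2))^3 + (x (m + 2)) * (y (m + 2))^2 * (z (m + 2)) + (y (m + 2))^4) := by positivity
    linarith
  · have e : x (m + 2) * ((z (m + 2) / y (m + 2))^2 + 2 * (z (m + 2) / y (m + 2)) + 2) = ((x (m + 2)) * (z (m + 2))^2 + 2 * (x (m + 2)) * (y (m + 2)) * (z (m + 2)) + 2 * (x (m + 2)) * (y (m + 2))^2) / ((y (m + 2))^2) := by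
      field_simp
    rw [e, div_pow, lt_div_iff₀ (by positivity : (0:ℝ) < ((y (m + 2))^2)^3)]
    have key : ((x (m + 2)) * (z (m + 2))^2 + 2 * (x (m + 2)) * (y (m + 2)) * (z (m + 2)) + 2 * (x (m + 2)) * (y (m + 2))^2)^3 - (8 * (x (m + 2))^3 + 24 * (x (m + 2))^2 * (y (m + 2)) + 6 * (x (m + 2))^2 * (z (m + 2)) + 30 * (x (m + 2)) * (y (m + 2))^2 + 18 * (x (m + 2)) * (y (m + 2)) * (z (m + 2)) + 3 * (x (m + 2)) * (z (m + 2))^2 + 14 * (y (m + 2))^3 + 15 * (y (m + 2))^2 * (z (m + 2)) + 6 * (y (m + 2)) * (z (m + 2))^2 + (z (m + 2))^3) * ((y (m + 2))^2)^3 = (x (m + 2) * z (m + 2) - (y (m + 2))^2) * (24 * (x (m + 2))^2 * (y (m + 2))^5 + 36 * (x (m + 2))^2 * (y (m + 2))^4 * (z (m + 2)) + 32 * (x (m + 2))^2 * (y (m + 2))^3 * (z (m + 2))^2 + 18 * (x (m + 2))^2 * (y (m + 2))^2 * (z (m + 2))^3 + 6 * (x (m + 2))^2 * (y (m + 2)) *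 (z (m + 2))^4 + (x (m + 2))^2 * (z (m + 2))^5 + 30 * (x (m + 2)) * (y (m + 2))^6 + 32 * (x (m + 2)) * (y (m + 2))^5 * (z (m + 2)) + 18 * (x (m + 2)) * (y (m + 2))^4 * (z (m + 2))^2 + 6 * (x (m + 2)) * (y (m + 2))^3 * (z (m + 2))^3 + (x (m + 2)) * (y (m + 2))^2 * (z (m + 2))^4 + 14 * (y (m + 2))^7 + 15 * (y (m + 2))^6 * (z (m + 2)) + 6 * (y (m + 2))^5 * (z (m + 2))^2 + (y (m + 2))^4 * (z (m + 2))^3) := by ring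
    have hpos : 0 < (x (m + 2) * z (m + 2) - (y (m + 2))^2) * (24 * (x (m + 2))^2 * (y (m + 2))^5 + 36 * (x (m + 2))^2 * (y (m + 2))^4 * (z (m + 2)) + 32 * (x (m + 2))^2 * (y (m + 2))^3 * (z (m + 2))^2 + 18 * (x (m + 2))^2 * (y (m + 2))^2 * (z (m + 2))^3 + 6 * (x (m + 2))^2 * (y (m + 2)) * (z (m + 2))^4 + (x (m + 2))^2 * (z (m + 2))^5 + 30 * (x (m + 2)) * (y (m + 2))^6 + 32 * (x (m + 2)) * (y (m + 2))^5 * (z (m + 2)) + 18 * (x (m + 2)) * (y (m + 2))^4 * (z (m + 2))^2 + 6 * (x (m + 2)) * (y (m + 2))^3 * (z (m + 2))^3 + (x (m + 2)) * (y (m + 2))^2 * (z (m + 2))^4 + 14 * (y (m + 2))^7 + 15 * (y (m + 2))^6 * (z (m + 2)) + 6 * (y (m + 2))^5 * (z (m + 2))^2 + (y (m + 2))^4 * (z (m + 2))^3) := by positivity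
    linarith
end

section
/- For every integer n ≥ 2, the total number of matchings m_n = x_n + 3y_n + 3z_n + w_n satisfies x_n·(1 + α_n)^3 < m_n < x_n·(1 + γ_n)^3, where α_n = y_n/x_n and γ_n = w_n/z_n. -/
open Filter Topology Real

private lemma hanoi_cert1 (x y z w a b c : ℝ) (hx : 0 < x) (hy : 0 < y) (hz : 0 < z)
    (hw : 0 < w) (ha : 0 < a) (hb : 0 < b) (hc : 0 < c) :
    0 < 1*w^2*a*a + 12*y^2*a*a + 4*x*z*a*a + 32*x*y*a*a + 16*x^2*a*a + 28*y^2*a*b + 12*x*z*a*b + 48*x*y*a*b + 16*x^2*a*b + 2*y*z*a*c + 16*y^2*a*c + 6*x*w*a*c + 8*x*z*a*c + 16*x*y*a*c + 8*y*z*b*b + 22*y^2*b*b + 6*x*z*b*b + 16*x*y*b*b + 4*x^2*b*b + 2*z^2*b*c + 14*y*z*b*c + 20*y^2*b*c + 1*z^2*c*c + 4*y*z*c*c + 2*y^2*c*c + 1*x*z*c*c := by positivity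

private lemma hanoi_cert2 (x y z w a b c : ℝ) (hx : 0 < x) (hy : 0 < y) (hz : 0 < z)
    (hw : 0 < w) (ha : 0 < a) (hb : 0 < b) (hc : 0 < c) :
    0 < 12*z^2*a*a + 4*y*w*a*a + 32*y*z*a*a + 16*y^2*a*a + 28*z^2*a*b + 12*y*w*a*b + 48*y*z*a*b + 16*y^2*a*b + 8*z*w*a*c + 16*z^2*a*c + 8*y*w*a*c + 16*y*z*a*c + 1*w^2*b*b + 8*z*w*b*b + 22*z^2*b*b + 6*y*w*b*b + 16*y*z*b*b + 4*y^2*b*b + 2*w^2*b*c + 12*z*w*b*c + 14*z^2*b*c + 6*y*w*b*c + 1*w^2*c*c + 4*z*w*c*c + 3*z^2*c*c + 1*y*w*c*c := by positivity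

set_option maxHeartbeats 1600000 in
private lemma hanoi_step_s8 (x y z w X Y Z W : ℝ) (hx : 0 < x) (hy : 0 < y) (hz : 0 < z)
    (hw : 0 < w) (h1 : y^2 < x * z) (h3 : z^2 < y * w)
    (hX : X = 8 * x^3 + 24 * x^2 * y + 6 * x^2 * z + 30 * x * y^2 + 18 * x * y * z + 3 * x * z^2 + 14 * y^3 + 15 * y^2 * z + 6 * y * z^2 + z^3)
    (hY : Y = 8 * x^2 * y + 8 * x^2 * z + 2 * x^2 * w + 16 * x * y^2 + 24 * x * y * z + 6 * x * y * w + 6 * x * z^2 + 2 * x * z * w + 10 * y^3 + 20 * y^2 * z + 5 * y^2 * w + 11 * y * z^2 + 4 * y * z * w + 2 * z^3 + z^2 * w)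
    (hZ : Z = 8 * x * y^2 + 16 * x * y * z + 4 * x * y * w + 10 * x * z^2 + 6 * x * z * w + x * w^2 + 8 * y^3 + 22 * y^2 * z + 6 * y^2 * w + 20 * y * z^2 + 12 * y * z * w + 2 * y * w^2 + 5 * z^3 + 4 * z^2 * w + z * w^2)
    (hW : W = 8 * y^3 + 24 * y^2 * z + 6 * y^2 * w + 30 * y * z^2 + 18 * y * z * w + 3 * y * w^2 + 14 * z^3 + 15 * z^2 * w + 6 * z * w^2 + w^3) :
    0 < X ∧ 0 < Y ∧ 0 < Z ∧ 0 < W ∧ Y^2 < X * Z ∧ Z^2 < Y * W := by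
  subst hX hY hZ hW
  have h2 : y * z < x * w := by nlinarith [mul_pos hy hz, mul_pos hx hw, mul_pos hx hz, mul_pos hy hw]
  have ha : 0 < x*z - y^2 := by linarith
  have hb : 0 < x*w - y*z := by linarith
  have hc : 0 < y*w - z^2 := by linarith
  have p1 := hanoi_cert1 x y z w (x*z - y^2) (x*w - y*z) (y*w - z^2) hx hy hz hw ha hb hc
  have p2 := hanoi_cert2 x y z w (x*z - y^2) (x*w - y*z) (y*w - z^2) hx hy hz hw ha hb hc
  have k1 : (8 * x^3 + 24 * x^2 * y + 6 * x^2 * z + 30 * x * y^2 + 18 * x * y * z + 3 * x * z^2 + 14 * y^3 + 15 * y^2 * z + 6 * y * z^2 + z^3) * (8 * x * y^2 + 16 * x * y * z + 4 * x * y * w + 10 * x * z^2 + 6 * x * z * w + x * w^2 + 8 * y^3 + 22 * y^2 * z + 6 * y^2 * w + 20 * y * z^2 + 12 * y * z * w + 2 * y * w^2 + 5 * z^3 + 4 * z^2 * w + z * w^2) - (8 * x^2 * y + 8 * x^2 * z + 2 * x^2 * w + 16 * x * y^2 + 24 * x * y * z + 6 * x * y * w + 6 * x * z^2 + 2 * x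 * z * w + 10 * y^3 + 20 * y^2 * z + 5 * y^2 * w + 11 * y * z^2 + 4 * y * z * w + 2 * z^3 + z^2 * w)^2 = 1*w^2*(x*z - y^2)*(x*z - y^2) + 12*y^2*(x*z - y^2)*(x*z - y^2) + 4*x*z*(x*z - y^2)*(x*z - y^2) + 32*x*y*(x*z - y^2)*(x*z - y^2) + 16*x^2*(x*z - y^2)*(x*z - y^2) + 28*y^2*(x*z - y^2)*(x*w - y*z) + 12*x*z*(x*z - y^2)*(x*w - y*z) + 48*x*y*(x*z - y^2)*(x*w - y*z) + 16*x^2*(x*z - y^2)*(x*w - y*z) + 2*y*z*(x*z - y^2)*(y*w - z^2) + 16*y^2*(x*z - y^2)*(y*w - z^2) + 6*x*w*(x*z - y^2)*(y*w - z^2) + 8*x*z*(x*z - y^2)*(y*w - z^2) + 16*x*y*(x*z - y^2)*(y*w - z^2) + 8*y*z*(x*w - y*z)*(x*w - y*z) + 22*y^2*(x*w - y*z)*(x*w - y*z) + 6*x*z*(x*w - y*z)*(x*w - y*z) + 16*x*y*(x*w - y*z)*(x*w - y*z) + 4*x^2*(x*w - y*z)*(x*w - y*z) + 2*z^2*(x*w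 - y*z)*(y*w - z^2) + 14*y*z*(x*w - y*z)*(y*w - z^2) + 20*y^2*(x*w - y*z)*(y*w - z^2) + 1*z^2*(y*w - z^2)*(y*w - z^2) + 4*y*z*(y*w - z^2)*(y*w - z^2) + 2*y^2*(y*w - z^2)*(y*w - z^2) + 1*x*z*(y*w - z^2)*(y*w - z^2) := by ring
  have k2 : (8 * x^2 * y + 8 * x^2 * z + 2 * x^2 * w + 16 * x * y^2 + 24 * x * y * z + 6 * x * y * w + 6 * x * z^2 + 2 * x * z * w + 10 * y^3 + 20 * y^2 * z + 5 * y^2 * w + 11 * y * z^2 + 4 * y * z * w + 2 * z^3 + z^2 * w) * (8 * y^3 + 24 * y^2 * z + 6 * y^2 * w + 30 * y * z^2 + 18 * y * z * w + 3 * y * w^2 + 14 * z^3 + 15 * z^2 * w + 6 * z * w^2 + w^3) - (8 * x * y^2 + 16 * x * y * z + 4 * x * y * w + 10 * x * z^2 + 6 * x * z * w + x * w^2 + 8 * y^3 + 22 * y^2 * z + 6 * y^2 * w + 20 * y * z^2 + 12 * y * z * w + 2 * y * w^2 + 5 * z^3 + 4 * z^2 * w + z * w^2)^2 = 12*z^2*(x*z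 - y^2)*(x*z - y^2) + 4*y*w*(x*z - y^2)*(x*z - y^2) + 32*y*z*(x*z - y^2)*(x*z - y^2) + 16*y^2*(x*z - y^2)*(x*z - y^2) + 28*z^2*(x*z - y^2)*(x*w - y*z) + 12*y*w*(x*z - y^2)*(x*w - y*z) + 48*y*z*(x*z - y^2)*(x*w - y*z) + 16*y^2*(x*z - y^2)*(x*w - y*z) + 8*z*w*(x*z - y^2)*(y*w - z^2) + 16*z^2*(x*z - y^2)*(y*w - z^2) + 8*y*w*(x*z - y^2)*(y*w - z^2) + 16*y*z*(x*z - y^2)*(y*w - z^2) + 1*w^2*(x*w - y*z)*(x*w - y*z) + 8*z*w*(x*w - y*z)*(x*w - y*z) + 22*z^2*(x*w - y*z)*(x*w - y*z) + 6*y*w*(x*w - y*z)*(x*w - y*z) + 16*y*z*(x*w - y*z)*(x*w - y*z) + 4*y^2*(x*w - y*z)*(x*w - y*z) + 2*w^2*(x*w - y*z)*(y*w - z^2) + 12*z*w*(x*w - y*z)*(y*w - z^2) + 14*z^2*(x*w - y*z)*(y*w - z^2) + 6*y*w*(x*w - y*z)*(y*w - z^2) + 1*w^2*(y*w - z^2)*(y*w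 - z^2) + 4*z*w*(y*w - z^2)*(y*w - z^2) + 3*z^2*(y*w - z^2)*(y*w - z^2) + 1*y*w*(y*w - z^2)*(y*w - z^2) := by ring
  refine ⟨by positivity, by positivity, by positivity, by positivity, by linarith, by linarith⟩

private lemma hanoi_sandwich_step (x y z w : ℝ) (hx : 0 < x) (hy : 0 < y) (hz : 0 < z)
    (hw : 0 < w) (h1 : y^2 < x * z) (h3 : z^2 < y * w) :
    x * (1 + y / x)^3 < x + 3 * y + 3 * z + w ∧
      x + 3 * y + 3 * z + w < x * (1 + w / z)^3 := by
  have h2 : y * z < x * w := by nlinarith [mul_pos hy hz, mul_pos hx hw, mul_pos hx hz, mul_pos hy hw]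
  constructor
  · have e : x * (1 + y / x)^3 = (x + y)^3 / x^2 := by
      field_simp
    rw [e, div_lt_iff₀ (by positivity)]
    have k1 : y^3 < x^2 * w := by
      nlinarith [mul_lt_mul_of_pos_left h1 hy, mul_lt_mul_of_pos_left h2 hx]
    nlinarith [mul_lt_mul_of_pos_left h1 hx, k1]
  · have e : x * (1 + w / z)^3 = x * (z + w)^3 / z^3 := by
      field_simp
    rw [e, lt_div_iff₀ (by positivity)]
    have k2 : z^3 < x * w^2 := by
      nlinarith [mul_lt_mul_of_pos_left h3 hz, mul_lt_mul_of_pos_left h2 hw]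
    nlinarith [mul_lt_mul_of_pos_left h2 (mul_pos hz hz), mul_lt_mul_of_pos_left k2 hz,
      mul_lt_mul_of_pos_left k2 hw]

theorem hanoi_m_sandwich
    (x y z w : ℕ → ℝ)
    (hx0 : x 0 = 1) (hy0 : y 0 = 0) (hz0 : z 0 = 1) (hw0 : w 0 = 0)
    (hx : ∀ n : ℕ, x (n + 1) = 8 * (x n)^3 + 24 * (x n)^2 * y n + 6 * (x n)^2 * z n + 30 * x n * (y n)^2 + 18 * x n * y n * z n + 3 * x n * (z n)^2 + 14 * (y n)^3 + 15 * (y n)^2 * z n + 6 * y n * (z n)^2 + (z n)^3)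
    (hy : ∀ n : ℕ, y (n + 1) = 8 * (x n)^2 * y n + 8 * (x n)^2 * z n + 2 * (x n)^2 * w n + 16 * x n * (y n)^2 + 24 * x n * y n * z n + 6 * x n * y n * w n + 6 * x n * (z n)^2 + 2 * x n * z n * w n + 10 * (y n)^3 + 20 * (y n)^2 * z n + 5 * (y n)^2 * w n + 11 * y n * (z n)^2 + 4 * y n * z n * w n + 2 * (z n)^3 + (z n)^2 * w n)
    (hz : ∀ n : ℕ, z (n + 1) = 8 * x n * (y n)^2 + 16 * x n * y n * z n + 4 * x n * y n * w n + 10 * x n * (z n)^2 + 6 * x n * z n * w n + x n * (w n)^2 + 8 * (y n)^3 + 22 * (y n)^2 * z n + 6 * (y n)^2 * w n + 20 * y n * (z n)^2 + 12 * y n * z n * w n + 2 * y n * (w n)^2 + 5 * (z n)^3 + 4 * (z n)^2 * w n + z n * (w n)^2)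
    (hw : ∀ n : ℕ, w (n + 1) = 8 * (y n)^3 + 24 * (y n)^2 * z n + 6 * (y n)^2 * w n + 30 * y n * (z n)^2 + 18 * y n * z n * w n + 3 * y n * (w n)^2 + 14 * (z n)^3 + 15 * (z n)^2 * w n + 6 * z n * (w n)^2 + (w n)^3) :
    ∀ n : ℕ, 2 ≤ n → x n * (1 + y n / x n)^3 < x n + 3 * y n + 3 * z n + w n ∧ x n + 3 * y n + 3 * z n + w n < x n * (1 + w n / z n)^3 := by
  have hx1 : x 1 = 18 := by rw [hx 0, hx0, hy0, hz0]; norm_num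
  have hy1 : y 1 = 16 := by rw [hy 0, hx0, hy0, hz0, hw0]; norm_num
  have hz1 : z 1 = 15 := by rw [hz 0, hx0, hy0, hz0, hw0]; norm_num
  have hw1 : w 1 = 14 := by rw [hw 0, hy0, hz0, hw0]; norm_num
  have hx2 : x 2 = 568301 := by rw [hx 1, hx1, hy1, hz1]; norm_num
  have hy2 : y 2 = 521504 := by rw [hy 1, hx1, hy1, hz1, hw1]; norm_num
  have hz2 : z 2 = 478579 := by rw [hz 1, hx1, hy1, hz1, hw1]; norm_num
  have hw2 : w 2 = 439204 := by rw [hw 1, hy1, hz1, hw1]; norm_num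
  have inv : ∀ n : ℕ, 2 ≤ n → 0 < x n ∧ 0 < y n ∧ 0 < z n ∧ 0 < w n ∧
      (y n)^2 < x n * z n ∧ (z n)^2 < y n * w n := by
    intro n hn
    induction n, hn using Nat.le_induction with
    | base =>
      rw [hx2, hy2, hz2, hw2]
      norm_num
    | succ n hn ih =>
      obtain ⟨hx', hy', hz', hw', h1, h3⟩ := ih
      exact hanoi_step_s8 (x n) (y n) (z n) (w n) (x (n+1)) (y (n+1)) (z (n+1)) (w (n+1))
        hx' hy' hz' hw' h1 h3 (hx n) (hy n) (hz n) (hw n)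
  intro n hn
  obtain ⟨hx', hy', hz', hw', h1, h3⟩ := inv n hn
  exact hanoi_sandwich_step (x n) (y n) (z n) (w n) hx' hy' hz' hw' h1 h3
end

section
/- The entropy per site for the Tower of Hanoi graphs exists: the sequence (ln m_n)/3^(n+1) converges to a finite limit μ_H as n → ∞, where m_n = x_n + 3y_n + 3z_n + w_n and 3^(n+1) is the number of vertices of H_n. -/
open Filter Topology Real

lemma hanoi_key (a b c d : ℝ) (ha : 0 ≤ a) (hb : 0 ≤ b) (hc : 0 ≤ c) (hd : 0 ≤ d) :
    (a + 3 * b + 3 * c + d)^3 ≤ (8 * a^3 + 24 * a^2 * b + 6 * a^2 * c + 30 * a * b^2 + 18 * a * b * c + 3 * a * c^2 + 14 * b^3 + 15 * b^2 * c + 6 * b * c^2 + c^3) + 3 * (8 * a^2 * b + 8 * a^2 * c + 2 * a^2 * d + 16 * a * b^2 + 24 * a * b * c + 6 * a * b * d + 6 * a * c^2 + 2 * a * c * d + 10 * b^3 + 20 * b^2 * c + 5 * b^2 * d + 11 * b * c^2 + 4 * b * c * d + 2 * c^3 + c^2 * d) + 3 * (8 * a * b^2 + 16 * a * b * c + 4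 * a * b * d + 10 * a * c^2 + 6 * a * c * d + a * d^2 + 8 * b^3 + 22 * b^2 * c + 6 * b^2 * d + 20 * b * c^2 + 12 * b * c * d + 2 * b * d^2 + 5 * c^3 + 4 * c^2 * d + c * d^2) + (8 * b^3 + 24 * b^2 * c + 6 * b^2 * d + 30 * b * c^2 + 18 * b * c * d + 3 * b * d^2 + 14 * c^3 + 15 * c^2 * d + 6 * c * d^2 + d^3) ∧
    (8 * a^3 + 24 * a^2 * b + 6 * a^2 * c + 30 * a * b^2 + 18 * a * b * c + 3 * a * c^2 + 14 * b^3 + 15 * b^2 * c + 6 * b * c^2 + c^3) + 3 * (8 * a^2 * b + 8 * a^2 * c + 2 * a^2 * d + 16 * a * b^2 + 24 * a * b * c + 6 * a * b * d + 6 * a * c^2 + 2 * a * c * d + 10 * b^3 + 20 * b^2 * c + 5 * b^2 * d + 11 * b * c^2 + 4 * b * c * d + 2 * c^3 + c^2 * d) + 3 * (8 * a * b^2 + 16 * a * b * c + 4 * a * b * d + 10 * a * c^2 + 6 * a * c * d + a * d^2 + 8 * b^3 + 22 * b^2 * c + 6 * b^2 * d + 20 * b * c^2 + 12 * b * c * d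 + 2 * b * d^2 + 5 * c^3 + 4 * c^2 * d + c * d^2) + (8 * b^3 + 24 * b^2 * c + 6 * b^2 * d + 30 * b * c^2 + 18 * b * c * d + 3 * b * d^2 + 14 * c^3 + 15 * c^2 * d + 6 * c * d^2 + d^3) ≤ 8 * (a + 3 * b + 3 * c + d)^3 := by
  constructor <;> nlinarith [mul_nonneg (mul_nonneg ha ha) ha, mul_nonneg (mul_nonneg ha ha) hb, mul_nonneg (mul_nonneg ha ha) hc, mul_nonneg (mul_nonneg ha ha) hd, mul_nonneg (mul_nonneg ha hb) hb, mul_nonneg (mul_nonneg ha hb) hc, mul_nonneg (mul_nonneg ha hb) hd, mul_nonneg (mul_nonneg ha hc) hc, mul_nonneg (mul_nonneg ha hc) hd, mul_nonneg (mul_nonneg ha hd) hd, mul_nonneg (mul_nonneg hb hb) hb, mul_nonneg (mul_nonneg hb hb) hc, mul_nonneg (mul_nonneg hb hb) hd, mul_nonneg (mul_nonneg hb hc) hc, mul_nonneg (mul_nonneg hb hc) hd, mul_nonneg (mul_nonneg hb hd) hd, mul_nonneg (mul_nonneg hc hc) hc, mul_nonneg (mul_nonneg hc hc) hd, mul_nonneg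 (mul_nonneg hc hd) hd, mul_nonneg (mul_nonneg hd hd) hd]

lemma hanoi_nonneg (a b c d : ℝ) (ha : 0 ≤ a) (hb : 0 ≤ b) (hc : 0 ≤ c) (hd : 0 ≤ d) :
    0 ≤ 8 * a^3 + 24 * a^2 * b + 6 * a^2 * c + 30 * a * b^2 + 18 * a * b * c + 3 * a * c^2 + 14 * b^3 + 15 * b^2 * c + 6 * b * c^2 + c^3 ∧
    0 ≤ 8 * a^2 * b + 8 * a^2 * c + 2 * a^2 * d + 16 * a * b^2 + 24 * a * b * c + 6 * a * b * d + 6 * a * c^2 + 2 * a * c * d + 10 * b^3 + 20 * b^2 * c + 5 * b^2 * d + 11 * b * c^2 + 4 * b * c * d + 2 * c^3 + c^2 * d ∧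
    0 ≤ 8 * a * b^2 + 16 * a * b * c + 4 * a * b * d + 10 * a * c^2 + 6 * a * c * d + a * d^2 + 8 * b^3 + 22 * b^2 * c + 6 * b^2 * d + 20 * b * c^2 + 12 * b * c * d + 2 * b * d^2 + 5 * c^3 + 4 * c^2 * d + c * d^2 ∧
    0 ≤ 8 * b^3 + 24 * b^2 * c + 6 * b^2 * d + 30 * b * c^2 + 18 * b * c * d + 3 * b * d^2 + 14 * c^3 + 15 * c^2 * d + 6 * c * d^2 + d^3 := by
  refine ⟨?_, ?_, ?_, ?_⟩ <;> nlinarith [mul_nonneg (mul_nonneg ha ha) ha, mul_nonneg (mul_nonneg ha ha) hb, mul_nonneg (mul_nonneg ha ha) hc, mul_nonneg (mul_nonneg ha ha) hd, mul_nonneg (mul_nonneg ha hb) hb, mul_nonneg (mul_nonneg ha hb) hc, mul_nonneg (mul_nonneg ha hb) hd, mul_nonneg (mul_nonneg ha hc) hc, mul_nonneg (mul_nonneg ha hc) hd, mul_nonneg (mul_nonneg ha hd) hd, mul_nonneg (mul_nonneg hb hb) hb, mul_nonneg (mul_nonneg hb hb) hc, mul_nonneg (mul_nonneg hb hb) hd,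 mul_nonneg (mul_nonneg hb hc) hc, mul_nonneg (mul_nonneg hb hc) hd, mul_nonneg (mul_nonneg hb hd) hd, mul_nonneg (mul_nonneg hc hc) hc, mul_nonneg (mul_nonneg hc hc) hd, mul_nonneg (mul_nonneg hc hd) hd, mul_nonneg (mul_nonneg hd hd) hd]

theorem hanoi_entropy_exists
    (x y z w : ℕ → ℝ)
    (hx0 : x 0 = 1) (hy0 : y 0 = 0) (hz0 : z 0 = 1) (hw0 : w 0 = 0)
    (hx : ∀ n : ℕ, x (n + 1) = 8 * (x n)^3 + 24 * (x n)^2 * y n + 6 * (x n)^2 * z n + 30 * x n * (y n)^2 + 18 * x n * y n * z n + 3 * x n * (z n)^2 + 14 * (y n)^3 + 15 * (y n)^2 * z n + 6 * y n * (z n)^2 + (z n)^3)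
    (hy : ∀ n : ℕ, y (n + 1) = 8 * (x n)^2 * y n + 8 * (x n)^2 * z n + 2 * (x n)^2 * w n + 16 * x n * (y n)^2 + 24 * x n * y n * z n + 6 * x n * y n * w n + 6 * x n * (z n)^2 + 2 * x n * z n * w n + 10 * (y n)^3 + 20 * (y n)^2 * z n + 5 * (y n)^2 * w n + 11 * y n * (z n)^2 + 4 * y n * z n * w n + 2 * (z n)^3 + (z n)^2 * w n)
    (hz : ∀ n : ℕ, z (n + 1) = 8 * x n * (y n)^2 + 16 * x n * y n * z n + 4 * x n * y n * w n + 10 * x n * (z n)^2 + 6 * x n * z n * w n + x n * (w n)^2 + 8 * (y n)^3 + 22 * (y n)^2 * z n + 6 * (y n)^2 * w n + 20 * y n * (z n)^2 + 12 * y n * z n * w n + 2 * y n * (w n)^2 + 5 * (z n)^3 + 4 * (z n)^2 * w n + z n * (w n)^2)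
    (hw : ∀ n : ℕ, w (n + 1) = 8 * (y n)^3 + 24 * (y n)^2 * z n + 6 * (y n)^2 * w n + 30 * y n * (z n)^2 + 18 * y n * z n * w n + 3 * y n * (w n)^2 + 14 * (z n)^3 + 15 * (z n)^2 * w n + 6 * z n * (w n)^2 + (w n)^3) :
    ∃ μ : ℝ, Tendsto (fun n => Real.log (x n + 3 * y n + 3 * z n + w n) / 3 ^ (n + 1)) atTop (𝓝 μ) := by
  set m : ℕ → ℝ := fun n => x n + 3 * y n + 3 * z n + w n with hm
  -- nonnegativity of all components
  have hnn : ∀ n, 0 ≤ x n ∧ 0 ≤ y n ∧ 0 ≤ z n ∧ 0 ≤ w n := by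
    intro n
    induction n with
    | zero => simp [hx0, hy0, hz0, hw0]
    | succ k ih =>
      obtain ⟨ha, hb, hc, hd⟩ := ih
      obtain ⟨h1, h2, h3, h4⟩ := hanoi_nonneg (x k) (y k) (z k) (w k) ha hb hc hd
      exact ⟨by rw [hx k]; exact h1, by rw [hy k]; exact h2,
             by rw [hz k]; exact h3, by rw [hw k]; exact h4⟩
  -- key inequalities
  have hkey : ∀ n, (m n)^3 ≤ m (n + 1) ∧ m (n + 1) ≤ 8 * (m n)^3 := by
    intro n
    obtain ⟨ha, hb, hc, hd⟩ := hnn n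
    have := hanoi_key (x n) (y n) (z n) (w n) ha hb hc hd
    simp only [hm]
    rw [hx n, hy n, hz n, hw n]
    exact this
  -- m n ≥ 2
  have hm2 : ∀ n, 2 ≤ m n := by
    intro n
    induction n with
    | zero => simp [hm, hx0, hy0, hz0, hw0]; norm_num
    | succ k ih =>
      have h1 := (hkey k).1
      have h2 : (2:ℝ)^3 ≤ (m k)^3 := pow_le_pow_left₀ (by norm_num) ih 3
      norm_num at h2
      linarith
  have hm1 : ∀ n, (1:ℝ) ≤ m n := fun n => le_trans one_le_two (hm2 n)
  have hmpos : ∀ n, (0:ℝ) < m n := fun n => lt_of_lt_of_le one_pos (hm1 n)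
  -- log bounds
  have hlog : ∀ n, 3 * Real.log (m n) ≤ Real.log (m (n + 1)) ∧
      Real.log (m (n + 1)) ≤ Real.log 8 + 3 * Real.log (m n) := by
    intro n
    constructor
    · have := Real.log_le_log (pow_pos (hmpos n) 3) (hkey n).1
      rwa [Real.log_pow, Nat.cast_ofNat] at this
    · have := Real.log_le_log (hmpos (n + 1)) (hkey n).2
      rwa [Real.log_mul (by norm_num) (pow_pos (hmpos n) 3).ne', Real.log_pow,
        Nat.cast_ofNat] at this
  set a : ℕ → ℝ := fun n => Real.log (m n) / 3 ^ (n + 1) with hadef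
  set d : ℕ → ℝ := fun n => a (n + 1) - a n with hddef
  have hstep : ∀ n, d n = (Real.log (m (n + 1)) - 3 * Real.log (m n)) / 3 ^ (n + 2) := by
    intro n
    simp only [hddef, hadef]
    field_simp
    ring
  have hd_nonneg : ∀ n, 0 ≤ d n := by
    intro n
    rw [hstep n]
    have := (hlog n).1
    apply div_nonneg (by linarith) (by positivity)
  have hd_le : ∀ n, d n ≤ Real.log 8 * (1 / 3) ^ n := by
    intro n
    have h2 := (hlog n).2
    rw [hstep n, div_le_iff₀ (by positivity)]
    have : Real.log 8 * (1 / 3) ^ n * 3 ^ (n + 2) = 9 * Real.log 8 := by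
      rw [one_div, inv_pow, mul_assoc, ← div_eq_inv_mul, pow_add]
      field_simp
      ring
    rw [this]
    have h8 : 0 ≤ Real.log 8 := Real.log_nonneg (by norm_num)
    linarith
  have hsum : Summable d := by
    apply Summable.of_nonneg_of_le hd_nonneg hd_le
    exact (summable_geometric_of_lt_one (by norm_num) (by norm_num)).mul_left _
  have hpartial : ∀ n, a n = a 0 + ∑ k ∈ Finset.range n, d k := by
    intro n
    induction n with
    | zero => simp
    | succ k ih =>
      rw [Finset.sum_range_succ, ← add_assoc, ← ih]
      simp [hddef]
  refine ⟨a 0 + ∑' k, d k, ?_⟩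
  have h1 : Tendsto (fun n => a 0 + ∑ k ∈ Finset.range n, d k) atTop
      (𝓝 (a 0 + ∑' k, d k)) :=
    tendsto_const_nhds.add hsum.hasSum.tendsto_sum_nat
  exact Tendsto.congr (fun n => (hpartial n).symm) h1
end

section
/- For every integer n ≥ 1, the ratios satisfy 1/2 < y_n/x_n < z_n/y_n < w_n/z_n < 1; that is, 1/2 < α_n < β_n < γ_n < 1. -/
open Filter Topology Real

set_option maxHeartbeats 4000000 in
private lemma sier_step (x y z w X Y Z W : ℝ)
    (hx : 0 < x) (hA : x < 2 * y) (hB : y^2 < x * z) (hC : z^2 < y * w) (hD : w < z)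
    (hX : X = 32 * x^3 + 96 * x^2 * y + 24 * x^2 * z + 108 * x * y^2 + 60 * x * y * z + 9 * x * z^2 + 44 * y^3 + 39 * y^2 * z + 12 * y * z^2 + z^3)
    (hY : Y = 32 * x^2 * y + 32 * x^2 * z + 8 * x^2 * w + 64 * x * y^2 + 88 * x * y * z + 20 * x * y * w + 20 * x * z^2 + 6 * x * z * w + 36 * y^3 + 64 * y^2 * z + 13 * y^2 * w + 29 * y * z^2 + 8 * y * z * w + 4 * z^3 + z^2 * w)
    (hZ : Z = 32 * x * y^2 + 64 * x * y * z + 16 * x * y * w + 36 * x * z^2 + 20 * x * z * w + 3 * x * w^2 + 32 * y^3 + 80 * y^2 * z + 20 * y^2 * w + 64 * y * z^2 + 32 * y * z * w + 4 * y * w^2 + 13 * z^3 + 8 * z^2 * w + z * w^2)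
    (hW : W = 32 * y^3 + 96 * y^2 * z + 24 * y^2 * w + 108 * y * z^2 + 60 * y * z * w + 9 * y * w^2 + 44 * z^3 + 39 * z^2 * w + 12 * z * w^2 + w^3) :
    0 < X ∧ X < 2 * Y ∧ Y^2 < X * Z ∧ Z^2 < Y * W ∧ W < Z := by
  have hy : 0 < y := by linarith
  have hz : 0 < z := by nlinarith
  have hw : 0 < w := by nlinarith
  have pE : (0:ℝ) < y - z := by nlinarith
  have pF : (0:ℝ) < x - y := by nlinarith
  have pA : (0:ℝ) < 2 * y - x := by linarith
  have pA2 : (0:ℝ) < 2 * z - y := by nlinarith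
  have pA3 : (0:ℝ) < 2 * w - z := by nlinarith
  have pB : (0:ℝ) < x * z - y^2 := by linarith
  have pC : (0:ℝ) < y * w - z^2 := by linarith
  have pD : (0:ℝ) < z - w := by linarith
  have pH : (0:ℝ) < x * w - y * z := by nlinarith [mul_pos hy hz, mul_pos hx hw]
  subst hX hY hZ hW
  refine ⟨by positivity, ?_, ?_, ?_, ?_⟩
  · linarith [(mul_pos (mul_pos pA3 pD) pD), (mul_pos (mul_pos pA3 pA3) pF), (mul_pos (mul_pos pA3 pA3) pD), (mul_pos (mul_pos pA3 pA3) pA3), (mul_pos (mul_pos pA2 pE) pE), (mul_pos (mul_pos pA2 pD) pE), (mul_pos (mul_pos pA2 pD) pD), (mul_pos (mul_pos pA2 pA3) pE), (mul_pos (mul_pos pA2 pA3) pD), (mul_pos (mul_pos pA2 pA3) pA3), (mul_pos (mul_pos pA pF) pF), (mul_pos (mul_pos pA pE) pF), (mul_pos (mul_pos pA pE) pE), (mul_pos (mul_pos pA pD) pF), (mul_pos (mul_pos pA pD) pE), (mul_pos (mul_pos pA pD) pD), (mul_pos pA pC), (mul_pos (mul_pos pA pA3) pF), (mul_pos (mul_pos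 pA pA3) pE)]
  · linarith [(mul_pos (mul_pos (mul_pos pH pH) pF) pF), (mul_pos (mul_pos (mul_pos pH pH) pE) pF), (mul_pos (mul_pos (mul_pos pH pH) pD) pF), (mul_pos (mul_pos (mul_pos pH pH) pD) pE), (mul_pos (mul_pos (mul_pos pH pH) pD) pD), (mul_pos (mul_pos pH pH) pH), (mul_pos (mul_pos (mul_pos pC pH) pD) pE), (mul_pos (mul_pos pC pH) pH), (mul_pos (mul_pos (mul_pos pC pC) pD) pE), (mul_pos (mul_pos (mul_pos pB pH) pF) pF), (mul_pos (mul_pos (mul_pos pB pH) pE) pF), (mul_pos (mul_pos (mul_pos pB pH) pE) pE), (mul_pos (mul_pos (mul_pos pB pH) pD) pF), (mul_pos (mul_pos (mul_pos pB pH) pD) pE), (mul_pos (mul_pos (mul_pos pB pH) pD) pD), (mul_pos (mul_pos (mul_pos pB pC) pE) pE), (mul_pos (mul_pos (mul_pos pB pC) pD) pE), (mul_pos (mul_pos (mul_pos pB pC) pD) pD), (mul_pos (mul_pos pB pC) pH), (mul_pos (mul_pos (mul_pos pB pB) pF) pF), (mul_pos (mul_pos (mul_pos pB pB) pE) pF),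 (mul_pos (mul_pos (mul_pos pB pB) pE) pE), (mul_pos (mul_pos (mul_pos pB pB) pD) pF), (mul_pos (mul_pos (mul_pos pB pB) pD) pE), (mul_pos (mul_pos (mul_pos pB pB) pD) pD), (mul_pos (mul_pos pB pB) pH), (mul_pos (mul_pos (mul_pos pA3 pH) pH) pD), (mul_pos (mul_pos (mul_pos pA3 pC) pH) pE), (mul_pos (mul_pos (mul_pos pA3 pC) pC) pE), (mul_pos (mul_pos (mul_pos pA3 pC) pC) pD), (mul_pos (mul_pos (mul_pos pA3 pB) pH) pD), (mul_pos (mul_pos (mul_pos pA3 pB) pB) pE), (mul_pos (mul_pos (mul_pos pA3 pB) pB) pD), (mul_pos (mul_pos (mul_pos pA3 pA3) pC) pC), (mul_pos (mul_pos (mul_pos pA3 pA3) pB) pH), (mul_pos (mul_pos (mul_pos pA3 pA3) pB) pB)]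
  · linarith [(mul_pos (mul_pos (mul_pos pC pH) pE) pE), (mul_pos (mul_pos pC pH) pH), (mul_pos (mul_pos (mul_pos pC pC) pF) pF), (mul_pos (mul_pos (mul_pos pC pC) pE) pF), (mul_pos (mul_pos (mul_pos pC pC) pD) pF), (mul_pos (mul_pos (mul_pos pC pC) pD) pE), (mul_pos (mul_pos (mul_pos pC pC) pD) pD), (mul_pos (mul_pos pC pC) pH), (mul_pos (mul_pos pC pC) pC), (mul_pos (mul_pos (mul_pos pB pH) pE) pE), (mul_pos (mul_pos (mul_pos pB pH) pD) pD), (mul_pos (mul_pos (mul_pos pB pC) pE) pE), (mul_pos (mul_pos pB pC) pC), (mul_pos (mul_pos (mul_pos pB pB) pE) pE), (mul_pos (mul_pos (mul_pos pB pB) pD) pE), (mul_pos (mul_pos (mul_pos pB pB) pD) pD), (mul_pos (mul_pos (mul_pos pA3 pH) pH) pD), (mul_pos (mul_pos (mul_pos pA3 pC) pH) pE), (mul_pos (mul_pos (mul_pos pA3 pC) pH) pD), (mul_pos (mul_pos (mul_pos pA3 pC) pC) pD), (mul_pos (mul_pos (mul_pos pA3 pB) pH) pE), (mul_pos (mul_pos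 (mul_pos pA3 pB) pH) pD), (mul_pos (mul_pos (mul_pos pA3 pB) pB) pE), (mul_pos (mul_pos (mul_pos pA3 pB) pB) pD), (mul_pos (mul_pos (mul_pos pA3 pA3) pC) pC), (mul_pos (mul_pos (mul_pos pA3 pA3) pB) pH), (mul_pos (mul_pos (mul_pos pA3 pA3) pB) pB)]
  · linarith [(mul_pos (mul_pos pE pE) pF), (mul_pos (mul_pos pE pE) pE), (mul_pos (mul_pos pD pE) pE), (mul_pos (mul_pos pD pD) pF), (mul_pos (mul_pos pD pD) pE), (mul_pos (mul_pos pD pD) pD), (mul_pos pB pE), (mul_pos (mul_pos pA3 pE) pF), (mul_pos (mul_pos pA3 pE) pE), (mul_pos (mul_pos pA3 pD) pF), (mul_pos (mul_pos pA3 pD) pE), (mul_pos (mul_pos pA3 pD) pD), (mul_pos (mul_pos pA3 pA3) pF), (mul_pos (mul_pos pA3 pA3) pE), (mul_pos (mul_pos pA3 pA3) pD)]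

theorem sier_ratio_bounds
    (x y z w : ℕ → ℝ)
    (hx0 : x 0 = 1) (hy0 : y 0 = 0) (hz0 : z 0 = 1) (hw0 : w 0 = 0)
    (hx : ∀ n : ℕ, x (n + 1) = 32 * (x n)^3 + 96 * (x n)^2 * y n + 24 * (x n)^2 * z n + 108 * x n * (y n)^2 + 60 * x n * y n * z n + 9 * x n * (z n)^2 + 44 * (y n)^3 + 39 * (y n)^2 * z n + 12 * y n * (z n)^2 + (z n)^3)
    (hy : ∀ n : ℕ, y (n + 1) = 32 * (x n)^2 * y n + 32 * (x n)^2 * z n + 8 * (x n)^2 * w n + 64 * x n * (y n)^2 + 88 * x n * y n * z n + 20 * x n * y n * w n + 20 * x n * (z n)^2 + 6 * x n * z n * w n + 36 * (y n)^3 + 64 * (y n)^2 * z n + 13 * (y n)^2 * w n + 29 * y n * (z n)^2 + 8 * y n * z n * w n + 4 * (z n)^3 + (z n)^2 * w n)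
    (hz : ∀ n : ℕ, z (n + 1) = 32 * x n * (y n)^2 + 64 * x n * y n * z n + 16 * x n * y n * w n + 36 * x n * (z n)^2 + 20 * x n * z n * w n + 3 * x n * (w n)^2 + 32 * (y n)^3 + 80 * (y n)^2 * z n + 20 * (y n)^2 * w n + 64 * y n * (z n)^2 + 32 * y n * z n * w n + 4 * y n * (w n)^2 + 13 * (z n)^3 + 8 * (z n)^2 * w n + z n * (w n)^2)
    (hw : ∀ n : ℕ, w (n + 1) = 32 * (y n)^3 + 96 * (y n)^2 * z n + 24 * (y n)^2 * w n + 108 * y n * (z n)^2 + 60 * y n * z n * w n + 9 * y n * (w n)^2 + 44 * (z n)^3 + 39 * (z n)^2 * w n + 12 * z n * (w n)^2 + (w n)^3) :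
    ∀ n : ℕ, 1 ≤ n → 1 / 2 < y n / x n ∧ y n / x n < z n / y n ∧ z n / y n < w n / z n ∧ w n / z n < 1 := by
  have key : ∀ n, 1 ≤ n → 0 < x n ∧ x n < 2 * y n ∧ (y n)^2 < x n * z n ∧
      (z n)^2 < y n * w n ∧ w n < z n := by
    intro n hn
    induction n with
    | zero => omega
    | succ m ih =>
      rcases eq_or_lt_of_le hn with h | h
      · have hm : m = 0 := by omega
        subst hm
        rw [hx 0, hy 0, hz 0, hw 0, hx0, hy0, hz0, hw0]
        norm_num
      · have hm : 1 ≤ m := by omega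
        obtain ⟨p1, p2, p3, p4, p5⟩ := ih hm
        exact sier_step (x m) (y m) (z m) (w m) _ _ _ _ p1 p2 p3 p4 p5
          (hx m) (hy m) (hz m) (hw m)
  intro n hn
  obtain ⟨p1, p2, p3, p4, p5⟩ := key n hn
  have hy' : 0 < y n := by linarith
  have hz' : 0 < z n := by nlinarith
  refine ⟨?_, ?_, ?_, ?_⟩
  · rw [lt_div_iff₀ p1]; linarith
  · rw [div_lt_div_iff₀ p1 hy']; nlinarith
  · rw [div_lt_div_iff₀ hy' hz']; nlinarith
  · rw [div_lt_one hz']; exact p5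
end

section
/- The sequence (α_n) = (y_n/x_n) is strictly increasing and the sequence (γ_n) = (w_n/z_n) is strictly decreasing for n ≥ 1: for every integer n ≥ 1, y_n/x_n < y_{n+1}/x_{n+1} and w_{n+1}/z_{n+1} < w_n/z_n. -/
set_option maxHeartbeats 1000000

open Filter Topology Real

noncomputable def sierFX (x y z w : ℝ) : ℝ := 32*x^3 + 96*x^2*y + 24*x^2*z + 108*x*y^2 + 60*x*y*z + 9*x*z^2 + 44*y^3 + 39*y^2*z + 12*y*z^2 + z^3
noncomputable def sierFY (x y z w : ℝ) : ℝ := 32*x^2*y + 32*x^2*z + 8*x^2*w + 64*x*y^2 + 88*x*y*z + 20*x*y*w + 20*x*z^2 + 6*x*z*w + 36*y^3 + 64*y^2*z + 13*y^2*w + 29*y*z^2 + 8*y*z*w + 4*z^3 + z^2*w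
noncomputable def sierFZ (x y z w : ℝ) : ℝ := 32*x*y^2 + 64*x*y*z + 16*x*y*w + 36*x*z^2 + 20*x*z*w + 3*x*w^2 + 32*y^3 + 80*y^2*z + 20*y^2*w + 64*y*z^2 + 32*y*z*w + 4*y*w^2 + 13*z^3 + 8*z^2*w + z*w^2
noncomputable def sierFW (x y z w : ℝ) : ℝ := 32*y^3 + 96*y^2*z + 24*y^2*w + 108*y*z^2 + 60*y*z*w + 9*y*w^2 + 44*z^3 + 39*z^2*w + 12*z*w^2 + w^3

def sierGood (x y z w : ℝ) : Prop := 0 < w ∧ w < z ∧ z < y ∧ y < x ∧ y*z < x*w ∧ y^2 < x*z ∧ z^2 < y*w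

lemma sierCert1 (a b c d s1 s2 s3 : ℝ) (ha : 0 < a) (hb : 0 < b) (hc : 0 < c) (hd : 0 < d) (hs1 : 0 < s1) (hs2 : 0 < s2) (hs3 : 0 < s3) :
    0 < 64*a*b*s1^2 + 8*a*d*s1^2 + 320*b^2*s1^2 + 784*b*c*s1^2 + 796*b*d*s1^2 + 551*c^2*s1^2 + 1079*c*d*s1^2 + 528*d^2*s1^2 + 256*a*b*s1*s2 + 1088*a*c*s1*s2 + 1280*a*d*s1*s2 + 64*b^2*s1*s2 + 1312*b*c*s1*s2 + 1504*b*d*s1*s2 + 1360*c^2*s1*s2 + 2845*c*d*s1*s2 + 1518*d^2*s1*s2 + 5*b*c*s1*s3 + 27*b*d*s1*s3 + 256*a*b*s2^2 + 512*a*c*s2^2 + 512*b^2*s2^2 + 2016*b*c*s2^2 + 1424*b*d*s2^2 + 1424*c^2*s2^2 + 2104*c*d*s2^2 + 672*d^2*s2^2 + 8*c^2*s2*s3 + 24*c*d*s2*s3 + 30*d^2*s2*s3 + 8*b*c*s3^2 + 14*b*d*s3^2 := by positivity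

lemma sierCert2 (a b c d s1 s2 s3 : ℝ) (ha : 0 < a) (hb : 0 < b) (hc : 0 < c) (hd : 0 < d) (hs1 : 0 < s1) (hs2 : 0 < s2) (hs3 : 0 < s3) :
    0 < 32*a^2*s1^2 + 160*a*b*s1^2 + 396*b^2*s1^2 + 680*b*c*s1^2 + 680*b*d*s1^2 + 264*c^2*s1^2 + 528*c*d*s1^2 + 264*d^2*s1^2 + 128*a^2*s1*s2 + 576*a*b*s1*s2 + 1120*a*c*s1*s2 + 1288*a*d*s1*s2 + 176*b^2*s1*s2 + 784*b*c*s1*s2 + 908*b*d*s1*s2 + 620*c^2*s1*s2 + 1376*c*d*s1*s2 + 756*d^2*s1*s2 + 15*b*c*s1*s3 + 15*b*d*s1*s3 + 128*a^2*s2^2 + 512*a*b*s2^2 + 512*a*c*s2^2 + 496*b^2*s2^2 + 1424*b*c*s2^2 + 856*b*d*s2^2 + 908*c^2*s2^2 + 1240*c*d*s2^2 + 339*d^2*s2^2 + 7*c^2*s2*s3 + 25*c*d*s2*s3 + 18*d^2*s2*s3 + 3*b*c*s3^2 + 3*b*d*s3^2 := by positivity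

lemma sierCert3 (a b c d s1 s2 s3 : ℝ) (ha : 0 < a) (hb : 0 < b) (hc : 0 < c) (hd : 0 < d) (hs1 : 0 < s1) (hs2 : 0 < s2) (hs3 : 0 < s3) :
    0 < 32*b^2*s1^2 + 160*b*c*s1^2 + 168*b*d*s1^2 + 228*c^2*s1^2 + 468*c*d*s1^2 + 239*d^2*s1^2 + 128*b^2*s1*s2 + 576*b*c*s1*s2 + 608*b*d*s1*s2 + 688*c^2*s1*s2 + 1408*c*d*s1*s2 + 724*d^2*s1*s2 + 44*c^2*s1*s3 + 73*c*d*s1*s3 + 25*d^2*s1*s3 + 128*b^2*s2^2 + 512*b*c*s2^2 + 512*b*d*s2^2 + 496*c^2*s2^2 + 912*c*d*s2^2 + 396*d^2*s2^2 + 56*c^2*s2*s3 + 120*c*d*s2*s3 + 75*d^2*s2*s3 + 4*b*d*s3^2 + 7*c^2*s3^2 + 10*c*d*s3^2 := by positivity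

lemma sierCert4 (a b c d : ℝ) (ha : 0 < a) (hb : 0 < b) (hc : 0 < c) (hd : 0 < d) :
    0 < 32*a^3 + 160*a^2*b + 152*a^2*c + 144*a^2*d + 268*a*b^2 + 492*a*b*c + 456*a*b*d + 213*a*c^2 + 384*a*c*d + 171*a*d^2 + 148*b^3 + 383*b^2*c + 342*b^2*d + 294*b*c^2 + 492*b*c*d + 198*b*d^2 + 56*c^3 + 112*c^2*d + 56*c*d^2 := by positivity

lemma sierCert5 (a b c d : ℝ) (ha : 0 < a) (hb : 0 < b) (hc : 0 < c) (hd : 0 < d) :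
    0 < 32*a^2*b + 64*a^2*c + 72*a^2*d + 96*a*b^2 + 280*a*b*c + 300*a*b*d + 168*a*c^2 + 342*a*c*d + 171*a*d^2 + 68*b^3 + 244*b^2*c + 249*b^2*d + 233*b*c^2 + 438*b*c*d + 198*b*d^2 + 48*c^3 + 104*c^2*d + 56*c*d^2 := by positivity

lemma sierCert6 (a b c d : ℝ) (ha : 0 < a) (hb : 0 < b) (hc : 0 < c) (hd : 0 < d) :
    0 < 32*a*b^2 + 128*a*b*c + 144*a*b*d + 132*a*c^2 + 300*a*c*d + 171*a*d^2 + 32*b^3 + 144*b^2*c + 156*b^2*d + 184*b*c^2 + 384*b*c*d + 198*b*d^2 + 41*c^3 + 96*c^2*d + 56*c*d^2 := by positivity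

lemma sierCert7 (b c d : ℝ) (hb : 0 < b) (hc : 0 < c) (hd : 0 < d) :
    0 < 32*b^3 + 192*b^2*c + 216*b^2*d + 396*b*c^2 + 900*b*c*d + 513*b*d^2 + 280*c^3 + 963*c^2*d + 1107*c*d^2 + 425*d^3 := by positivity

lemma sierCertD1 (x y z s1 s2 : ℝ) (hx : 0 < x) (hy : 0 < y) (hz : 0 < z) (hs1 : 0 < s1) (hs2 : 0 < s2) :
    0 < 8*x^2*s1 + 20*x*y*s1 + 6*x*z*s1 + 13*y^2*s1 + 8*y*z*s1 + 1*z^2*s1 + 32*x^2*s2 + 72*x*y*s2 + 20*x*z*s2 + 44*y^2*s2 + 26*y*z*s2 + 4*z^2*s2 := by positivity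

lemma sierCertD2 (y z w s1 s3 : ℝ) (hy : 0 < y) (hz : 0 < z) (hw : 0 < w) (hs1 : 0 < s1) (hs3 : 0 < s3) :
    0 < 32*y^2*s1 + 64*y*z*s1 + 16*y*w*s1 + 36*z^2*s1 + 20*z*w*s1 + 3*w^2*s1 + 32*y^2*s3 + 72*y*z*s3 + 20*y*w*s3 + 44*z^2*s3 + 26*z*w*s3 + 4*w^2*s3 := by positivity

lemma sierStep (x y z w : ℝ) (h : sierGood x y z w) :
    sierGood (sierFX x y z w) (sierFY x y z w) (sierFZ x y z w) (sierFW x y z w) := by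
  obtain ⟨hw, hzw, hyz, hxy, hs1, hs2, hs3⟩ := h
  refine ⟨?_, ?_, ?_, ?_, ?_, ?_, ?_⟩
  · have pos := sierCert7 (y - z) (z - w) w (by linarith) (by linarith) hw
    unfold sierFW
    linarith [pos]
  · have pos := sierCert6 (x - y) (y - z) (z - w) w (by linarith) (by linarith) (by linarith) hw
    unfold sierFZ sierFW
    linarith [pos]
  · have pos := sierCert5 (x - y) (y - z) (z - w) w (by linarith) (by linarith) (by linarith) hw
    unfold sierFY sierFZ
    linarith [pos]
  · have pos := sierCert4 (x - y) (y - z) (z - w) w (by linarith) (by linarith) (by linarith) hw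
    unfold sierFX sierFY
    linarith [pos]
  · have pos := sierCert1 (x - y) (y - z) (z - w) w (x*w - y*z) (x*z - y^2) (y*w - z^2) (by linarith) (by linarith) (by linarith) hw (by linarith) (by linarith) (by linarith)
    unfold sierFX sierFY sierFZ sierFW
    linarith [pos]
  · have pos := sierCert2 (x - y) (y - z) (z - w) w (x*w - y*z) (x*z - y^2) (y*w - z^2) (by linarith) (by linarith) (by linarith) hw (by linarith) (by linarith) (by linarith)
    unfold sierFX sierFY sierFZ
    linarith [pos]
  · have pos := sierCert3 (x - y) (y - z) (z - w) w (x*w - y*z) (x*z - y^2) (y*w - z^2) (by linarith) (by linarith) (by linarith) hw (by linarith) (by linarith) (by linarith)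
    unfold sierFY sierFZ sierFW
    linarith [pos]

theorem sier_alpha_mono_gamma_anti
    (x y z w : ℕ → ℝ)
    (hx0 : x 0 = 1) (hy0 : y 0 = 0) (hz0 : z 0 = 1) (hw0 : w 0 = 0)
    (hx : ∀ n : ℕ, x (n + 1) = 32 * (x n)^3 + 96 * (x n)^2 * y n + 24 * (x n)^2 * z n + 108 * x n * (y n)^2 + 60 * x n * y n * z n + 9 * x n * (z n)^2 + 44 * (y n)^3 + 39 * (y n)^2 * z n + 12 * y n * (z n)^2 + (z n)^3)
    (hy : ∀ n : ℕ, y (n + 1) = 32 * (x n)^2 * y n + 32 * (x n)^2 * z n + 8 * (x n)^2 * w n + 64 * x n * (y n)^2 + 88 * x n * y n * z n + 20 * x n * y n * w n + 20 * x n * (z n)^2 + 6 * x n * z n * w n + 36 * (y n)^3 + 64 * (y n)^2 * z n + 13 * (y n)^2 * w n + 29 * y n * (z n)^2 + 8 * y n * z n * w n + 4 * (z n)^3 + (z n)^2 * w n)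
    (hz : ∀ n : ℕ, z (n + 1) = 32 * x n * (y n)^2 + 64 * x n * y n * z n + 16 * x n * y n * w n + 36 * x n * (z n)^2 + 20 * x n * z n * w n + 3 * x n * (w n)^2 + 32 * (y n)^3 + 80 * (y n)^2 * z n + 20 * (y n)^2 * w n + 64 * y n * (z n)^2 + 32 * y n * z n * w n + 4 * y n * (w n)^2 + 13 * (z n)^3 + 8 * (z n)^2 * w n + z n * (w n)^2)
    (hw : ∀ n : ℕ, w (n + 1) = 32 * (y n)^3 + 96 * (y n)^2 * z n + 24 * (y n)^2 * w n + 108 * y n * (z n)^2 + 60 * y n * z n * w n + 9 * y n * (w n)^2 + 44 * (z n)^3 + 39 * (z n)^2 * w n + 12 * z n * (w n)^2 + (w n)^3) :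
    ∀ n : ℕ, 1 ≤ n → y n / x n < y (n + 1) / x (n + 1) ∧ w (n + 1) / z (n + 1) < w n / z n := by
  have hx1 : x 1 = 66 := by have h := hx 0; simp only [hx0, hy0, hz0, hw0] at h; norm_num at h; exact h
  have hy1 : y 1 = 56 := by have h := hy 0; simp only [hx0, hy0, hz0, hw0] at h; norm_num at h; exact h
  have hz1 : z 1 = 49 := by have h := hz 0; simp only [hx0, hy0, hz0, hw0] at h; norm_num at h; exact h
  have hw1 : w 1 = 44 := by have h := hw 0; simp only [hx0, hy0, hz0, hw0] at h; norm_num at h; exact h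
  have exX : ∀ k : ℕ, x (k+1) = sierFX (x k) (y k) (z k) (w k) := by
    intro k; rw [hx k]; unfold sierFX; ring
  have exY : ∀ k : ℕ, y (k+1) = sierFY (x k) (y k) (z k) (w k) := by
    intro k; rw [hy k]; unfold sierFY; ring
  have exZ : ∀ k : ℕ, z (k+1) = sierFZ (x k) (y k) (z k) (w k) := by
    intro k; rw [hz k]; unfold sierFZ; ring
  have exW : ∀ k : ℕ, w (k+1) = sierFW (x k) (y k) (z k) (w k) := by
    intro k; rw [hw k]; unfold sierFW; ring
  have good : ∀ n : ℕ, 1 ≤ n → sierGood (x n) (y n) (z n) (w n) := by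
    intro n hn
    induction n with
    | zero => omega
    | succ k ih =>
      rcases Nat.lt_or_ge 1 (k+1) with h | h
      · have hk : 1 ≤ k := by omega
        have g := sierStep _ _ _ _ (ih hk)
        rw [exX k, exY k, exZ k, exW k]
        exact g
      · have hk0 : k = 0 := by omega
        subst hk0
        rw [hx1, hy1, hz1, hw1]
        refine ⟨by norm_num, by norm_num, by norm_num, by norm_num, by norm_num, by norm_num, by norm_num⟩
  intro n hn
  obtain ⟨hw', hzw, hyz, hxy, hs1, hs2, hs3⟩ := good n hn
  obtain ⟨hw2, hzw2, hyz2, hxy2, hs12, hs22, hs32⟩ := good (n+1) (by omega)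
  have hxpos : 0 < x n := by linarith
  have hzpos : 0 < z n := by linarith
  have hxpos2 : 0 < x (n+1) := by linarith
  have hzpos2 : 0 < z (n+1) := by linarith
  constructor
  · rw [div_lt_div_iff₀ hxpos hxpos2]
    have pos := sierCertD1 (x n) (y n) (z n) (x n * w n - y n * z n) (x n * z n - (y n)^2)
      hxpos (by linarith) hzpos (by linarith) (by linarith)
    rw [hx n, hy n]
    linarith [pos]
  · rw [div_lt_div_iff₀ hzpos2 hzpos]
    have pos := sierCertD2 (y n) (z n) (w n) (x n * w n - y n * z n) (y n * w n - (z n)^2)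
      (by linarith) hzpos hw' (by linarith) (by linarith)
    rw [hz n, hw n]
    linarith [pos]
end
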